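/- arXiv:1705.01736 — 7 statements merged into one kernel-verified Lean document; each statement's English description precedes it below -/
import Mathlib

section
/- Consider a finite voting instance on the real line in general position, where the candidate distribution equals the voter distribution: a finitely supported probability distribution p on ℝ such that p has a unique median m (p of the points strictly left of m and p of the points strictly right of m are each strictly less than 1/2), no voter location is equidistant from two distinct support points, and every election has a strict majority winner. Then the expected distortion Social(p,p) = ∑_{x,y in supp(p)} p(x)·p(y)·cost(W(x,y))/cost(opt(x,y)) is at most 4 − 2√2. -/
open Finset

/-- Social cost of a candidate at `x` on the real line:
average distance to the voters, who have mass `q j` at each `j ∈ s`. -/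
noncomputable def lcost (s : Finset ℝ) (q : ℝ → ℝ) (x : ℝ) : ℝ :=
  ∑ j ∈ s, q j * |x - j|

/-- Total voter mass strictly preferring candidate `x` over candidate `y`. -/
noncomputable def lvotes (s : Finset ℝ) (q : ℝ → ℝ) (x y : ℝ) : ℝ :=
  ∑ j ∈ s.filter (fun j => |x - j| < |y - j|), q j

/-- The majority winner of the election between candidates `x` and `y`. -/
noncomputable def lwin (s : Finset ℝ) (q : ℝ → ℝ) (x y : ℝ) : ℝ :=
  if 1/2 < lvotes s q x y then x else y

/-- The socially better of the two candidates `x`, `y`. -/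
noncomputable def lopt (s : Finset ℝ) (q : ℝ → ℝ) (x y : ℝ) : ℝ :=
  if lcost s q x < lcost s q y then x else y

/-- Pairwise distortion of the election between `x` and `y`. -/
noncomputable def lr (s : Finset ℝ) (q : ℝ → ℝ) (x y : ℝ) : ℝ :=
  lcost s q (lwin s q x y) / lcost s q (lopt s q x y)

/-- Expected distortion: two candidates drawn i.i.d. from `p`, voters distributed as `q`. -/
noncomputable def lsocial (s : Finset ℝ) (p q : ℝ → ℝ) : ℝ :=
  ∑ x ∈ s, ∑ y ∈ s, p x * p y * lr s q x y

/-- `m` is a median of the voter distribution `q` on support `s`. -/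
def IsMedian (s : Finset ℝ) (q : ℝ → ℝ) (m : ℝ) : Prop :=
  m ∈ s ∧ (∑ j ∈ s.filter (fun j => j < m), q j) < 1/2
        ∧ (∑ j ∈ s.filter (fun j => m < j), q j) < 1/2

/-- No voter location is equidistant from two distinct support points. -/
def NoVoterTies (s : Finset ℝ) : Prop :=
  ∀ j ∈ s, ∀ x ∈ s, ∀ y ∈ s, x ≠ y → |x - j| ≠ |y - j|

/-- Every election has a strict majority winner. -/
def StrictMajority (s : Finset ℝ) (q : ℝ → ℝ) : Prop :=
  ∀ x ∈ s, ∀ y ∈ s, x ≠ y → lvotes s q x y ≠ 1/2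

open MeasureTheory intervalIntegral

section helpers


lemma scalar_key (x y P Q : ℝ) (hx0 : 0 ≤ x) (hx2 : x ≤ 1/2) (hy0 : 0 ≤ y) (hy2 : y ≤ 1/2)
    (hP : 0 ≤ P) (hQ : 0 ≤ Q) (hPQ : P + Q = x * y) :
    (1 - 2*x) * P + (1 - 2*y) * Q ≤ (3 - 2*Real.sqrt 2)/2 * (x + y) := by
  have hs : Real.sqrt 2 ^ 2 = 2 := Real.sq_sqrt (by norm_num)
  have hs1 : 1 < Real.sqrt 2 := by nlinarith [Real.sqrt_nonneg 2]
  have hs2 : Real.sqrt 2 < 3/2 := by nlinarith [Real.sqrt_nonneg 2]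
  set s2 := Real.sqrt 2
  -- reduce to min form: wlog x ≤ y
  rcases le_total x y with hxy | hxy
  · have h1 : (1 - 2*x) * P + (1 - 2*y) * Q ≤ (1 - 2*x) * (x*y) := by nlinarith
    rcases le_or_gt (x*(1-2*x)) ((3 - 2*s2)/2) with hc | hc
    · nlinarith
    · nlinarith [sq_nonneg (2*x - s2 + 1)]
  · have h1 : (1 - 2*x) * P + (1 - 2*y) * Q ≤ (1 - 2*y) * (x*y) := by nlinarith
    rcases le_or_gt (y*(1-2*y)) ((3 - 2*s2)/2) with hc | hc
    · nlinarith
    · nlinarith [sq_nonneg (2*y - s2 + 1)]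



noncomputable def estep (z t : ℝ) : ℝ := if t ≤ z then 1 else 0

lemma estep_nonneg (z t : ℝ) : 0 ≤ estep z t := by unfold estep; split <;> norm_num

lemma estep_le_one (z t : ℝ) : estep z t ≤ 1 := by unfold estep; split <;> norm_num

lemma estep_mul (z w t : ℝ) : estep z t * estep w t = estep (min z w) t := by
  unfold estep
  rcases le_total z w with h | h
  · rw [min_eq_left h]; split_ifs <;> simp only [mul_one, mul_zero, one_mul, zero_mul] <;> linarith
  · rw [min_eq_right h]; split_ifs <;> simp only [mul_one, mul_zero, one_mul, zero_mul] <;> linarith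

lemma estep_eq_indicator (z : ℝ) : estep z = Set.indicator (Set.Iic z) (fun _ => (1:ℝ)) := by
  funext t; simp [estep, Set.indicator, Set.mem_Iic]

lemma estep_ii (z T : ℝ) : IntervalIntegrable (estep z) volume 0 T := by
  rw [estep_eq_indicator, intervalIntegrable_iff]
  exact (integrableOn_const measure_Ioc_lt_top.ne).indicator measurableSet_Iic

lemma estep_integral (z T : ℝ) (h0 : 0 ≤ z) (hT : z ≤ T) :
    ∫ t in (0:ℝ)..T, estep z t = z := by
  rw [integral_of_le (le_trans h0 hT), estep_eq_indicator,
    MeasureTheory.integral_indicator measurableSet_Iic]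
  have : Set.Iic z ∩ Set.Ioc (0:ℝ) T = Set.Ioc 0 z := by
    ext t; simp only [Set.mem_inter_iff, Set.mem_Iic, Set.mem_Ioc]
    constructor
    · rintro ⟨h1, h2, h3⟩; exact ⟨h2, h1⟩
    · rintro ⟨h1, h2⟩; exact ⟨h2, h1, le_trans h2 hT⟩
  rw [Measure.restrict_restrict measurableSet_Iic, this]
  simp [Real.volume_Ioc, ENNReal.toReal_ofReal h0, h0]

lemma sum_estep_ii {ι : Type*} (u : Finset ι) (F Z : ι → ℝ) (T : ℝ) :
    IntervalIntegrable (fun t => ∑ i ∈ u, F i * estep (Z i) t) volume 0 T := by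
  have := IntervalIntegrable.sum (f := fun i t => F i * estep (Z i) t) (μ := volume) (a := 0) (b := T) u (fun i _ => (estep_ii (Z i) T).const_mul (F i))
  rw [Finset.sum_fn] at this
  exact this

lemma sum_estep_integral {ι : Type*} (u : Finset ι) (F Z : ι → ℝ) (T : ℝ)
    (h : ∀ i ∈ u, 0 ≤ Z i ∧ Z i ≤ T) :
    ∫ t in (0:ℝ)..T, (∑ i ∈ u, F i * estep (Z i) t) = ∑ i ∈ u, F i * Z i := by
  rw [intervalIntegral.integral_finset_sum (fun i _ => (estep_ii (Z i) T).const_mul (F i))]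
  exact Finset.sum_congr rfl fun i hi => by
    rw [intervalIntegral.integral_const_mul, estep_integral _ _ (h i hi).1 (h i hi).2]




lemma abs_left (m j a : ℝ) (ha : 0 ≤ a) :
    |m - a - j| - |m - j| = a - 2 * min (max (m - j) 0) a := by
  rcases le_total j (m - a) with h | h
  · rw [abs_of_nonneg (by linarith), abs_of_nonneg (by linarith),
      max_eq_left (by linarith), min_eq_right (by linarith)]
    ring
  · rcases le_total j m with h2 | h2
    · rw [abs_of_nonpos (by linarith), abs_of_nonneg (by linarith),
        max_eq_left (by linarith), min_eq_left (by linarith)]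
      ring
    · rw [abs_of_nonpos (by linarith), abs_of_nonpos (by linarith),
        max_eq_right (by linarith), min_eq_left ha]
      ring

lemma abs_right (m j b : ℝ) (hb : 0 ≤ b) :
    |m + b - j| - |m - j| = b - 2 * min (max (j - m) 0) b := by
  have := abs_left (-m) (-j) b hb
  rw [show -m - b - -j = -(m + b - j) by ring, show -m - -j = -(m - j) by ring,
    abs_neg, abs_neg, show -(m - j) = j - m by ring] at this
  exact this

lemma lcost_left (s : Finset ℝ) (p : ℝ → ℝ) (m x : ℝ) (hsum : ∑ x ∈ s, p x = 1)
    (hx : x ≤ m) :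
    lcost s p x = lcost s p m + ((m - x) - 2 * ∑ j ∈ s.filter (· < m), p j * min (m - j) (m - x)) := by
  have ha : (0:ℝ) ≤ m - x := by linarith
  have h1 : ∀ j, |x - j| = |m - j| + ((m - x) - 2 * min (max (m - j) 0) (m - x)) := by
    intro j
    have := abs_left m j (m - x) ha
    rw [show m - (m - x) - j = x - j by ring] at this
    linarith
  unfold lcost
  have h2 : ∑ j ∈ s, p j * |x - j|
      = ∑ j ∈ s, (p j * |m - j| + ((m - x) * p j - 2 * (p j * min (max (m - j) 0) (m - x)))) := by
    refine Finset.sum_congr rfl fun j _ => ?_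
    rw [h1 j]; ring
  rw [h2, Finset.sum_add_distrib, Finset.sum_sub_distrib, ← Finset.mul_sum, ← Finset.mul_sum, hsum]
  have h3 : ∑ j ∈ s.filter (· < m), p j * min (m - j) (m - x)
      = ∑ j ∈ s, p j * min (max (m - j) 0) (m - x) := by
    rw [Finset.sum_filter]
    refine Finset.sum_congr rfl fun j _ => ?_
    split_ifs with h
    · rw [max_eq_left (by linarith)]
    · rw [max_eq_right (by push_neg at h; linarith), min_eq_left ha, mul_zero]
  rw [h3]; ring

lemma lcost_right (s : Finset ℝ) (p : ℝ → ℝ) (m y : ℝ) (hsum : ∑ x ∈ s, p x = 1)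
    (hy : m ≤ y) :
    lcost s p y = lcost s p m + ((y - m) - 2 * ∑ j ∈ s.filter (fun j => m < j), p j * min (j - m) (y - m)) := by
  have hb : (0:ℝ) ≤ y - m := by linarith
  have h1 : ∀ j, |y - j| = |m - j| + ((y - m) - 2 * min (max (j - m) 0) (y - m)) := by
    intro j
    have := abs_right m j (y - m) hb
    rw [show m + (y - m) - j = y - j by ring] at this
    linarith
  unfold lcost
  have h2 : ∑ j ∈ s, p j * |y - j|
      = ∑ j ∈ s, (p j * |m - j| + ((y - m) * p j - 2 * (p j * min (max (j - m) 0) (y - m)))) := by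
    refine Finset.sum_congr rfl fun j _ => ?_
    rw [h1 j]; ring
  rw [h2, Finset.sum_add_distrib, Finset.sum_sub_distrib, ← Finset.mul_sum, ← Finset.mul_sum, hsum]
  have h3 : ∑ j ∈ s.filter (fun j => m < j), p j * min (j - m) (y - m)
      = ∑ j ∈ s, p j * min (max (j - m) 0) (y - m) := by
    rw [Finset.sum_filter]
    refine Finset.sum_congr rfl fun j _ => ?_
    split_ifs with h
    · rw [max_eq_left (by linarith)]
    · rw [max_eq_right (by push_neg at h; linarith), min_eq_left hb, mul_zero]
  rw [h3]; ring

lemma cum_le_left (s : Finset ℝ) (p : ℝ → ℝ) (m a : ℝ) (hp : ∀ x ∈ s, 0 ≤ p x) (ha : 0 ≤ a) :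
    ∑ j ∈ s.filter (· < m), p j * min (m - j) a ≤ (∑ j ∈ s.filter (· < m), p j) * a := by
  rw [Finset.sum_mul]
  refine Finset.sum_le_sum fun j hj => ?_
  exact mul_le_mul_of_nonneg_left (min_le_right _ _) (hp j (Finset.mem_filter.1 hj).1)

lemma cum_le_right (s : Finset ℝ) (p : ℝ → ℝ) (m b : ℝ) (hp : ∀ x ∈ s, 0 ≤ p x) (hb : 0 ≤ b) :
    ∑ j ∈ s.filter (fun j => m < j), p j * min (j - m) b ≤ (∑ j ∈ s.filter (fun j => m < j), p j) * b := by
  rw [Finset.sum_mul]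
  refine Finset.sum_le_sum fun j hj => ?_
  exact mul_le_mul_of_nonneg_left (min_le_right _ _) (hp j (Finset.mem_filter.1 hj).1)

lemma cum_nonneg_left (s : Finset ℝ) (p : ℝ → ℝ) (m a : ℝ) (hp : ∀ x ∈ s, 0 ≤ p x) (ha : 0 ≤ a) :
    0 ≤ ∑ j ∈ s.filter (· < m), p j * min (m - j) a := by
  refine Finset.sum_nonneg fun j hj => ?_
  have hj' := Finset.mem_filter.1 hj
  exact mul_nonneg (hp j hj'.1) (le_min (by linarith [hj'.2]) ha)

lemma cum_nonneg_right (s : Finset ℝ) (p : ℝ → ℝ) (m b : ℝ) (hp : ∀ x ∈ s, 0 ≤ p x) (hb : 0 ≤ b) :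
    0 ≤ ∑ j ∈ s.filter (fun j => m < j), p j * min (j - m) b := by
  refine Finset.sum_nonneg fun j hj => ?_
  have hj' := Finset.mem_filter.1 hj
  exact mul_nonneg (hp j hj'.1) (le_min (by linarith [hj'.2]) hb)

lemma lcost_ge (s : Finset ℝ) (p : ℝ → ℝ) (m z : ℝ) (hsum : ∑ x ∈ s, p x = 1)
    (hp : ∀ x ∈ s, 0 ≤ p x)
    (hα : (∑ j ∈ s.filter (fun j => j < m), p j) ≤ 1/2)
    (hβ : (∑ j ∈ s.filter (fun j => m < j), p j) ≤ 1/2) :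
    lcost s p m ≤ lcost s p z := by
  rcases le_total z m with hz | hz
  · rw [lcost_left s p m z hsum hz]
    have h1 := cum_le_left s p m (m - z) hp (by linarith)
    have h2 : (∑ j ∈ s.filter (· < m), p j) * (m - z) ≤ 1/2 * (m - z) :=
      mul_le_mul_of_nonneg_right hα (by linarith)
    linarith
  · rw [lcost_right s p m z hsum hz]
    have h1 := cum_le_right s p m (z - m) hp (by linarith)
    have h2 : (∑ j ∈ s.filter (fun j => m < j), p j) * (z - m) ≤ 1/2 * (z - m) :=
      mul_le_mul_of_nonneg_right hβ (by linarith)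
    linarith

lemma lcost_mono_right (s : Finset ℝ) (p : ℝ → ℝ) (m x y : ℝ) (hsum : ∑ x ∈ s, p x = 1)
    (hp : ∀ x ∈ s, 0 ≤ p x)
    (hβ : (∑ j ∈ s.filter (fun j => m < j), p j) ≤ 1/2)
    (hmx : m ≤ x) (hxy : x ≤ y) :
    lcost s p x ≤ lcost s p y := by
  rw [lcost_right s p m x hsum hmx, lcost_right s p m y hsum (le_trans hmx hxy)]
  have key : ∑ j ∈ s.filter (fun j => m < j), p j * min (j - m) (y - m)
      - ∑ j ∈ s.filter (fun j => m < j), p j * min (j - m) (x - m)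
      ≤ (∑ j ∈ s.filter (fun j => m < j), p j) * (y - x) := by
    rw [← Finset.sum_sub_distrib, Finset.sum_mul]
    refine Finset.sum_le_sum fun j hj => ?_
    have hpj := hp j (Finset.mem_filter.1 hj).1
    have : min (j - m) (y - m) - min (j - m) (x - m) ≤ y - x := by
      rcases le_total (j - m) (x - m) with h | h
      · rw [min_eq_left h, min_eq_left (by linarith)]; linarith
      · rw [min_eq_right h]
        rcases le_total (j - m) (y - m) with h2 | h2
        · rw [min_eq_left h2]; linarith
        · rw [min_eq_right h2]; linarith
    nlinarith
  have h2 : (∑ j ∈ s.filter (fun j => m < j), p j) * (y - x) ≤ 1/2 * (y - x) :=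
    mul_le_mul_of_nonneg_right hβ (by linarith)
  linarith

lemma lcost_mono_left (s : Finset ℝ) (p : ℝ → ℝ) (m x y : ℝ) (hsum : ∑ x ∈ s, p x = 1)
    (hp : ∀ x ∈ s, 0 ≤ p x)
    (hα : (∑ j ∈ s.filter (fun j => j < m), p j) ≤ 1/2)
    (hyx : y ≤ x) (hxm : x ≤ m) :
    lcost s p x ≤ lcost s p y := by
  rw [lcost_left s p m x hsum hxm, lcost_left s p m y hsum (le_trans hyx hxm)]
  have key : ∑ j ∈ s.filter (· < m), p j * min (m - j) (m - y)
      - ∑ j ∈ s.filter (· < m), p j * min (m - j) (m - x)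
      ≤ (∑ j ∈ s.filter (· < m), p j) * (x - y) := by
    rw [← Finset.sum_sub_distrib, Finset.sum_mul]
    refine Finset.sum_le_sum fun j hj => ?_
    have hpj := hp j (Finset.mem_filter.1 hj).1
    have : min (m - j) (m - y) - min (m - j) (m - x) ≤ x - y := by
      rcases le_total (m - j) (m - x) with h | h
      · rw [min_eq_left h, min_eq_left (by linarith)]; linarith
      · rw [min_eq_right h]
        rcases le_total (m - j) (m - y) with h2 | h2
        · rw [min_eq_left h2]; linarith
        · rw [min_eq_right h2]; linarith
    nlinarith
  have h2 : (∑ j ∈ s.filter (· < m), p j) * (x - y) ≤ 1/2 * (x - y) :=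
    mul_le_mul_of_nonneg_right hα (by linarith)
  linarith

lemma votes_compl (s : Finset ℝ) (p : ℝ → ℝ) (x y : ℝ) (hsum : ∑ x ∈ s, p x = 1)
    (hp : ∀ x ∈ s, 0 ≤ p x) :
    lvotes s p x y + lvotes s p y x ≤ 1 := by
  unfold lvotes
  have hdisj : Disjoint (s.filter (fun j => |x - j| < |y - j|))
      (s.filter (fun j => |y - j| < |x - j|)) := by
    rw [Finset.disjoint_left]
    intro j h1 h2
    have a1 := (Finset.mem_filter.1 h1).2
    have a2 := (Finset.mem_filter.1 h2).2
    linarith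
  rw [← Finset.sum_union hdisj, ← hsum]
  refine Finset.sum_le_sum_of_subset_of_nonneg ?_ (fun j hj _ => hp j hj)
  intro j hj
  rcases Finset.mem_union.1 hj with h | h
  · exact (Finset.mem_filter.1 h).1
  · exact (Finset.mem_filter.1 h).1

lemma votes_closer (s : Finset ℝ) (p : ℝ → ℝ) (m x y : ℝ) (hsum : ∑ x ∈ s, p x = 1)
    (hp : ∀ x ∈ s, 0 ≤ p x)
    (hα : (∑ j ∈ s.filter (fun j => j < m), p j) < 1/2)
    (hβ : (∑ j ∈ s.filter (fun j => m < j), p j) < 1/2)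
    (hxy : |x - m| < |y - m|) :
    1/2 < lvotes s p x y := by
  have hkey : (x - m) * (x - m) < (y - m) * (y - m) := by
    have := mul_self_lt_mul_self (abs_nonneg (x - m)) hxy
    rwa [abs_mul_abs_self, abs_mul_abs_self] at this
  have hne : x ≠ y := fun h => by rw [h] at hxy; exact lt_irrefl _ hxy
  rcases lt_or_gt_of_ne hne with hlt | hlt
  · -- x < y, so 2m < x + y, voters j ≤ m prefer x
    have hm2 : 2 * m < x + y := by nlinarith
    have hsub : s.filter (fun j => j ≤ m) ⊆ s.filter (fun j => |x - j| < |y - j|) := by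
      intro j hj
      have hj' := Finset.mem_filter.1 hj
      refine Finset.mem_filter.2 ⟨hj'.1, ?_⟩
      have hjm : j ≤ m := hj'.2
      have : |x - j| < y - j := abs_lt.2 ⟨by linarith, by linarith⟩
      exact lt_of_lt_of_le this (le_abs_self _)
    have hmass : 1/2 < ∑ j ∈ s.filter (fun j => j ≤ m), p j := by
      have hsplit := Finset.sum_filter_add_sum_filter_not s (fun j => j ≤ m) p
      have hco : s.filter (fun j => ¬ j ≤ m) = s.filter (fun j => m < j) := by
        refine Finset.filter_congr fun j _ => ?_
        simp [not_le]
      rw [hco, hsum] at hsplit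
      linarith
    calc 1/2 < ∑ j ∈ s.filter (fun j => j ≤ m), p j := hmass
    _ ≤ lvotes s p x y := Finset.sum_le_sum_of_subset_of_nonneg hsub
        (fun j hj _ => hp j (Finset.mem_filter.1 hj).1)
  · -- y < x, so x + y < 2m, voters j ≥ m prefer x
    have hm2 : x + y < 2 * m := by nlinarith
    have hsub : s.filter (fun j => m ≤ j) ⊆ s.filter (fun j => |x - j| < |y - j|) := by
      intro j hj
      have hj' := Finset.mem_filter.1 hj
      refine Finset.mem_filter.2 ⟨hj'.1, ?_⟩
      have hjm : m ≤ j := hj'.2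
      have : |x - j| < j - y := abs_lt.2 ⟨by linarith, by linarith⟩
      have h2 : j - y ≤ |y - j| := by rw [abs_sub_comm]; exact le_abs_self _
      linarith
    have hmass : 1/2 < ∑ j ∈ s.filter (fun j => m ≤ j), p j := by
      have hsplit := Finset.sum_filter_add_sum_filter_not s (fun j => m ≤ j) p
      have hco : s.filter (fun j => ¬ m ≤ j) = s.filter (fun j => j < m) := by
        refine Finset.filter_congr fun j _ => ?_
        simp [not_le]
      rw [hco, hsum] at hsplit
      linarith
    calc 1/2 < ∑ j ∈ s.filter (fun j => m ≤ j), p j := hmass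
    _ ≤ lvotes s p x y := Finset.sum_le_sum_of_subset_of_nonneg hsub
        (fun j hj _ => hp j (Finset.mem_filter.1 hj).1)

lemma lwin_eq_closer (s : Finset ℝ) (p : ℝ → ℝ) (m x y : ℝ) (hsum : ∑ x ∈ s, p x = 1)
    (hp : ∀ x ∈ s, 0 ≤ p x)
    (hα : (∑ j ∈ s.filter (fun j => j < m), p j) < 1/2)
    (hβ : (∑ j ∈ s.filter (fun j => m < j), p j) < 1/2)
    (hxy : |x - m| < |y - m|) :
    lwin s p x y = x ∧ lwin s p y x = x := by
  have h1 := votes_closer s p m x y hsum hp hα hβ hxy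
  constructor
  · exact if_pos h1
  · have h2 := votes_compl s p x y hsum hp
    have : ¬ (1/2 < lvotes s p y x) := by
      push_neg
      linarith
    exact if_neg this

lemma lcost_nonneg (s : Finset ℝ) (p : ℝ → ℝ) (x : ℝ) (hp : ∀ x ∈ s, 0 ≤ p x) :
    0 ≤ lcost s p x :=
  Finset.sum_nonneg fun j hj => mul_nonneg (hp j hj) (abs_nonneg _)

lemma lr_refl (s : Finset ℝ) (p : ℝ → ℝ) (x : ℝ) (hcpos : 0 < lcost s p x) :
    lr s p x x = 1 := by
  have hv : lvotes s p x x = 0 := by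
    unfold lvotes
    rw [Finset.filter_false_of_mem (fun j _ => lt_irrefl _), Finset.sum_empty]
  unfold lr lwin lopt
  rw [hv, if_neg (by norm_num), if_neg (lt_irrefl _)]
  exact div_self hcpos.ne'

lemma lr_one_win_x (s : Finset ℝ) (p : ℝ → ℝ) (x y : ℝ) (hwin : lwin s p x y = x)
    (hle : lcost s p x ≤ lcost s p y) (hpos : 0 < lcost s p x) :
    lr s p x y = 1 := by
  unfold lr lopt
  rw [hwin]
  split_ifs with h
  · exact div_self hpos.ne'
  · rw [le_antisymm (not_lt.1 h) hle]
    exact div_self hpos.ne'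

lemma lr_one_win_y (s : Finset ℝ) (p : ℝ → ℝ) (x y : ℝ) (hwin : lwin s p x y = y)
    (hle : lcost s p y ≤ lcost s p x) (hpos : 0 < lcost s p y) :
    lr s p x y = 1 := by
  unfold lr lopt
  rw [hwin]
  split_ifs with h
  · exact absurd hle (not_le.2 h)
  · exact div_self hpos.ne'

lemma lr_le_div (s : Finset ℝ) (p : ℝ → ℝ) (m x y w : ℝ) (hsum : ∑ x ∈ s, p x = 1)
    (hp : ∀ x ∈ s, 0 ≤ p x)
    (hα : (∑ j ∈ s.filter (fun j => j < m), p j) ≤ 1/2)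
    (hβ : (∑ j ∈ s.filter (fun j => m < j), p j) ≤ 1/2)
    (hwin : lwin s p x y = w) (hcm : 0 < lcost s p m) :
    lr s p x y ≤ lcost s p w / lcost s p m := by
  unfold lr
  rw [hwin]
  have h1 : 0 ≤ lcost s p w := lcost_nonneg s p w hp
  have h2 : lcost s p m ≤ lcost s p (lopt s p x y) := by
    unfold lopt
    split_ifs
    · exact lcost_ge s p m x hsum hp hα hβ
    · exact lcost_ge s p m y hsum hp hα hβ
  gcongr

lemma lr_same (s : Finset ℝ) (p : ℝ → ℝ) (m x y : ℝ) (hsum : ∑ x ∈ s, p x = 1)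
    (hp : ∀ x ∈ s, 0 ≤ p x)
    (hα : (∑ j ∈ s.filter (fun j => j < m), p j) < 1/2)
    (hβ : (∑ j ∈ s.filter (fun j => m < j), p j) < 1/2)
    (hcm : 0 < lcost s p m)
    (habs : x = y ∨ |x - m| ≠ |y - m|)
    (hside : (m ≤ x ∧ m ≤ y) ∨ (x ≤ m ∧ y ≤ m)) :
    lr s p x y = 1 := by
  have hgx : lcost s p m ≤ lcost s p x := lcost_ge s p m x hsum hp hα.le hβ.le
  have hgy : lcost s p m ≤ lcost s p y := lcost_ge s p m y hsum hp hα.le hβ.le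
  by_cases hxy : x = y
  · rw [hxy]; exact lr_refl s p y (lt_of_lt_of_le hcm hgy)
  have habs' : |x - m| ≠ |y - m| := habs.resolve_left hxy
  rcases lt_or_gt_of_ne habs' with h | h
  · have hwin := (lwin_eq_closer s p m x y hsum hp hα hβ h).1
    have hle : lcost s p x ≤ lcost s p y := by
      rcases hside with ⟨h1, h2⟩ | ⟨h1, h2⟩
      · rw [abs_of_nonneg (by linarith : (0:ℝ) ≤ x - m),
          abs_of_nonneg (by linarith : (0:ℝ) ≤ y - m)] at h
        exact lcost_mono_right s p m x y hsum hp hβ.le h1 (by linarith)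
      · rw [abs_of_nonpos (by linarith : x - m ≤ (0:ℝ)),
          abs_of_nonpos (by linarith : y - m ≤ (0:ℝ))] at h
        exact lcost_mono_left s p m x y hsum hp hα.le (by linarith) h1
    exact lr_one_win_x s p x y hwin hle (lt_of_lt_of_le hcm hgx)
  · have hwin := (lwin_eq_closer s p m y x hsum hp hα hβ h).2
    have hle : lcost s p y ≤ lcost s p x := by
      rcases hside with ⟨h1, h2⟩ | ⟨h1, h2⟩
      · rw [abs_of_nonneg (by linarith : (0:ℝ) ≤ x - m),
          abs_of_nonneg (by linarith : (0:ℝ) ≤ y - m)] at h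
        exact lcost_mono_right s p m y x hsum hp hβ.le h2 (by linarith)
      · rw [abs_of_nonpos (by linarith : x - m ≤ (0:ℝ)),
          abs_of_nonpos (by linarith : y - m ≤ (0:ℝ))] at h
        exact lcost_mono_left s p m y x hsum hp hα.le (by linarith) h2
    exact lr_one_win_y s p x y hwin hle (lt_of_lt_of_le hcm hgy)

noncomputable def chi (s : Finset ℝ) (p : ℝ → ℝ) (m x y : ℝ) : ℝ :=
  if m - x < y - m
  then (m - x) - 2 * ∑ x' ∈ s.filter (fun j => j < m), p x' * min (m - x') (m - x)
  else (y - m) - 2 * ∑ y' ∈ s.filter (fun j => m < j), p y' * min (y' - m) (y - m)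

noncomputable def dex (s : Finset ℝ) (p : ℝ → ℝ) (m x y : ℝ) : ℝ :=
  if x < m ∧ m < y then chi s p m x y else if y < m ∧ m < x then chi s p m y x else 0


lemma key_sum (s : Finset ℝ) (p : ℝ → ℝ) (m : ℝ)
    (hp : ∀ x ∈ s, 0 ≤ p x)
    (hα : (∑ j ∈ s.filter (fun j => j < m), p j) < 1/2)
    (hβ : (∑ j ∈ s.filter (fun j => m < j), p j) < 1/2)
    (hne : ∀ x ∈ s.filter (fun j => j < m), ∀ y ∈ s.filter (fun j => m < j), m - x ≠ y - m) :
    ∑ x ∈ s.filter (fun j => j < m), ∑ y ∈ s.filter (fun j => m < j), p x * p y * chi s p m x y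
    ≤ (3 - 2*Real.sqrt 2)/2 *
      ((∑ x ∈ s.filter (fun j => j < m), p x * (m - x)) +
       (∑ y ∈ s.filter (fun j => m < j), p y * (y - m))) := by
  classical
  unfold chi
  set κ := (3 - 2*Real.sqrt 2)/2 with hκ
  set sL := s.filter (fun j => j < m) with hsL
  set sR := s.filter (fun j => m < j) with hsR
  set T := 1 + (∑ x ∈ sL, (m - x)) + (∑ y ∈ sR, (y - m)) with hT
  have hLpos : ∀ x ∈ sL, 0 ≤ m - x := by
    intro x hx
    have := (Finset.mem_filter.1 hx).2
    linarith
  have hRpos : ∀ y ∈ sR, 0 ≤ y - m := by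
    intro y hy
    have := (Finset.mem_filter.1 hy).2
    linarith
  have hsumLnn : 0 ≤ ∑ x ∈ sL, (m - x) := Finset.sum_nonneg hLpos
  have hsumRnn : 0 ≤ ∑ y ∈ sR, (y - m) := Finset.sum_nonneg hRpos
  have hLd : ∀ x ∈ sL, 0 ≤ m - x ∧ m - x ≤ T := by
    intro x hx
    refine ⟨hLpos x hx, ?_⟩
    have h1 : m - x ≤ ∑ x' ∈ sL, (m - x') := Finset.single_le_sum hLpos hx
    rw [hT]; linarith
  have hRd : ∀ y ∈ sR, 0 ≤ y - m ∧ y - m ≤ T := by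
    intro y hy
    refine ⟨hRpos y hy, ?_⟩
    have h1 : y - m ≤ ∑ y' ∈ sR, (y' - m) := Finset.single_le_sum hRpos hy
    rw [hT]; linarith
  have hT0 : (0:ℝ) ≤ T := by rw [hT]; linarith
  set u1 := sL ×ˢ sR with hu1
  have hu1mem : ∀ q ∈ u1, q.1 ∈ sL ∧ q.2 ∈ sR := fun q hq => Finset.mem_product.1 hq
  set F : ℝ×ℝ → ℝ := fun q => if m - q.1 < q.2 - m then p q.1 * p q.2 else 0 with hF
  set G : ℝ×ℝ → ℝ := fun q => if q.2 - m < m - q.1 then p q.1 * p q.2 else 0 with hG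
  have hppos : ∀ x ∈ sL, 0 ≤ p x := fun x hx => hp x (Finset.mem_filter.1 hx).1
  have hqpos : ∀ y ∈ sR, 0 ≤ p y := fun y hy => hp y (Finset.mem_filter.1 hy).1
  have hFpos : ∀ q ∈ u1, 0 ≤ F q := by
    intro q hq
    rw [hF]
    dsimp only
    split_ifs
    · exact mul_nonneg (hppos _ (hu1mem q hq).1) (hqpos _ (hu1mem q hq).2)
    · exact le_refl 0
  have hGpos : ∀ q ∈ u1, 0 ≤ G q := by
    intro q hq
    rw [hG]
    dsimp only
    split_ifs
    · exact mul_nonneg (hppos _ (hu1mem q hq).1) (hqpos _ (hu1mem q hq).2)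
    · exact le_refl 0
  -- the step functions
  set Xf : ℝ → ℝ := fun t => ∑ x ∈ sL, p x * estep (m - x) t with hXf
  set Yf : ℝ → ℝ := fun t => ∑ y ∈ sR, p y * estep (y - m) t with hYf
  set Pf : ℝ → ℝ := fun t => ∑ q ∈ u1, F q * estep (m - q.1) t with hPf
  set Qf : ℝ → ℝ := fun t => ∑ q ∈ u1, G q * estep (q.2 - m) t with hQf
  set XP : ℝ → ℝ := fun t => ∑ r ∈ sL ×ˢ u1, (p r.1 * F r.2) * estep (min (m - r.1) (m - r.2.1)) t with hXPd
  set YQ : ℝ → ℝ := fun t => ∑ r ∈ sR ×ˢ u1, (p r.1 * G r.2) * estep (min (r.1 - m) (r.2.2 - m)) t with hYQd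
  -- pointwise product identities
  have hXP : ∀ t, Xf t * Pf t = XP t := by
    intro t
    rw [hXf, hPf, hXPd]
    dsimp only
    rw [Finset.sum_mul_sum, Finset.sum_product]
    refine Finset.sum_congr rfl fun x _ => Finset.sum_congr rfl fun q _ => ?_
    rw [show (p x * estep (m-x) t) * (F q * estep (m-q.1) t)
        = (p x * F q) * (estep (m-x) t * estep (m-q.1) t) from by ring, estep_mul]
  have hYQ : ∀ t, Yf t * Qf t = YQ t := by
    intro t
    rw [hYf, hQf, hYQd]
    dsimp only
    rw [Finset.sum_mul_sum, Finset.sum_product]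
    refine Finset.sum_congr rfl fun y _ => Finset.sum_congr rfl fun q _ => ?_
    rw [show (p y * estep (y-m) t) * (G q * estep (q.2-m) t)
        = (p y * G q) * (estep (y-m) t * estep (q.2-m) t) from by ring, estep_mul]
  -- the pairing identity
  have hpair : ∀ t, Pf t + Qf t = Xf t * Yf t := by
    intro t
    rw [hXf, hYf, hPf, hQf]
    dsimp only
    rw [Finset.sum_mul_sum, ← Finset.sum_add_distrib, hu1, Finset.sum_product]
    refine Finset.sum_congr rfl fun x hx => Finset.sum_congr rfl fun y hy => ?_
    have hxy := hne x hx y hy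
    rw [show (p x * estep (m-x) t) * (p y * estep (y-m) t)
        = (p x * p y) * (estep (m-x) t * estep (y-m) t) from by ring, estep_mul]
    rcases lt_or_gt_of_ne hxy with h | h
    · rw [hF, hG]
      dsimp only
      rw [if_pos h, if_neg (by intro h2; exact absurd h2 (not_lt.2 h.le)), zero_mul, add_zero,
        min_eq_left h.le]
    · rw [hF, hG]
      dsimp only
      rw [if_neg (not_lt.2 h.le), if_pos h, zero_mul, zero_add, min_eq_right h.le]
  -- integrability
  have iX : IntervalIntegrable Xf volume 0 T := sum_estep_ii sL p (fun x => m - x) T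
  have iY : IntervalIntegrable Yf volume 0 T := sum_estep_ii sR p (fun y => y - m) T
  have iP : IntervalIntegrable Pf volume 0 T := sum_estep_ii u1 F (fun q => m - q.1) T
  have iQ : IntervalIntegrable Qf volume 0 T := sum_estep_ii u1 G (fun q => q.2 - m) T
  have iXP : IntervalIntegrable XP volume 0 T :=
    sum_estep_ii (sL ×ˢ u1) (fun r => p r.1 * F r.2) (fun r => min (m - r.1) (m - r.2.1)) T
  have iYQ : IntervalIntegrable YQ volume 0 T :=
    sum_estep_ii (sR ×ˢ u1) (fun r => p r.1 * G r.2) (fun r => min (r.1 - m) (r.2.2 - m)) T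
  -- pointwise inequality
  have hpt : ∀ t ∈ Set.Icc (0:ℝ) T,
      Pf t + Qf t - 2 * XP t - 2 * YQ t ≤ κ * (Xf t + Yf t) := by
    intro t _
    rw [← hXP t, ← hYQ t]
    have hx0 : 0 ≤ Xf t := Finset.sum_nonneg fun x hx => mul_nonneg (hppos x hx) (estep_nonneg _ _)
    have hy0 : 0 ≤ Yf t := Finset.sum_nonneg fun y hy => mul_nonneg (hqpos y hy) (estep_nonneg _ _)
    have hx2 : Xf t ≤ 1/2 := by
      have h1 : Xf t ≤ ∑ x ∈ sL, p x :=
        Finset.sum_le_sum fun x hx => mul_le_of_le_one_right (hppos x hx) (estep_le_one _ _)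
      linarith
    have hy2 : Yf t ≤ 1/2 := by
      have h1 : Yf t ≤ ∑ y ∈ sR, p y :=
        Finset.sum_le_sum fun y hy => mul_le_of_le_one_right (hqpos y hy) (estep_le_one _ _)
      linarith
    have hP0 : 0 ≤ Pf t :=
      Finset.sum_nonneg fun q hq => mul_nonneg (hFpos q hq) (estep_nonneg _ _)
    have hQ0 : 0 ≤ Qf t :=
      Finset.sum_nonneg fun q hq => mul_nonneg (hGpos q hq) (estep_nonneg _ _)
    have := scalar_key (Xf t) (Yf t) (Pf t) (Qf t) hx0 hx2 hy0 hy2 hP0 hQ0 (hpair t)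
    rw [hκ]
    nlinarith [this]
  -- integral inequality
  have hii1 : IntervalIntegrable (fun t => Pf t + Qf t - 2 * XP t - 2 * YQ t) volume 0 T :=
    ((iP.add iQ).sub (iXP.const_mul 2)).sub (iYQ.const_mul 2)
  have hii2 : IntervalIntegrable (fun t => κ * (Xf t + Yf t)) volume 0 T :=
    (iX.add iY).const_mul κ
  have hmono := intervalIntegral.integral_mono_on hT0 hii1 hii2 hpt
  -- compute the integrals
  have hIX : ∫ t in (0:ℝ)..T, Xf t = ∑ x ∈ sL, p x * (m - x) :=
    sum_estep_integral sL p (fun x => m - x) T hLd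
  have hIY : ∫ t in (0:ℝ)..T, Yf t = ∑ y ∈ sR, p y * (y - m) :=
    sum_estep_integral sR p (fun y => y - m) T hRd
  have hIP : ∫ t in (0:ℝ)..T, Pf t = ∑ q ∈ u1, F q * (m - q.1) :=
    sum_estep_integral u1 F (fun q => m - q.1) T (fun q hq => hLd q.1 (hu1mem q hq).1)
  have hIQ : ∫ t in (0:ℝ)..T, Qf t = ∑ q ∈ u1, G q * (q.2 - m) :=
    sum_estep_integral u1 G (fun q => q.2 - m) T (fun q hq => hRd q.2 (hu1mem q hq).2)
  have hIXP : ∫ t in (0:ℝ)..T, XP t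
      = ∑ r ∈ sL ×ˢ u1, (p r.1 * F r.2) * min (m - r.1) (m - r.2.1) := by
    refine sum_estep_integral _ _ _ T fun r hr => ?_
    have hr' := Finset.mem_product.1 hr
    have h1 := hLd r.1 hr'.1
    have h2 := hLd r.2.1 (hu1mem r.2 hr'.2).1
    exact ⟨le_min h1.1 h2.1, le_trans (min_le_left _ _) h1.2⟩
  have hIYQ : ∫ t in (0:ℝ)..T, YQ t
      = ∑ r ∈ sR ×ˢ u1, (p r.1 * G r.2) * min (r.1 - m) (r.2.2 - m) := by
    refine sum_estep_integral _ _ _ T fun r hr => ?_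
    have hr' := Finset.mem_product.1 hr
    have h1 := hRd r.1 hr'.1
    have h2 := hRd r.2.2 (hu1mem r.2 hr'.2).2
    exact ⟨le_min h1.1 h2.1, le_trans (min_le_left _ _) h1.2⟩
  have hIL : ∫ t in (0:ℝ)..T, (Pf t + Qf t - 2 * XP t - 2 * YQ t)
      = (∑ q ∈ u1, F q * (m - q.1)) + (∑ q ∈ u1, G q * (q.2 - m))
        - 2 * (∑ r ∈ sL ×ˢ u1, (p r.1 * F r.2) * min (m - r.1) (m - r.2.1))
        - 2 * (∑ r ∈ sR ×ˢ u1, (p r.1 * G r.2) * min (r.1 - m) (r.2.2 - m)) := by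
    rw [intervalIntegral.integral_sub ((iP.add iQ).sub (iXP.const_mul 2)) (iYQ.const_mul 2),
      intervalIntegral.integral_sub (iP.add iQ) (iXP.const_mul 2),
      intervalIntegral.integral_add iP iQ,
      intervalIntegral.integral_const_mul, intervalIntegral.integral_const_mul,
      hIP, hIQ, hIXP, hIYQ]
  have hIR : ∫ t in (0:ℝ)..T, κ * (Xf t + Yf t)
      = κ * ((∑ x ∈ sL, p x * (m - x)) + (∑ y ∈ sR, p y * (y - m))) := by
    rw [intervalIntegral.integral_const_mul, intervalIntegral.integral_add iX iY, hIX, hIY]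
  rw [hIL, hIR] at hmono
  -- reorganize the product sums
  have hswap1 : (∑ r ∈ sL ×ˢ u1, (p r.1 * F r.2) * min (m - r.1) (m - r.2.1))
      = ∑ q ∈ u1, ∑ x' ∈ sL, (p x' * F q) * min (m - x') (m - q.1) := by
    rw [Finset.sum_product]
    exact Finset.sum_comm
  have hswap2 : (∑ r ∈ sR ×ˢ u1, (p r.1 * G r.2) * min (r.1 - m) (r.2.2 - m))
      = ∑ q ∈ u1, ∑ y' ∈ sR, (p y' * G q) * min (y' - m) (q.2 - m) := by
    rw [Finset.sum_product]
    exact Finset.sum_comm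
  rw [hswap1, hswap2] at hmono
  have hexp : (∑ x ∈ sL, ∑ y ∈ sR, p x * p y *
      (if m - x < y - m
       then (m - x) - 2 * ∑ x' ∈ sL, p x' * min (m - x') (m - x)
       else (y - m) - 2 * ∑ y' ∈ sR, p y' * min (y' - m) (y - m)))
      = (∑ q ∈ u1, F q * (m - q.1)) + (∑ q ∈ u1, G q * (q.2 - m))
        - 2 * (∑ q ∈ u1, ∑ x' ∈ sL, (p x' * F q) * min (m - x') (m - q.1))
        - 2 * (∑ q ∈ u1, ∑ y' ∈ sR, (p y' * G q) * min (y' - m) (q.2 - m)) := by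
    rw [Finset.mul_sum, Finset.mul_sum, ← Finset.sum_add_distrib,
      ← Finset.sum_sub_distrib, ← Finset.sum_sub_distrib, hu1, Finset.sum_product]
    refine Finset.sum_congr rfl fun x hx => Finset.sum_congr rfl fun y hy => ?_
    have hxy := hne x hx y hy
    have hFxy : F (x, y) = if m - x < y - m then p x * p y else 0 := rfl
    have hGxy : G (x, y) = if y - m < m - x then p x * p y else 0 := rfl
    rcases lt_or_gt_of_ne hxy with h | h
    · rw [if_pos h, hFxy, hGxy, if_pos h, if_neg (not_lt.2 h.le)]
      have hS : ∑ x' ∈ sL, (p x' * (p x * p y)) * min (m - x') (m - x)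
          = (p x * p y) * ∑ x' ∈ sL, p x' * min (m - x') (m - x) := by
        rw [Finset.mul_sum]
        exact Finset.sum_congr rfl fun x' _ => by ring
      rw [hS]
      simp only [zero_mul, mul_zero, Finset.sum_const_zero]
      ring
    · rw [if_neg (not_lt.2 h.le), hFxy, hGxy, if_neg (not_lt.2 h.le), if_pos h]
      have hS : ∑ y' ∈ sR, (p y' * (p x * p y)) * min (y' - m) (y - m)
          = (p x * p y) * ∑ y' ∈ sR, p y' * min (y' - m) (y - m) := by
        rw [Finset.mul_sum]
        exact Finset.sum_congr rfl fun y' _ => by ring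
      rw [hS]
      simp only [zero_mul, mul_zero, Finset.sum_const_zero]
      ring
  rw [hexp]
  exact hmono


end helpers

/-- For a finitely supported probability distribution `p` on ℝ in
general position (unique median, no voter ties, strict majority winners), serving
as both candidate and voter distribution, the expected distortion of majority
voting between two i.i.d. candidates is at most `4 - 2√2`. -/
theorem line_identical_distortion_le (s : Finset ℝ) (p : ℝ → ℝ)
    (hpos : ∀ x ∈ s, 0 < p x) (hsum : ∑ x ∈ s, p x = 1)
    (hmedian : ∃! m, IsMedian s p m)
    (hties : NoVoterTies s)
    (hmaj : StrictMajority s p) :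
    lsocial s p p ≤ 4 - 2 * Real.sqrt 2 := by
  classical
  obtain ⟨m, hm, -⟩ := hmedian
  obtain ⟨hmem, hα, hβ⟩ := hm
  have hp : ∀ x ∈ s, 0 ≤ p x := fun x hx => (hpos x hx).le
  have hs2 : Real.sqrt 2 ^ 2 = 2 := Real.sq_sqrt (by norm_num)
  have hs2' : Real.sqrt 2 ≤ 2 := by nlinarith [Real.sqrt_nonneg 2]
  have hc0 : 0 ≤ lcost s p m := lcost_nonneg s p m hp
  rcases hc0.eq_or_lt with hc | hc
  · -- degenerate case : all mass at m
    have hall : ∀ j ∈ s, j = m := by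
      intro j hj
      have hz := (Finset.sum_eq_zero_iff_of_nonneg
        (fun j hj => mul_nonneg (hp j hj) (abs_nonneg _))).1 hc.symm j hj
      have habs : |m - j| = 0 := by
        rcases mul_eq_zero.1 hz with h | h
        · exact absurd h (ne_of_gt (hpos j hj))
        · exact h
      have := abs_eq_zero.1 habs
      linarith
    have hs1 : s = {m} := by
      apply Finset.eq_singleton_iff_unique_mem.2
      exact ⟨hmem, hall⟩
    have hcost : lcost {m} p m = 0 := by
      unfold lcost
      rw [Finset.sum_singleton, sub_self, abs_zero, mul_zero]
    have hlr : lr {m} p m m = 0 := by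
      unfold lr lwin lopt
      rw [ite_self, ite_self, hcost, div_zero]
    rw [hs1]
    unfold lsocial
    rw [Finset.sum_singleton, Finset.sum_singleton, hlr, mul_zero]
    nlinarith
  · -- main case
    have hcne : lcost s p m ≠ 0 := hc.ne'
    -- distinct distances across the median
    have hneq : ∀ x ∈ s.filter (fun j => j < m), ∀ y ∈ s.filter (fun j => m < j), m - x ≠ y - m := by
      intro x hx y hy
      have hx' := Finset.mem_filter.1 hx
      have hy' := Finset.mem_filter.1 hy
      have hxy : x ≠ y := by intro h; rw [h] at hx'; linarith [hx'.2, hy'.2]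
      have h := hties m hmem x hx'.1 y hy'.1 hxy
      rw [abs_of_nonpos (by linarith [hx'.2] : x - m ≤ 0),
        abs_of_nonneg (by linarith [hy'.2] : (0:ℝ) ≤ y - m)] at h
      intro h2
      apply h
      linarith [h2]
    -- pairwise bound
    have hpairb : ∀ x ∈ s, ∀ y ∈ s,
        lr s p x y ≤ 1 + dex s p m x y / lcost s p m := by
      intro x hx y hy
      by_cases h1 : x < m ∧ m < y
      · have hd : dex s p m x y = chi s p m x y := if_pos h1
        have hne1 : m - x ≠ y - m :=
          hneq x (Finset.mem_filter.2 ⟨hx, h1.1⟩) y (Finset.mem_filter.2 ⟨hy, h1.2⟩)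
        rcases lt_or_gt_of_ne hne1 with hlt | hgt
        · -- winner x
          have habs : |x - m| < |y - m| := by
            rw [abs_of_nonpos (by linarith [h1.1] : x - m ≤ 0),
              abs_of_nonneg (by linarith [h1.2] : (0:ℝ) ≤ y - m)]
            linarith
          have hwin := (lwin_eq_closer s p m x y hsum hp hα hβ habs).1
          have hb := lr_le_div s p m x y x hsum hp hα.le hβ.le hwin hc
          have hcx := lcost_left s p m x hsum h1.1.le
          have hchi : chi s p m x y
              = (m - x) - 2 * ∑ x' ∈ s.filter (fun j => j < m), p x' * min (m - x') (m - x) :=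
            if_pos hlt
          rw [hd, hchi]
          rw [hcx] at hb
          calc lr s p x y ≤ (lcost s p m + ((m - x) - 2 * ∑ j ∈ s.filter (· < m), p j * min (m - j) (m - x))) / lcost s p m := hb
          _ = 1 + ((m - x) - 2 * ∑ j ∈ s.filter (· < m), p j * min (m - j) (m - x)) / lcost s p m := by
              rw [add_div, div_self hcne]
          _ = _ := by norm_num
        · -- winner y
          have habs : |y - m| < |x - m| := by
            rw [abs_of_nonpos (by linarith [h1.1] : x - m ≤ 0),
              abs_of_nonneg (by linarith [h1.2] : (0:ℝ) ≤ y - m)]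
            linarith
          have hwin := (lwin_eq_closer s p m y x hsum hp hα hβ habs).2
          have hb := lr_le_div s p m x y y hsum hp hα.le hβ.le hwin hc
          have hcy := lcost_right s p m y hsum h1.2.le
          have hchi : chi s p m x y
              = (y - m) - 2 * ∑ y' ∈ s.filter (fun j => m < j), p y' * min (y' - m) (y - m) :=
            if_neg (not_lt.2 hgt.le)
          rw [hd, hchi]
          rw [hcy] at hb
          calc lr s p x y ≤ (lcost s p m + ((y - m) - 2 * ∑ j ∈ s.filter (fun j => m < j), p j * min (j - m) (y - m))) / lcost s p m := hb
          _ = 1 + ((y - m) - 2 * ∑ j ∈ s.filter (fun j => m < j), p j * min (j - m) (y - m)) / lcost s p m := by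
              rw [add_div, div_self hcne]
          _ = _ := by norm_num
      · by_cases h2 : y < m ∧ m < x
        · have hd : dex s p m x y = chi s p m y x := by
            unfold dex
            rw [if_neg h1, if_pos h2]
          have hne1 : m - y ≠ x - m :=
            hneq y (Finset.mem_filter.2 ⟨hy, h2.1⟩) x (Finset.mem_filter.2 ⟨hx, h2.2⟩)
          rcases lt_or_gt_of_ne hne1 with hlt | hgt
          · -- winner y (closer)
            have habs : |y - m| < |x - m| := by
              rw [abs_of_nonpos (by linarith [h2.1] : y - m ≤ 0),
                abs_of_nonneg (by linarith [h2.2] : (0:ℝ) ≤ x - m)]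
              linarith
            have hwin := (lwin_eq_closer s p m y x hsum hp hα hβ habs).2
            have hb := lr_le_div s p m x y y hsum hp hα.le hβ.le hwin hc
            have hcy := lcost_left s p m y hsum h2.1.le
            have hchi : chi s p m y x
                = (m - y) - 2 * ∑ x' ∈ s.filter (fun j => j < m), p x' * min (m - x') (m - y) :=
              if_pos hlt
            rw [hd, hchi]
            rw [hcy] at hb
            calc lr s p x y ≤ (lcost s p m + ((m - y) - 2 * ∑ j ∈ s.filter (· < m), p j * min (m - j) (m - y))) / lcost s p m := hb
            _ = 1 + ((m - y) - 2 * ∑ j ∈ s.filter (· < m), p j * min (m - j) (m - y)) / lcost s p m := by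
                rw [add_div, div_self hcne]
            _ = _ := by norm_num
          · -- winner x
            have habs : |x - m| < |y - m| := by
              rw [abs_of_nonpos (by linarith [h2.1] : y - m ≤ 0),
                abs_of_nonneg (by linarith [h2.2] : (0:ℝ) ≤ x - m)]
              linarith
            have hwin := (lwin_eq_closer s p m x y hsum hp hα hβ habs).1
            have hb := lr_le_div s p m x y x hsum hp hα.le hβ.le hwin hc
            have hcx := lcost_right s p m x hsum h2.2.le
            have hchi : chi s p m y x
                = (x - m) - 2 * ∑ y' ∈ s.filter (fun j => m < j), p y' * min (y' - m) (x - m) :=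
              if_neg (not_lt.2 hgt.le)
            rw [hd, hchi]
            rw [hcx] at hb
            calc lr s p x y ≤ (lcost s p m + ((x - m) - 2 * ∑ j ∈ s.filter (fun j => m < j), p j * min (j - m) (x - m))) / lcost s p m := hb
            _ = 1 + ((x - m) - 2 * ∑ j ∈ s.filter (fun j => m < j), p j * min (j - m) (x - m)) / lcost s p m := by
                rw [add_div, div_self hcne]
            _ = _ := by norm_num
        · -- same side
          have hd : dex s p m x y = 0 := by
            unfold dex
            rw [if_neg h1, if_neg h2]
          have hside : (m ≤ x ∧ m ≤ y) ∨ (x ≤ m ∧ y ≤ m) := by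
            push_neg at h1 h2
            rcases le_or_gt m x with hx1 | hx1
            · rcases le_or_gt m y with hy1 | hy1
              · exact Or.inl ⟨hx1, hy1⟩
              · exact Or.inr ⟨h2 hy1, hy1.le⟩
            · exact Or.inr ⟨hx1.le, h1 hx1⟩
          have habs : x = y ∨ |x - m| ≠ |y - m| := by
            by_cases hxy : x = y
            · exact Or.inl hxy
            · exact Or.inr (hties m hmem x hx y hy hxy)
          rw [hd, lr_same s p m x y hsum hp hα hβ hc habs hside]
          rw [zero_div, add_zero]
    -- assemble
    have hstep1 : lsocial s p p ≤ ∑ x ∈ s, ∑ y ∈ s,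
        (p x * p y + (p x * p y * dex s p m x y) / lcost s p m) := by
      unfold lsocial
      refine Finset.sum_le_sum fun x hx => Finset.sum_le_sum fun y hy => ?_
      have h := hpairb x hx y hy
      have hpp : 0 ≤ p x * p y := mul_nonneg (hp x hx) (hp y hy)
      calc p x * p y * lr s p x y ≤ p x * p y * (1 + dex s p m x y / lcost s p m) :=
            mul_le_mul_of_nonneg_left h hpp
      _ = p x * p y + (p x * p y * dex s p m x y) / lcost s p m := by ring
    have hsq : ∑ x ∈ s, ∑ y ∈ s, p x * p y = 1 := by
      have h1 : ∀ x, ∑ y ∈ s, p x * p y = p x := fun x => by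
        rw [← Finset.mul_sum, hsum, mul_one]
      rw [Finset.sum_congr rfl (fun x _ => h1 x), hsum]
    have hrow : ∀ x ∈ s, ∑ y ∈ s, p x * p y * dex s p m x y
        = (if x < m then ∑ y ∈ s.filter (fun j => m < j), p x * p y * chi s p m x y
           else if m < x then ∑ y ∈ s.filter (fun j => j < m), p x * p y * chi s p m y x
           else 0) := by
      intro x _
      rcases lt_trichotomy x m with hx1 | hx1 | hx1
      · rw [if_pos hx1, Finset.sum_filter]
        refine Finset.sum_congr rfl fun y _ => ?_
        unfold dex
        by_cases hy : m < y
        · rw [if_pos ⟨hx1, hy⟩, if_pos hy]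
        · rw [if_neg (fun h => hy h.2),
            if_neg (fun h => absurd h.2 (not_lt.2 hx1.le)), if_neg hy, mul_zero]
      · rw [if_neg (by rw [hx1]; exact lt_irrefl m), if_neg (by rw [hx1]; exact lt_irrefl m)]
        refine Finset.sum_eq_zero fun y _ => ?_
        unfold dex
        rw [if_neg (fun h => absurd h.1 (by rw [hx1]; exact lt_irrefl m)),
          if_neg (fun h => absurd h.2 (by rw [hx1]; exact lt_irrefl m)), mul_zero]
      · rw [if_neg (not_lt.2 hx1.le), if_pos hx1, Finset.sum_filter]
        refine Finset.sum_congr rfl fun y _ => ?_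
        unfold dex
        by_cases hy : y < m
        · rw [if_neg (fun h => absurd h.1 (not_lt.2 hx1.le)), if_pos ⟨hy, hx1⟩, if_pos hy]
        · rw [if_neg (fun h => absurd h.1 (not_lt.2 hx1.le)), if_neg (fun h => hy h.1),
            if_neg hy, mul_zero]
    have hDsum : ∑ x ∈ s, ∑ y ∈ s, p x * p y * dex s p m x y
        = 2 * ∑ x ∈ s.filter (fun j => j < m), ∑ y ∈ s.filter (fun j => m < j),
            p x * p y * chi s p m x y := by
      rw [Finset.sum_congr rfl hrow]
      have hsplit : ∀ x, (if x < m then ∑ y ∈ s.filter (fun j => m < j), p x * p y * chi s p m x y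
           else if m < x then ∑ y ∈ s.filter (fun j => j < m), p x * p y * chi s p m y x
           else 0)
          = (if x < m then ∑ y ∈ s.filter (fun j => m < j), p x * p y * chi s p m x y else 0)
            + (if m < x then ∑ y ∈ s.filter (fun j => j < m), p x * p y * chi s p m y x else 0) := by
        intro x
        rcases lt_trichotomy x m with h | h | h
        · simp [h, lt_asymm h]
        · rw [h]; simp
        · simp [h, lt_asymm h]
      rw [Finset.sum_congr rfl (fun x _ => hsplit x), Finset.sum_add_distrib,
        ← Finset.sum_filter, ← Finset.sum_filter]
      have hswap : ∑ x ∈ s.filter (fun j => m < j), ∑ y ∈ s.filter (fun j => j < m),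
          p x * p y * chi s p m y x
          = ∑ x ∈ s.filter (fun j => j < m), ∑ y ∈ s.filter (fun j => m < j),
            p x * p y * chi s p m x y := by
        rw [Finset.sum_comm]
        exact Finset.sum_congr rfl fun a _ => Finset.sum_congr rfl fun b _ => by ring
      rw [hswap]
      ring
    have hAB : lcost s p m = (∑ x ∈ s.filter (fun j => j < m), p x * (m - x)) +
        (∑ y ∈ s.filter (fun j => m < j), p y * (y - m)) := by
      unfold lcost
      rw [← Finset.sum_filter_add_sum_filter_not s (fun j => j < m)]
      congr 1
      · refine Finset.sum_congr rfl fun j hj => ?_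
        have hj' := (Finset.mem_filter.1 hj).2
        rw [abs_of_nonneg (by linarith : (0:ℝ) ≤ m - j)]
      · have hsub : s.filter (fun j => m < j) ⊆ s.filter (fun j => ¬ j < m) := by
          intro j hj
          have hj' := Finset.mem_filter.1 hj
          exact Finset.mem_filter.2 ⟨hj'.1, not_lt.2 hj'.2.le⟩
        have hvan : ∀ j ∈ s.filter (fun j => ¬ j < m), j ∉ s.filter (fun j => m < j) →
            p j * |m - j| = 0 := by
          intro j hj hj2
          have hj' := Finset.mem_filter.1 hj
          have : j = m := by
            by_contra hne
            rcases lt_or_gt_of_ne hne with h | h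
            · exact hj'.2 h
            · exact hj2 (Finset.mem_filter.2 ⟨hj'.1, h⟩)
          rw [this, sub_self, abs_zero, mul_zero]
        rw [← Finset.sum_subset hsub hvan]
        refine Finset.sum_congr rfl fun j hj => ?_
        have hj' := (Finset.mem_filter.1 hj).2
        rw [abs_of_nonpos (by linarith : m - j ≤ (0:ℝ))]
        ring
    have hkey := key_sum s p m hp hα hβ hneq
    have hfinal : ∑ x ∈ s, ∑ y ∈ s,
        (p x * p y + (p x * p y * dex s p m x y) / lcost s p m)
        = 1 + (∑ x ∈ s, ∑ y ∈ s, p x * p y * dex s p m x y) / lcost s p m := by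
      rw [Finset.sum_congr rfl fun x _ => Finset.sum_add_distrib, Finset.sum_add_distrib, hsq]
      congr 1
      rw [Finset.sum_div]
      exact Finset.sum_congr rfl fun x _ => by rw [Finset.sum_div]
    rw [hfinal, hDsum] at hstep1
    have hbound : (2 * ∑ x ∈ s.filter (fun j => j < m), ∑ y ∈ s.filter (fun j => m < j),
        p x * p y * chi s p m x y) / lcost s p m ≤ 3 - 2 * Real.sqrt 2 := by
      have h2 : 2 * ∑ x ∈ s.filter (fun j => j < m), ∑ y ∈ s.filter (fun j => m < j),
          p x * p y * chi s p m x y ≤ (3 - 2*Real.sqrt 2) * lcost s p m := by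
        rw [hAB]
        nlinarith [hkey]
      rw [div_le_iff₀ hc]
      linarith
    linarith [hstep1, hbound]
end

section
/- For every ε > 0 there exists a finitely supported probability distribution p on ℝ (in general position: unique median, no voter ties, strict majority winners) such that the expected distortion Social(p,p) of majority voting between two candidates drawn i.i.d. from p, with voters also distributed according to p, is at least 4 − 2√2 − ε. In particular, the bound 4 − 2√2 for the line is tight. -/
open Finset

section auxIneq
variable (r2 t : ℝ)

lemma aux_pos1 (h1 : 1.414 < r2) (h3 : 0 < t) (h4 : t ≤ 1/100) :
    0 < (1 - r2/2)*(1+t) + (r2/2 - 1/2 + t)*2 := by nlinarith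

lemma aux_pos2 (h1 : 1.414 < r2) (h3 : 0 < t) (h4 : t ≤ 1/100) :
    0 < (1/2 - t)*(1+t) + (r2/2 - 1/2 + t)*(1-t) := by nlinarith

lemma aux_pos3 (h2 : r2 < 1.415) (h3 : 0 < t) (h4 : t ≤ 1/100) :
    0 < (1/2 - t)*2 + (1 - r2/2)*(1-t) := by nlinarith

lemma aux_lt1 (h1 : 1.414 < r2) (h2 : r2 < 1.415) (h3 : 0 < t) (h4 : t ≤ 1/100) :
    (1/2 - t)*(1+t) + (r2/2 - 1/2 + t)*(1-t)
      < (1 - r2/2)*(1+t) + (r2/2 - 1/2 + t)*2 := by nlinarith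

lemma aux_lt2 (h1 : 1.414 < r2) (h2 : r2 < 1.415) (h3 : 0 < t) (h4 : t ≤ 1/100) :
    (1 - r2/2)*(1+t) + (r2/2 - 1/2 + t)*2
      < (1/2 - t)*2 + (1 - r2/2)*(1-t) := by nlinarith

lemma aux_ratio (hsq : r2 * r2 = 2) (h1 : 1.414 < r2) (h2 : r2 < 1.415)
    (h3 : 0 < t) (h4 : t ≤ 1/100) :
    (2*r2 - 1 - 10*t) * ((1 - r2/2)*(1+t) + (r2/2 - 1/2 + t)*2)
      ≤ (1/2 - t)*2 + (1 - r2/2)*(1-t) := by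
  have h5 : (0:ℝ) ≤ t*(2 - r2) := mul_nonneg h3.le (by linarith)
  have h6 : (0:ℝ) ≤ t*t*(30 - 5*r2) := mul_nonneg (mul_nonneg h3.le h3.le) (by linarith)
  have h7 : r2*r2*t = 2*t := by rw [hsq]
  nlinarith [h5, h6, h7]

lemma aux_coef (h1 : 1.414 < r2) (h3 : 0 < t) (h4 : t ≤ 1/100) :
    0 ≤ (1/2 - t)*(r2/2 - 1/2 + t) + (r2/2 - 1/2 + t)*(1/2 - t) := by nlinarith

lemma aux_final (hsq : r2 * r2 = 2) (h1 : 1.414 < r2) (h2 : r2 < 1.415)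
    (h3 : 0 < t) (h4 : t ≤ 1/100) :
    4 - 2*r2 - 100*t ≤
      (1/2 - t)*(1/2 - t) + (1/2 - t)*(1 - r2/2)
      + (1 - r2/2)*(1/2 - t) + (1 - r2/2)*(1 - r2/2)
      + (1 - r2/2)*(r2/2 - 1/2 + t) + (r2/2 - 1/2 + t)*(1 - r2/2)
      + (r2/2 - 1/2 + t)*(r2/2 - 1/2 + t)
      + ((1/2 - t)*(r2/2 - 1/2 + t) + (r2/2 - 1/2 + t)*(1/2 - t))
          * (2*r2 - 1 - 10*t) := by
  have h7 : r2*r2*t = 2*t := by rw [hsq]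
  have hA : t*t ≤ t*(1/100) := mul_le_mul_of_nonneg_left h4 h3.le
  have hB : (0:ℝ) ≤ r2*t := mul_nonneg (by linarith) h3.le
  have hC : (0:ℝ) ≤ r2*(t*t) := mul_nonneg (by linarith) (mul_nonneg h3.le h3.le)
  have hD : (0:ℝ) ≤ t*(t*t) := mul_nonneg h3.le (mul_nonneg h3.le h3.le)
  nlinarith [h7, hA, hB, hC, hD]

end auxIneq

set_option maxHeartbeats 1600000 in
/-- For every `ε > 0` there is a finitely supported probability
distribution on ℝ, in general position, whose expected distortion (candidates
i.i.d. from the voter distribution) is at least `4 - 2√2 - ε`; hence the bound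
`4 - 2√2` is tight on the line. -/
theorem line_identical_distortion_tight (ε : ℝ) (hε : 0 < ε) :
    ∃ (s : Finset ℝ) (p : ℝ → ℝ),
      (∀ x ∈ s, 0 < p x) ∧ (∑ x ∈ s, p x = 1) ∧
      (∃! m, IsMedian s p m) ∧
      NoVoterTies s ∧
      StrictMajority s p ∧
      4 - 2 * Real.sqrt 2 - ε ≤ lsocial s p p := by
  set r2 := Real.sqrt 2 with hr2def
  have hr2nn : (0:ℝ) ≤ r2 := by rw [hr2def]; exact Real.sqrt_nonneg 2
  have hr2sq : r2 * r2 = 2 := by rw [hr2def]; exact Real.mul_self_sqrt (by norm_num)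
  have hr2a : 1.414 < r2 := by nlinarith
  have hr2b : r2 < 1.415 := by nlinarith
  set t := min (ε/100) (1/100) with htdef
  have ht0 : 0 < t := by
    rw [htdef]; exact lt_min (by linarith) (by norm_num)
  have htu : t ≤ 1/100 := min_le_right _ _
  have htε : 100 * t ≤ ε := by
    have := min_le_left (ε/100) (1/100); rw [← htdef] at this; linarith
  set s : Finset ℝ := {-1, t, 1} with hsdef
  set p : ℝ → ℝ :=
    fun x => if x = -1 then 1/2 - t else if x = t then 1 - r2/2 else r2/2 - 1/2 + t
    with hpdef
  -- basic distinctness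
  have hne1 : t ≠ -1 := by intro h; linarith
  have hne2 : t ≠ 1 := by intro h; linarith
  have hne3 : (-1:ℝ) ≠ 1 := by norm_num
  have hs1 : (-1:ℝ) ∉ ({t, 1} : Finset ℝ) := by
    simp only [Finset.mem_insert, Finset.mem_singleton]
    push_neg
    exact ⟨fun h => hne1 h.symm, by norm_num⟩
  have hs2 : t ∉ ({1} : Finset ℝ) := by
    simp only [Finset.mem_singleton]; exact hne2
  have hsum : ∀ f : ℝ → ℝ, ∑ x ∈ s, f x = f (-1) + f t + f 1 := by
    intro f
    rw [hsdef, Finset.sum_insert hs1, Finset.sum_insert hs2, Finset.sum_singleton]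
    ring
  -- values of p
  have hpa : p (-1) = 1/2 - t := by rw [hpdef]; simp
  have hpb : p t = 1 - r2/2 := by simp [hpdef, hne1]
  have hpc : p 1 = r2/2 - 1/2 + t := by
    have h1 : (1:ℝ) ≠ -1 := by norm_num
    have h2 : (1:ℝ) ≠ t := fun h => hne2 h.symm
    simp [hpdef, h1, h2]
  -- distances
  have d11 : |(-1:ℝ) - (-1)| = 0 := by norm_num
  have d1t : |(-1:ℝ) - t| = 1 + t := by rw [abs_of_nonpos (by linarith)]; ring
  have d13 : |(-1:ℝ) - 1| = 2 := by norm_num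
  have dt1 : |t - (-1)| = 1 + t := by rw [abs_of_nonneg (by linarith)]; ring
  have dtt : |t - t| = 0 := by simp
  have dt3 : |t - 1| = 1 - t := by rw [abs_of_nonpos (by linarith)]; ring
  have d31 : |(1:ℝ) - (-1)| = 2 := by norm_num
  have d3t : |(1:ℝ) - t| = 1 - t := by rw [abs_of_nonneg (by linarith)]
  have d33 : |(1:ℝ) - 1| = 0 := by norm_num
  -- costs
  have hCm : lcost s p (-1) = (1 - r2/2)*(1+t) + (r2/2 - 1/2 + t)*2 := by
    rw [lcost, hsum (fun j => p j * |(-1) - j|)]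
    simp only [hpa, hpb, hpc, d11, d1t, d13]; ring
  have hCt : lcost s p t = (1/2 - t)*(1+t) + (r2/2 - 1/2 + t)*(1-t) := by
    rw [lcost, hsum (fun j => p j * |t - j|)]
    simp only [hpa, hpb, hpc, dt1, dtt, dt3]; ring
  have hC1 : lcost s p 1 = (1/2 - t)*2 + (1 - r2/2)*(1-t) := by
    rw [lcost, hsum (fun j => p j * |1 - j|)]
    simp only [hpa, hpb, hpc, d31, d3t, d33]; ring
  have hCmpos : 0 < lcost s p (-1) := by rw [hCm]; exact aux_pos1 r2 t hr2a ht0 htu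
  have hCtpos : 0 < lcost s p t := by rw [hCt]; exact aux_pos2 r2 t hr2a ht0 htu
  have hC1pos : 0 < lcost s p 1 := by rw [hC1]; exact aux_pos3 r2 t hr2b ht0 htu
  -- votes
  have hvot : ∀ x y : ℝ, lvotes s p x y =
      (if |x - (-1)| < |y - (-1)| then 1/2 - t else 0)
      + (if |x - t| < |y - t| then 1 - r2/2 else 0)
      + (if |x - 1| < |y - 1| then r2/2 - 1/2 + t else 0) := by
    intro x y
    rw [lvotes, Finset.sum_filter,
      hsum (fun j => if |x - j| < |y - j| then p j else 0)]
    simp only [hpa, hpb, hpc]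
  have hv_mt : lvotes s p (-1) t = 1/2 - t := by
    rw [hvot, d11, dt1, d1t, dtt, d13, dt3,
      if_pos (by linarith), if_neg (not_lt.mpr (by linarith)),
      if_neg (not_lt.mpr (by linarith))]
    ring
  have hv_tm : lvotes s p t (-1) = 1/2 + t := by
    rw [hvot, d11, dt1, d1t, dtt, d13, dt3,
      if_neg (not_lt.mpr (by linarith)), if_pos (by linarith),
      if_pos (by linarith)]
    ring
  have hv_m1 : lvotes s p (-1) 1 = 1/2 - t := by
    rw [hvot, d11, d31, d1t, d3t, d13, d33,
      if_pos (by linarith), if_neg (not_lt.mpr (by linarith)),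
      if_neg (not_lt.mpr (by linarith))]
    ring
  have hv_1m : lvotes s p 1 (-1) = 1/2 + t := by
    rw [hvot, d11, d31, d1t, d3t, d13, d33,
      if_neg (not_lt.mpr (by linarith)), if_pos (by linarith),
      if_pos (by linarith)]
    ring
  have hv_t1 : lvotes s p t 1 = 3/2 - r2/2 - t := by
    rw [hvot, dt1, d31, dtt, d3t, dt3, d33,
      if_pos (by linarith), if_pos (by linarith),
      if_neg (not_lt.mpr (by linarith))]
    ring
  have hv_1t : lvotes s p 1 t = r2/2 - 1/2 + t := by
    rw [hvot, dt1, d31, dtt, d3t, dt3, d33,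
      if_neg (not_lt.mpr (by linarith)), if_neg (not_lt.mpr (by linarith)),
      if_pos (by linarith)]
    ring
  -- winners
  have hw_mt : lwin s p (-1) t = t := by
    rw [lwin, hv_mt, if_neg (not_lt.mpr (by linarith))]
  have hw_tm : lwin s p t (-1) = t := by
    rw [lwin, hv_tm, if_pos (by linarith)]
  have hw_m1 : lwin s p (-1) 1 = 1 := by
    rw [lwin, hv_m1, if_neg (not_lt.mpr (by linarith))]
  have hw_1m : lwin s p 1 (-1) = 1 := by
    rw [lwin, hv_1m, if_pos (by linarith)]
  have hw_t1 : lwin s p t 1 = t := by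
    rw [lwin, hv_t1, if_pos (by linarith)]
  have hw_1t : lwin s p 1 t = t := by
    rw [lwin, hv_1t, if_neg (not_lt.mpr (by linarith))]
  -- cost comparisons
  have hct_lt_cm : lcost s p t < lcost s p (-1) := by
    rw [hCt, hCm]; exact aux_lt1 r2 t hr2a hr2b ht0 htu
  have hcm_lt_c1 : lcost s p (-1) < lcost s p 1 := by
    rw [hCm, hC1]; exact aux_lt2 r2 t hr2a hr2b ht0 htu
  have hct_lt_c1 : lcost s p t < lcost s p 1 := hct_lt_cm.trans hcm_lt_c1
  -- optimal candidates
  have ho_mt : lopt s p (-1) t = t := by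
    rw [lopt, if_neg (not_lt.mpr hct_lt_cm.le)]
  have ho_tm : lopt s p t (-1) = t := by rw [lopt, if_pos hct_lt_cm]
  have ho_m1 : lopt s p (-1) 1 = -1 := by rw [lopt, if_pos hcm_lt_c1]
  have ho_1m : lopt s p 1 (-1) = -1 := by
    rw [lopt, if_neg (not_lt.mpr hcm_lt_c1.le)]
  have ho_t1 : lopt s p t 1 = t := by rw [lopt, if_pos hct_lt_c1]
  have ho_1t : lopt s p 1 t = t := by
    rw [lopt, if_neg (not_lt.mpr hct_lt_c1.le)]
  -- distortion ratios
  have hr_dm : lr s p (-1) (-1) = 1 := by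
    rw [lr, lwin, lopt, ite_self, ite_self, div_self hCmpos.ne']
  have hr_dt : lr s p t t = 1 := by
    rw [lr, lwin, lopt, ite_self, ite_self, div_self hCtpos.ne']
  have hr_d1 : lr s p 1 1 = 1 := by
    rw [lr, lwin, lopt, ite_self, ite_self, div_self hC1pos.ne']
  have hr_mt : lr s p (-1) t = 1 := by
    rw [lr, hw_mt, ho_mt, div_self hCtpos.ne']
  have hr_tm : lr s p t (-1) = 1 := by
    rw [lr, hw_tm, ho_tm, div_self hCtpos.ne']
  have hr_t1 : lr s p t 1 = 1 := by
    rw [lr, hw_t1, ho_t1, div_self hCtpos.ne']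
  have hr_1t : lr s p 1 t = 1 := by
    rw [lr, hw_1t, ho_1t, div_self hCtpos.ne']
  have hr_m1 : lr s p (-1) 1 = lcost s p 1 / lcost s p (-1) := by
    rw [lr, hw_m1, ho_m1]
  have hr_1m : lr s p 1 (-1) = lcost s p 1 / lcost s p (-1) := by
    rw [lr, hw_1m, ho_1m]
  refine ⟨s, p, ?_, ?_, ?_, ?_, ?_, ?_⟩
  · -- positivity of p
    intro x hx
    rw [hsdef] at hx
    simp only [Finset.mem_insert, Finset.mem_singleton] at hx
    rcases hx with rfl | rfl | rfl
    · rw [hpa]; linarith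
    · rw [hpb]; linarith
    · rw [hpc]; linarith
  · -- sums to 1
    rw [hsum p, hpa, hpb, hpc]; ring
  · -- unique median
    have hmed : ∀ m : ℝ,
        (∑ j ∈ s.filter (fun j => j < m), p j)
          = (if (-1:ℝ) < m then 1/2 - t else 0) + (if t < m then 1 - r2/2 else 0)
            + (if (1:ℝ) < m then r2/2 - 1/2 + t else 0) := by
      intro m
      rw [Finset.sum_filter, hsum (fun j => if j < m then p j else 0)]
      simp only [hpa, hpb, hpc]
    have hmed' : ∀ m : ℝ,
        (∑ j ∈ s.filter (fun j => m < j), p j)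
          = (if m < (-1:ℝ) then 1/2 - t else 0) + (if m < t then 1 - r2/2 else 0)
            + (if m < (1:ℝ) then r2/2 - 1/2 + t else 0) := by
      intro m
      rw [Finset.sum_filter, hsum (fun j => if m < j then p j else 0)]
      simp only [hpa, hpb, hpc]
    refine ⟨t, ⟨?_, ?_, ?_⟩, ?_⟩
    · rw [hsdef]; simp
    · rw [hmed, if_pos (by linarith), if_neg (not_lt.mpr le_rfl),
        if_neg (not_lt.mpr (by linarith))]
      linarith
    · rw [hmed', if_neg (not_lt.mpr (by linarith)), if_neg (not_lt.mpr le_rfl),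
        if_pos (by linarith)]
      linarith
    · rintro m ⟨hm, hlow, hhigh⟩
      rw [hsdef] at hm
      simp only [Finset.mem_insert, Finset.mem_singleton] at hm
      rcases hm with rfl | rfl | rfl
      · exfalso
        rw [hmed', if_neg (not_lt.mpr le_rfl), if_pos (by linarith),
          if_pos (by linarith)] at hhigh
        linarith
      · rfl
      · exfalso
        rw [hmed, if_pos (by linarith), if_pos (by linarith),
          if_neg (not_lt.mpr le_rfl)] at hlow
        linarith
  · -- no voter ties
    intro j hj x hx y hy hxy h
    rcases abs_eq_abs.mp h with h' | h'
    · exact hxy (by linarith)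
    · rw [hsdef] at hj hx hy
      simp only [Finset.mem_insert, Finset.mem_singleton] at hj hx hy
      rcases hj with rfl | rfl | rfl <;> rcases hx with rfl | rfl | rfl <;>
        rcases hy with rfl | rfl | rfl <;>
        first
          | exact hxy rfl
          | linarith
  · -- strict majority
    intro x hx y hy hxy
    rw [hsdef] at hx hy
    simp only [Finset.mem_insert, Finset.mem_singleton] at hx hy
    rcases hx with rfl | rfl | rfl <;> rcases hy with rfl | rfl | rfl <;>
      first
        | exact absurd rfl hxy
        | (rw [hv_mt]; intro hq; linarith)
        | (rw [hv_tm]; intro hq; linarith)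
        | (rw [hv_m1]; intro hq; linarith)
        | (rw [hv_1m]; intro hq; linarith)
        | (rw [hv_t1]; intro hq; linarith)
        | (rw [hv_1t]; intro hq; linarith)
  · -- the distortion bound
    have hrm' : 0 < (1 - r2/2)*(1+t) + (r2/2 - 1/2 + t)*2 := aux_pos1 r2 t hr2a ht0 htu
    have hratio : 2*r2 - 1 - 10*t ≤ lcost s p 1 / lcost s p (-1) := by
      rw [hCm, hC1, le_div_iff₀ hrm']
      exact aux_ratio r2 t hr2sq hr2a hr2b ht0 htu
    have hexp : lsocial s p p =
        (1/2 - t)*(1/2 - t) + (1/2 - t)*(1 - r2/2)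
        + (1 - r2/2)*(1/2 - t) + (1 - r2/2)*(1 - r2/2)
        + (1 - r2/2)*(r2/2 - 1/2 + t) + (r2/2 - 1/2 + t)*(1 - r2/2)
        + (r2/2 - 1/2 + t)*(r2/2 - 1/2 + t)
        + ((1/2 - t)*(r2/2 - 1/2 + t) + (r2/2 - 1/2 + t)*(1/2 - t))
            * (lcost s p 1 / lcost s p (-1)) := by
      rw [lsocial, hsum (fun x => ∑ y ∈ s, p x * p y * lr s p x y)]
      rw [hsum (fun y => p (-1) * p y * lr s p (-1) y)]
      rw [hsum (fun y => p t * p y * lr s p t y)]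
      rw [hsum (fun y => p 1 * p y * lr s p 1 y)]
      rw [hpa, hpb, hpc, hr_dm, hr_dt, hr_d1, hr_mt, hr_tm, hr_t1, hr_1t,
        hr_m1, hr_1m]
      ring
    rw [hexp]
    have hcoef : 0 ≤ (1/2 - t)*(r2/2 - 1/2 + t) + (r2/2 - 1/2 + t)*(1/2 - t) :=
      aux_coef r2 t hr2a ht0 htu
    have hmul : ((1/2 - t)*(r2/2 - 1/2 + t) + (r2/2 - 1/2 + t)*(1/2 - t))
        * (2*r2 - 1 - 10*t)
        ≤ ((1/2 - t)*(r2/2 - 1/2 + t) + (r2/2 - 1/2 + t)*(1/2 - t))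
          * (lcost s p 1 / lcost s p (-1)) :=
      mul_le_mul_of_nonneg_left hratio hcoef
    have hfin := aux_final r2 t hr2sq hr2a hr2b ht0 htu
    linarith only [hmul, hfin, htε]
end

section
/- Let p be a finitely supported probability distribution on ℝ serving as both candidate and voter distribution, with a unique median m (the mass strictly left of m and the mass strictly right of m are each strictly less than 1/2), and assume no voter location is equidistant from two distinct support points. Then in any election between two candidates at distinct support points x and y with |x − m| < |y − m|, the candidate at x receives strictly more than half of the voter mass and wins. -/
open Finset

private lemma pref_iff_lt (x y j : ℝ) (hxy : x < y) :
    |x - j| < |y - j| ↔ j < (x + y) / 2 := by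
  rcases abs_cases (x - j) with ⟨h1, h2⟩ | ⟨h1, h2⟩ <;>
    rcases abs_cases (y - j) with ⟨h3, h4⟩ | ⟨h3, h4⟩ <;>
    constructor <;> intro h <;> nlinarith

private lemma pref_iff_gt (x y j : ℝ) (hxy : y < x) :
    |x - j| < |y - j| ↔ (x + y) / 2 < j := by
  rcases abs_cases (x - j) with ⟨h1, h2⟩ | ⟨h1, h2⟩ <;>
    rcases abs_cases (y - j) with ⟨h3, h4⟩ | ⟨h3, h4⟩ <;>
    constructor <;> intro h <;> nlinarith

/-- with a unique median `m` and no voter ties, in an election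
between two distinct support points `x` and `y` with `|x - m| < |y - m|`,
the candidate at `x` gets strictly more than half of the voter mass and wins. -/
theorem closer_to_median_wins (s : Finset ℝ) (p : ℝ → ℝ)
    (hpos : ∀ x ∈ s, 0 < p x) (hsum : ∑ x ∈ s, p x = 1)
    (m : ℝ) (hm : IsMedian s p m) (hmedian : ∃! m', IsMedian s p m')
    (hties : NoVoterTies s)
    (x y : ℝ) (hx : x ∈ s) (hy : y ∈ s) (hxy : x ≠ y)
    (hcloser : |x - m| < |y - m|) :
    1/2 < lvotes s p x y ∧ lwin s p x y = x := by
  have hvotes : 1/2 < lvotes s p x y := by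
    rcases lt_or_gt_of_ne hxy with hlt | hgt
    · -- x < y : everyone with j ≤ m votes for x
      have hmc : m < (x + y) / 2 := (pref_iff_lt x y m hlt).mp hcloser
      have hsub : s.filter (fun j => ¬ m < j) ⊆ s.filter (fun j => |x - j| < |y - j|) := by
        intro j hj
        simp only [Finset.mem_filter, not_lt] at hj ⊢
        exact ⟨hj.1, (pref_iff_lt x y j hlt).mpr (lt_of_le_of_lt hj.2 hmc)⟩
      have hle : ∑ j ∈ s.filter (fun j => ¬ m < j), p j ≤ lvotes s p x y :=
        Finset.sum_le_sum_of_subset_of_nonneg hsub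
          (fun j hj _ => (hpos j (Finset.mem_filter.mp hj).1).le)
      have hsplit : (∑ j ∈ s.filter (fun j => m < j), p j)
          + ∑ j ∈ s.filter (fun j => ¬ m < j), p j = 1 := by
        rw [Finset.sum_filter_add_sum_filter_not]; exact hsum
      have := hm.2.2
      linarith
    · -- y < x : everyone with m ≤ j votes for x
      have hmc : (x + y) / 2 < m := (pref_iff_gt x y m hgt).mp hcloser
      have hsub : s.filter (fun j => ¬ j < m) ⊆ s.filter (fun j => |x - j| < |y - j|) := by
        intro j hj
        simp only [Finset.mem_filter, not_lt] at hj ⊢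
        exact ⟨hj.1, (pref_iff_gt x y j hgt).mpr (lt_of_lt_of_le hmc hj.2)⟩
      have hle : ∑ j ∈ s.filter (fun j => ¬ j < m), p j ≤ lvotes s p x y :=
        Finset.sum_le_sum_of_subset_of_nonneg hsub
          (fun j hj _ => (hpos j (Finset.mem_filter.mp hj).1).le)
      have hsplit : (∑ j ∈ s.filter (fun j => j < m), p j)
          + ∑ j ∈ s.filter (fun j => ¬ j < m), p j = 1 := by
        rw [Finset.sum_filter_add_sum_filter_not]; exact hsum
      have := hm.2.1
      linarith
  exact ⟨hvotes, if_pos hvotes⟩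
end

section
/- Let p be a finitely supported probability distribution on ℝ serving as both candidate and voter distribution, in general position with unique median m; let L be the set of support points strictly left of m and R the set strictly right of m. Then the expected distortion satisfies Social(p,p) = 1 + 2·∑_{x ∈ L, y ∈ R} p(x)·p(y)·(r(x,y) − 1), where r(x,y) = cost(W(x,y))/cost(opt(x,y)). In particular, every election in which both candidates lie on the same side of the median (including the median itself) sel1ects the candidate of smaller social cost. -/
open Finset

lemma lcost_pos (s : Finset ℝ) (p : ℝ → ℝ) (hpos : ∀ x ∈ s, 0 < p x)
    (hcard : 1 < s.card) (x : ℝ) : 0 < lcost s p x := by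
  obtain ⟨a, ha, b, hb, hab⟩ := Finset.one_lt_card.mp hcard
  obtain ⟨j, hj, hjx⟩ : ∃ j ∈ s, j ≠ x := by
    by_cases h : a = x
    · exact ⟨b, hb, fun e => hab (h.trans e.symm)⟩
    · exact ⟨a, ha, h⟩
  have h1 : 0 < p j * |x - j| :=
    mul_pos (hpos j hj) (abs_pos.mpr (sub_ne_zero.mpr (Ne.symm hjx)))
  calc (0:ℝ) < p j * |x - j| := h1
    _ ≤ ∑ i ∈ s, p i * |x - i| :=
        Finset.single_le_sum (fun i hi => mul_nonneg (hpos i hi).le (abs_nonneg _)) hj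

lemma lvotes_add (s : Finset ℝ) (p : ℝ → ℝ) (hsum : ∑ x ∈ s, p x = 1)
    (hties : NoVoterTies s) (x : ℝ) (hx : x ∈ s) (y : ℝ) (hy : y ∈ s) (hxy : x ≠ y) :
    lvotes s p x y + lvotes s p y x = 1 := by
  have h2 : lvotes s p y x = ∑ j ∈ s.filter (fun j => ¬ |x - j| < |y - j|), p j := by
    unfold lvotes
    congr 1
    apply Finset.filter_congr
    intro j hj
    have hne := hties j hj x hx y hy hxy
    constructor
    · intro h; exact not_lt.mpr h.le
    · intro h; exact lt_of_le_of_ne (not_lt.mp h) (Ne.symm hne)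
  rw [h2]
  unfold lvotes
  rw [Finset.sum_filter_add_sum_filter_not]
  exact hsum
lemma cost_left (s : Finset ℝ) (p : ℝ → ℝ) (hpos : ∀ x ∈ s, 0 < p x)
    (hsum : ∑ x ∈ s, p x = 1) (m : ℝ)
    (hml : (∑ j ∈ s.filter (fun j => j < m), p j) < 1/2)
    (x y : ℝ) (hxy : x < y) (hym : y ≤ m) :
    lcost s p y < lcost s p x := by
  set S := ∑ j ∈ s.filter (fun j => j < y), p j with hS
  have hS2 : S < 1/2 := by
    refine lt_of_le_of_lt (Finset.sum_le_sum_of_subset_of_nonneg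
      (Finset.monotone_filter_right s (fun j _ (h : j < y) => lt_of_lt_of_le h hym))
      (fun i hi _ => (hpos i (Finset.mem_filter.mp hi).1).le) ) hml
  have hcompl : ∑ j ∈ s.filter (fun j => ¬ j < y), p j = 1 - S := by
    have := Finset.sum_filter_add_sum_filter_not s (fun j => j < y) p
    rw [hsum] at this; linarith
  have key : (∑ j ∈ s, if j < y then p j * (x - y) else p j * (y - x))
      ≤ lcost s p x - lcost s p y := by
    unfold lcost
    rw [← Finset.sum_sub_distrib]
    apply Finset.sum_le_sum
    intro j hj
    rw [← mul_sub]
    split_ifs with h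
    · have h1 : |y - j| - |x - j| ≤ |y - x| := by
        have := abs_sub_abs_le_abs_sub (y - j) (x - j)
        have : |y - j - (x - j)| = |y - x| := by ring_nf
        linarith [abs_sub_abs_le_abs_sub (y - j) (x - j)]
      have h2 : |y - x| = y - x := abs_of_pos (by linarith)
      have := hpos j hj
      nlinarith [abs_sub_abs_le_abs_sub (y - j) (x - j), abs_of_pos (show (0:ℝ) < y - x by linarith)]
    · push_neg at h
      have h1 : |x - j| = j - x := by rw [abs_of_nonpos (by linarith)]; ring
      have h2 : |y - j| = j - y := by rw [abs_of_nonpos (by linarith)]; ring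
      rw [h1, h2]
      have := hpos j hj
      nlinarith
  have hsplit : (∑ j ∈ s, if j < y then p j * (x - y) else p j * (y - x))
      = (x - y) * S + (y - x) * (1 - S) := by
    rw [Finset.sum_ite, ← Finset.sum_mul, ← Finset.sum_mul, hcompl, ← hS]
    ring
  nlinarith [key, hsplit]
lemma cost_right (s : Finset ℝ) (p : ℝ → ℝ) (hpos : ∀ x ∈ s, 0 < p x)
    (hsum : ∑ x ∈ s, p x = 1) (m : ℝ)
    (hmr : (∑ j ∈ s.filter (fun j => m < j), p j) < 1/2)
    (x y : ℝ) (hxy : x < y) (hxm : m ≤ x) :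
    lcost s p x < lcost s p y := by
  set S := ∑ j ∈ s.filter (fun j => x < j), p j with hS
  have hS2 : S < 1/2 := by
    refine lt_of_le_of_lt (Finset.sum_le_sum_of_subset_of_nonneg
      (Finset.monotone_filter_right s (fun j _ (h : x < j) => lt_of_le_of_lt hxm h))
      (fun i hi _ => (hpos i (Finset.mem_filter.mp hi).1).le) ) hmr
  have hcompl : ∑ j ∈ s.filter (fun j => ¬ x < j), p j = 1 - S := by
    have := Finset.sum_filter_add_sum_filter_not s (fun j => x < j) p
    rw [hsum] at this; linarith
  have key : (∑ j ∈ s, if x < j then p j * (x - y) else p j * (y - x))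
      ≤ lcost s p y - lcost s p x := by
    unfold lcost
    rw [← Finset.sum_sub_distrib]
    apply Finset.sum_le_sum
    intro j hj
    rw [← mul_sub]
    split_ifs with h
    · have hp := hpos j hj
      have t := abs_sub_abs_le_abs_sub (x - j) (y - j)
      have e : x - j - (y - j) = x - y := by ring
      rw [e] at t
      have h1 : x - y ≤ |y - j| - |x - j| := by
        linarith [abs_of_neg (show x - y < (0:ℝ) by linarith)]
      nlinarith [mul_le_mul_of_nonneg_left h1 hp.le]
    · push_neg at h
      have h1 : |x - j| = x - j := abs_of_nonneg (by linarith)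
      have h2 : |y - j| = y - j := abs_of_nonneg (by linarith)
      rw [h1, h2]
      have := hpos j hj
      nlinarith
  have hsplit : (∑ j ∈ s, if x < j then p j * (x - y) else p j * (y - x))
      = (x - y) * S + (y - x) * (1 - S) := by
    rw [Finset.sum_ite, ← Finset.sum_mul, ← Finset.sum_mul, hcompl, ← hS]
    ring
  nlinarith [key, hsplit]

lemma votes_left (s : Finset ℝ) (p : ℝ → ℝ) (hpos : ∀ x ∈ s, 0 < p x)
    (m : ℝ) (hml : (∑ j ∈ s.filter (fun j => j < m), p j) < 1/2)
    (x y : ℝ) (hxy : x < y) (hym : y ≤ m) :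
    lvotes s p x y < 1/2 := by
  unfold lvotes
  refine lt_of_le_of_lt (Finset.sum_le_sum_of_subset_of_nonneg ?_ 
    (fun i hi _ => (hpos i (Finset.mem_filter.mp hi).1).le)) hml
  intro j hj
  rw [Finset.mem_filter] at hj ⊢
  refine ⟨hj.1, ?_⟩
  have h := hj.2
  have := mul_self_lt_mul_self (abs_nonneg (x - j)) h
  rw [abs_mul_abs_self, abs_mul_abs_self] at this
  nlinarith

lemma votes_right (s : Finset ℝ) (p : ℝ → ℝ) (hpos : ∀ x ∈ s, 0 < p x)
    (m : ℝ) (hmr : (∑ j ∈ s.filter (fun j => m < j), p j) < 1/2)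
    (x y : ℝ) (hxy : x < y) (hxm : m ≤ x) :
    lvotes s p y x < 1/2 := by
  unfold lvotes
  refine lt_of_le_of_lt (Finset.sum_le_sum_of_subset_of_nonneg ?_ 
    (fun i hi _ => (hpos i (Finset.mem_filter.mp hi).1).le)) hmr
  intro j hj
  rw [Finset.mem_filter] at hj ⊢
  refine ⟨hj.1, ?_⟩
  have h := hj.2
  have := mul_self_lt_mul_self (abs_nonneg (y - j)) h
  rw [abs_mul_abs_self, abs_mul_abs_self] at this
  nlinarith
lemma same_side (s : Finset ℝ) (p : ℝ → ℝ) (hpos : ∀ x ∈ s, 0 < p x)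
    (hsum : ∑ x ∈ s, p x = 1) (m : ℝ)
    (hml : (∑ j ∈ s.filter (fun j => j < m), p j) < 1/2)
    (hmr : (∑ j ∈ s.filter (fun j => m < j), p j) < 1/2)
    (hties : NoVoterTies s)
    (x : ℝ) (hx : x ∈ s) (y : ℝ) (hy : y ∈ s)
    (h : (x ≤ m ∧ y ≤ m) ∨ (m ≤ x ∧ m ≤ y)) :
    lwin s p x y = lopt s p x y := by
  rcases eq_or_ne x y with rfl | hne
  · unfold lwin lopt; split_ifs <;> rfl
  rcases h with ⟨hxm, hym⟩ | ⟨hxm, hym⟩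
  · rcases hne.lt_or_gt with hlt | hlt
    · have hc := cost_left s p hpos hsum m hml x y hlt hym
      have hv := votes_left s p hpos m hml x y hlt hym
      unfold lwin lopt
      rw [if_neg (not_lt.mpr hv.le), if_neg (not_lt.mpr hc.le)]
    · have hc := cost_left s p hpos hsum m hml y x hlt hxm
      have hv := votes_left s p hpos m hml y x hlt hxm
      have hadd := lvotes_add s p hsum hties y hy x hx hne.symm
      unfold lwin lopt
      rw [if_pos (by linarith), if_pos hc]
  · rcases hne.lt_or_gt with hlt | hlt
    · have hc := cost_right s p hpos hsum m hmr x y hlt hxm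
      have hv := votes_right s p hpos m hmr x y hlt hxm
      have hadd := lvotes_add s p hsum hties y hy x hx hne.symm
      unfold lwin lopt
      rw [if_pos (by linarith), if_pos hc]
    · have hc := cost_right s p hpos hsum m hmr y x hlt hym
      have hv := votes_right s p hpos m hmr y x hlt hym
      unfold lwin lopt
      rw [if_neg (not_lt.mpr hv.le), if_neg (not_lt.mpr hc.le)]

lemma lr_symm (s : Finset ℝ) (p : ℝ → ℝ) (hsum : ∑ x ∈ s, p x = 1)
    (hties : NoVoterTies s) (hmaj : StrictMajority s p)
    (x : ℝ) (hx : x ∈ s) (y : ℝ) (hy : y ∈ s) :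
    lr s p x y = lr s p y x := by
  rcases eq_or_ne x y with rfl | hne
  · rfl
  have hadd := lvotes_add s p hsum hties x hx y hy hne
  have hne2 := hmaj x hx y hy hne
  have hw : lwin s p x y = lwin s p y x := by
    unfold lwin
    rcases lt_or_gt_of_ne hne2 with h | h
    · rw [if_neg (not_lt.mpr h.le), if_pos (by linarith)]
    · rw [if_pos h, if_neg (not_lt.mpr (by linarith : lvotes s p y x ≤ 1/2))]
  have ho : lcost s p (lopt s p x y) = lcost s p (lopt s p y x) := by
    unfold lopt
    rcases lt_trichotomy (lcost s p x) (lcost s p y) with h | h | h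
    · rw [if_pos h, if_neg (not_lt.mpr h.le)]
    · rw [if_neg (by rw [h]; exact lt_irrefl _), if_neg (by rw [h]; exact lt_irrefl _)]
      exact h.symm
    · rw [if_neg (not_lt.mpr h.le), if_pos h]
  unfold lr
  rw [hw, ho]

/-- with `L` and `R` the support points strictly left and right of
the unique median `m`, the expected distortion decomposes as
`Social(p,p) = 1 + 2 ∑_{x ∈ L, y ∈ R} p x · p y · (r(x,y) - 1)`; in particular
every election whose two candidates lie on the same side of the median (possibly
including the median itself) selects the candidate of smaller social cost. -/
theorem social_decomposition (s : Finset ℝ) (p : ℝ → ℝ)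
    (hpos : ∀ x ∈ s, 0 < p x) (hsum : ∑ x ∈ s, p x = 1)
    (hcard : 1 < s.card)
    (m : ℝ) (hm : IsMedian s p m) (hmedian : ∃! m', IsMedian s p m')
    (hties : NoVoterTies s)
    (hmaj : StrictMajority s p) :
    (lsocial s p p =
      1 + 2 * ∑ x ∈ s.filter (fun x => x < m), ∑ y ∈ s.filter (fun y => m < y),
            p x * p y * (lr s p x y - 1)) ∧
    (∀ x ∈ s, ∀ y ∈ s, ((x ≤ m ∧ y ≤ m) ∨ (m ≤ x ∧ m ≤ y)) →
      lwin s p x y = lopt s p x y) := by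
  obtain ⟨hms, hml, hmr⟩ := hm
  have part2 : ∀ x ∈ s, ∀ y ∈ s, ((x ≤ m ∧ y ≤ m) ∨ (m ≤ x ∧ m ≤ y)) →
      lwin s p x y = lopt s p x y :=
    fun x hx y hy h => same_side s p hpos hsum m hml hmr hties x hx y hy h
  refine ⟨?_, part2⟩
  have hcpos : ∀ z : ℝ, 0 < lcost s p z := lcost_pos s p hpos hcard
  have hr1 : ∀ x ∈ s, ∀ y ∈ s, ((x ≤ m ∧ y ≤ m) ∨ (m ≤ x ∧ m ≤ y)) → lr s p x y = 1 := by
    intro x hx y hy h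
    unfold lr
    rw [part2 x hx y hy h]
    exact div_self (ne_of_gt (hcpos _))
  set f : ℝ → ℝ → ℝ := fun x y => p x * p y * (lr s p x y - 1) with hf
  have hvan : ∀ x ∈ s, ∀ y ∈ s, ((x ≤ m ∧ y ≤ m) ∨ (m ≤ x ∧ m ≤ y)) → f x y = 0 := by
    intro x hx y hy h
    simp only [hf, hr1 x hx y hy h, sub_self, mul_zero]
  set A := s.filter (fun x => x < m) with hA
  set B := s.filter (fun y => m < y) with hB
  have hsplit1 : lsocial s p p = 1 + ∑ x ∈ s, ∑ y ∈ s, f x y := by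
    unfold lsocial
    calc ∑ x ∈ s, ∑ y ∈ s, p x * p y * lr s p x y
        = ∑ x ∈ s, ∑ y ∈ s, (p x * p y + f x y) := by
          refine Finset.sum_congr rfl fun x hx => Finset.sum_congr rfl fun y hy => ?_
          simp only [hf]; ring
      _ = (∑ x ∈ s, ∑ y ∈ s, p x * p y) + ∑ x ∈ s, ∑ y ∈ s, f x y := by
          rw [← Finset.sum_add_distrib]
          exact Finset.sum_congr rfl fun x hx => Finset.sum_add_distrib
      _ = 1 + ∑ x ∈ s, ∑ y ∈ s, f x y := by
          rw [← Finset.sum_mul_sum, hsum, mul_one]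
  have inner1 : ∀ x ∈ A, ∑ y ∈ s, f x y = ∑ y ∈ B, f x y := by
    intro x hxA
    rw [hA] at hxA
    obtain ⟨hxs, hxm⟩ := Finset.mem_filter.mp hxA
    rw [hB, Finset.sum_filter]
    refine Finset.sum_congr rfl fun y hy => ?_
    by_cases h : m < y
    · rw [if_pos h]
    · rw [if_neg h]
      exact hvan x hxs y hy (Or.inl ⟨hxm.le, not_lt.mp h⟩)
  have inner2 : ∀ x ∈ s.filter (fun x => ¬ x < m), ∑ y ∈ s, f x y = ∑ y ∈ A, f x y := by
    intro x hxC
    obtain ⟨hxs, hxm⟩ := Finset.mem_filter.mp hxC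
    rw [hA, Finset.sum_filter]
    refine Finset.sum_congr rfl fun y hy => ?_
    by_cases h : y < m
    · rw [if_pos h]
    · rw [if_neg h]
      exact hvan x hxs y hy (Or.inr ⟨not_lt.mp hxm, not_lt.mp h⟩)
  have hT : ∑ x ∈ s, ∑ y ∈ s, f x y
      = (∑ x ∈ A, ∑ y ∈ B, f x y) + ∑ x ∈ s.filter (fun x => ¬ x < m), ∑ y ∈ A, f x y := by
    rw [← Finset.sum_filter_add_sum_filter_not s (fun x => x < m) (fun x => ∑ y ∈ s, f x y)]
    congr 1
    · exact Finset.sum_congr rfl inner1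
    · exact Finset.sum_congr rfl inner2
  have hC : ∑ x ∈ s.filter (fun x => ¬ x < m), (∑ y ∈ A, f x y) = ∑ x ∈ B, ∑ y ∈ A, f x y := by
    symm
    refine Finset.sum_subset ?_ ?_
    · rw [hB]
      intro x hx
      obtain ⟨hxs, hxm⟩ := Finset.mem_filter.mp hx
      exact Finset.mem_filter.mpr ⟨hxs, not_lt.mpr hxm.le⟩
    · intro x hx hxB
      obtain ⟨hxs, hxm⟩ := Finset.mem_filter.mp hx
      have hxm2 : ¬ m < x := fun h => hxB (Finset.mem_filter.mpr ⟨hxs, h⟩)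
      have hxe : x = m := le_antisymm (not_lt.mp hxm2) (not_lt.mp hxm)
      refine Finset.sum_eq_zero fun y hyA => ?_
      obtain ⟨hys, hym⟩ := Finset.mem_filter.mp hyA
      exact hvan x hxs y hys (Or.inl ⟨hxe.le, hym.le⟩)
  have hsym : ∑ x ∈ B, ∑ y ∈ A, f x y = ∑ x ∈ A, ∑ y ∈ B, f x y := by
    rw [Finset.sum_comm]
    refine Finset.sum_congr rfl fun a haA => Finset.sum_congr rfl fun b hbB => ?_
    obtain ⟨has, _⟩ := Finset.mem_filter.mp haA
    obtain ⟨hbs, _⟩ := Finset.mem_filter.mp hbB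
    simp only [hf]
    rw [lr_symm s p hsum hties hmaj b hbs a has]
    ring
  rw [hsplit1, hT, hC, hsym]
  ring
end

section
/- Let p be a finitely supported probability distribution on ℝ in general position (unique median m, no voter ties, strict majority winners), serving as both candidate and voter distribution; let R be the set of support points strictly right of m. Define r(y) = ∑_j p(j)·r(y,j), the expected distortion of an election between y and a random opponent drawn from p, and let y* ∈ R maximize r(y) over R. Let p' be the distribution obtained from p by moving all probability mass located at points strictly greater than y* onto the point y*. Then Social(p',p') ≥ Social(p,p). (Symmetrically, the analogous operation on the left side with x* = argmax over L of r(x) does not decrease the distortion.) -/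
open Finset

/-- Expected distortion of an election between a fixed candidate `x` and a random
opponent drawn from the voter/candidate distribution `q`. -/
noncomputable def lrbar (s : Finset ℝ) (q : ℝ → ℝ) (x : ℝ) : ℝ :=
  ∑ j ∈ s, q j * lr s q x j


lemma mwr_cost_pos (s : Finset ℝ) (p : ℝ → ℝ) (hpos : ∀ x ∈ s, 0 < p x)
    (a b : ℝ) (ha : a ∈ s) (hb : b ∈ s) (hab : a ≠ b) (x : ℝ) :
    0 < lcost s p x := by
  have key : ∀ c ∈ s, c ≠ x → 0 < lcost s p x := by
    intro c hc hcx
    have h1 : 0 < p c * |x - c| :=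
      mul_pos (hpos c hc) (abs_pos.mpr (sub_ne_zero.mpr (Ne.symm hcx)))
    exact lt_of_lt_of_le h1
      (Finset.single_le_sum (fun j hj => mul_nonneg (hpos j hj).le (abs_nonneg _)) hc)
  rcases eq_or_ne a x with rfl | h
  · exact key b hb (fun h => hab h.symm)
  · exact key a ha h

lemma mwr_win_mem (s : Finset ℝ) (q : ℝ → ℝ) (x y : ℝ) :
    lwin s q x y = x ∨ lwin s q x y = y := by
  unfold lwin; split <;> simp

lemma mwr_opt_le (s : Finset ℝ) (q : ℝ → ℝ) (x y : ℝ) :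
    lcost s q (lopt s q x y) ≤ lcost s q x ∧ lcost s q (lopt s q x y) ≤ lcost s q y := by
  unfold lopt
  split
  · next h => exact ⟨le_refl _, h.le⟩
  · next h => exact ⟨not_lt.mp h, le_refl _⟩

lemma mwr_opt_le_win (s : Finset ℝ) (q : ℝ → ℝ) (x y : ℝ) :
    lcost s q (lopt s q x y) ≤ lcost s q (lwin s q x y) := by
  rcases mwr_win_mem s q x y with h | h <;> rw [h]
  · exact (mwr_opt_le s q x y).1
  · exact (mwr_opt_le s q x y).2

lemma mwr_lr_ge_one (s : Finset ℝ) (q : ℝ → ℝ) (x y : ℝ)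
    (h : 0 < lcost s q (lopt s q x y)) : 1 ≤ lr s q x y := by
  unfold lr
  rw [le_div_iff₀ h, one_mul]
  exact mwr_opt_le_win s q x y

lemma mwr_lr_self (s : Finset ℝ) (q : ℝ → ℝ) (x : ℝ) (h : 0 < lcost s q x) :
    lr s q x x = 1 := by
  have hw : lwin s q x x = x := by unfold lwin; split <;> rfl
  have ho : lopt s q x x = x := by unfold lopt; split <;> rfl
  unfold lr; rw [hw, ho, div_self h.ne']

lemma mwr_votes_compl (s : Finset ℝ) (p : ℝ → ℝ) (hsum : ∑ x ∈ s, p x = 1)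
    (hties : NoVoterTies s) (x y : ℝ) (hx : x ∈ s) (hy : y ∈ s) (hxy : x ≠ y) :
    lvotes s p x y + lvotes s p y x = 1 := by
  unfold lvotes
  rw [← hsum, ← Finset.sum_filter_add_sum_filter_not s (fun j => |x - j| < |y - j|) p]
  congr 1
  apply Finset.sum_congr _ (fun _ _ => rfl)
  apply Finset.filter_congr
  intro j hj
  simp only [not_lt]
  constructor
  · exact fun h => h.le
  · intro h
    exact lt_of_le_of_ne h (Ne.symm (hties j hj x hx y hy hxy))

lemma mwr_win_symm (s : Finset ℝ) (p : ℝ → ℝ) (hsum : ∑ x ∈ s, p x = 1)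
    (hties : NoVoterTies s) (hmaj : StrictMajority s p)
    (x y : ℝ) (hx : x ∈ s) (hy : y ∈ s) (hxy : x ≠ y) :
    lwin s p x y = lwin s p y x := by
  have hc := mwr_votes_compl s p hsum hties x y hx hy hxy
  have hne := hmaj x hx y hy hxy
  unfold lwin
  rcases lt_or_gt_of_ne hne with h | h
  · rw [if_neg (by linarith), if_pos (by linarith)]
  · rw [if_pos h, if_neg (by linarith)]

lemma mwr_opt_cost_symm (s : Finset ℝ) (q : ℝ → ℝ) (x y : ℝ) :
    lcost s q (lopt s q x y) = lcost s q (lopt s q y x) := by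
  unfold lopt
  rcases lt_trichotomy (lcost s q x) (lcost s q y) with h | h | h
  · rw [if_pos h, if_neg (by linarith)]
  · rw [if_neg (by linarith), if_neg (by linarith)]; exact h.symm
  · rw [if_neg (by linarith), if_pos h]

lemma mwr_lr_symm (s : Finset ℝ) (p : ℝ → ℝ) (hsum : ∑ x ∈ s, p x = 1)
    (hties : NoVoterTies s) (hmaj : StrictMajority s p)
    (x y : ℝ) (hx : x ∈ s) (hy : y ∈ s) (hxy : x ≠ y) :
    lr s p x y = lr s p y x := by
  unfold lr
  rw [mwr_win_symm s p hsum hties hmaj x y hx hy hxy, mwr_opt_cost_symm s p x y]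


lemma mwr_left_mass (s : Finset ℝ) (p : ℝ → ℝ) (hsum : ∑ x ∈ s, p x = 1)
    (m : ℝ) (hmr : (∑ j ∈ s.filter (fun j => m < j), p j) < 1/2) :
    1/2 < ∑ j ∈ s.filter (fun j => j ≤ m), p j := by
  have h := Finset.sum_filter_add_sum_filter_not s (fun j => m < j) p
  have he : s.filter (fun j => ¬ m < j) = s.filter (fun j => j ≤ m) := by
    apply Finset.filter_congr; intro j _; simp [not_lt]
  rw [he, hsum] at h
  linarith

lemma mwr_cost_mono (s : Finset ℝ) (p : ℝ → ℝ) (hpos : ∀ x ∈ s, 0 < p x)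
    (hsum : ∑ x ∈ s, p x = 1)
    (m : ℝ) (hmr : (∑ j ∈ s.filter (fun j => m < j), p j) < 1/2)
    (a b : ℝ) (hma : m < a) (hab : a < b) :
    lcost s p a ≤ lcost s p b := by
  have hd : 0 < b - a := by linarith
  have key : ∀ j ∈ s, p j * (if j ≤ m then (b - a) else -(b - a)) ≤
      p j * |b - j| - p j * |a - j| := by
    intro j hj
    rw [← mul_sub]
    apply mul_le_mul_of_nonneg_left _ (hpos j hj).le
    split
    · next h =>
      rw [abs_of_pos (by linarith), abs_of_pos (by linarith)]
      linarith
    · have h1 : |a - j| - |b - j| ≤ |a - j - (b - j)| := abs_sub_abs_le_abs_sub _ _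
      have h2 : |a - j - (b - j)| = b - a := by
        rw [show a - j - (b - j) = -(b - a) by ring, abs_neg, abs_of_pos hd]
      linarith
  have hsumkey := Finset.sum_le_sum key
  have hL : ∑ j ∈ s, p j * (if j ≤ m then (b - a) else -(b - a)) =
      (b - a) * ((∑ j ∈ s.filter (fun j => j ≤ m), p j)
        - (∑ j ∈ s.filter (fun j => m < j), p j)) := by
    rw [← Finset.sum_filter_add_sum_filter_not s (fun j => j ≤ m)
      (fun j => p j * (if j ≤ m then (b - a) else -(b - a)))]
    have e1 : ∑ j ∈ s.filter (fun j => j ≤ m), p j * (if j ≤ m then (b - a) else -(b - a))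
        = (b - a) * ∑ j ∈ s.filter (fun j => j ≤ m), p j := by
      rw [Finset.mul_sum]
      apply Finset.sum_congr rfl
      intro j hj
      rw [if_pos (Finset.mem_filter.mp hj).2]; ring
    have he : s.filter (fun j => ¬ j ≤ m) = s.filter (fun j => m < j) := by
      apply Finset.filter_congr; intro j _; simp [not_le]
    have e2 : ∑ j ∈ s.filter (fun j => ¬ j ≤ m), p j * (if j ≤ m then (b - a) else -(b - a))
        = -((b - a) * ∑ j ∈ s.filter (fun j => m < j), p j) := by
      rw [he, Finset.mul_sum, ← Finset.sum_neg_distrib]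
      apply Finset.sum_congr rfl
      intro j hj
      rw [if_neg (not_le.mpr (Finset.mem_filter.mp hj).2)]; ring
    rw [e1, e2]; ring
  have hmass := mwr_left_mass s p hsum m hmr
  have h0 : 0 ≤ ∑ j ∈ s, (p j * |b - j| - p j * |a - j|) := by
    refine le_trans ?_ hsumkey
    rw [hL]
    have hnn : 0 ≤ (∑ j ∈ s.filter (fun j => j ≤ m), p j)
        - (∑ j ∈ s.filter (fun j => m < j), p j) := by linarith
    positivity
  rw [Finset.sum_sub_distrib] at h0
  unfold lcost
  linarith

lemma mwr_votes_right (s : Finset ℝ) (p : ℝ → ℝ) (hpos : ∀ x ∈ s, 0 < p x)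
    (hsum : ∑ x ∈ s, p x = 1)
    (m : ℝ) (hmr : (∑ j ∈ s.filter (fun j => m < j), p j) < 1/2)
    (a b : ℝ) (hma : m < a) (hab : a < b) :
    1/2 < lvotes s p a b := by
  have hsub : s.filter (fun j => j ≤ m) ⊆ s.filter (fun j => |a - j| < |b - j|) := by
    intro j hj
    rw [Finset.mem_filter] at hj ⊢
    refine ⟨hj.1, ?_⟩
    have hjm := hj.2
    rw [abs_of_pos (by linarith), abs_of_pos (by linarith)]
    linarith
  have hle := Finset.sum_le_sum_of_subset_of_nonneg hsub
    (fun j hj _ => (hpos j (Finset.mem_filter.mp hj).1).le)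
  have := mwr_left_mass s p hsum m hmr
  unfold lvotes
  linarith

lemma mwr_r_right (s : Finset ℝ) (p : ℝ → ℝ) (hpos : ∀ x ∈ s, 0 < p x)
    (hsum : ∑ x ∈ s, p x = 1)
    (m : ℝ) (hms : m ∈ s) (hmr : (∑ j ∈ s.filter (fun j => m < j), p j) < 1/2)
    (ystar : ℝ) (hy : ystar ∈ s) (hym : m < ystar)
    (y : ℝ) (hyy : ystar < y) :
    lr s p ystar y = 1 := by
  have hcpos : ∀ x : ℝ, 0 < lcost s p x :=
    mwr_cost_pos s p hpos m ystar hms hy (ne_of_lt hym)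
  have hmono := mwr_cost_mono s p hpos hsum m hmr ystar y hym hyy
  have hv := mwr_votes_right s p hpos hsum m hmr ystar y hym hyy
  have hw : lwin s p ystar y = ystar := if_pos hv
  unfold lr
  rw [hw]
  unfold lopt
  by_cases h : lcost s p ystar < lcost s p y
  · rw [if_pos h, div_self (hcpos ystar).ne']
  · rw [if_neg h]
    have : lcost s p y = lcost s p ystar := le_antisymm (not_lt.mp h) hmono
    rw [this, div_self (hcpos ystar).ne']

lemma mwr_sum_shift (A : Finset ℝ) (p q : ℝ → ℝ) (t β : ℝ) (ht : t ∈ A)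
    (hq : ∀ j ∈ A, q j = p j + (if j = t then β else 0)) (f : ℝ → ℝ) :
    ∑ j ∈ A, q j * f j = (∑ j ∈ A, p j * f j) + β * f t := by
  have h : ∀ j ∈ A, q j * f j = p j * f j + (if j = t then β * f j else 0) := by
    intro j hj
    rw [hq j hj]
    split <;> ring
  rw [Finset.sum_congr rfl h, Finset.sum_add_distrib,
    Finset.sum_ite_eq' A t (fun j => β * f j), if_pos ht]

lemma mwr_votes_shift (A : Finset ℝ) (p q : ℝ → ℝ) (t β : ℝ) (ht : t ∈ A)
    (hq : ∀ j ∈ A, q j = p j + (if j = t then β else 0)) (x y : ℝ) :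
    lvotes A q x y = lvotes A p x y + (if |x - t| < |y - t| then β else 0) := by
  unfold lvotes
  rw [Finset.sum_filter, Finset.sum_filter]
  have h : ∀ j ∈ A, (if |x - j| < |y - j| then q j else 0) =
      (if |x - j| < |y - j| then p j else 0) +
      (if j = t then (if |x - t| < |y - t| then β else 0) else 0) := by
    intro j hj
    rw [hq j hj]
    by_cases hjt : j = t
    · subst hjt
      simp only [if_pos rfl]
      split <;> simp
    · simp [hjt]
  rw [Finset.sum_congr rfl h, Finset.sum_add_distrib,
    Finset.sum_ite_eq' A t (fun _ => if |x - t| < |y - t| then β else 0), if_pos ht]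

/-- let `y*` maximize the average distortion `r(y) = ∑_j p j · r(y,j)`
over the support points strictly right of the unique median `m`.  Moving all
probability mass located strictly to the right of `y*` onto `y*` does not
decrease the expected distortion. -/
theorem merge_worst_right (s : Finset ℝ) (p : ℝ → ℝ)
    (hpos : ∀ x ∈ s, 0 < p x) (hsum : ∑ x ∈ s, p x = 1)
    (m : ℝ) (hm : IsMedian s p m) (hmedian : ∃! m', IsMedian s p m')
    (hties : NoVoterTies s)
    (hmaj : StrictMajority s p)
    (ystar : ℝ) (hy : ystar ∈ s) (hym : m < ystar)
    (hworst : ∀ y ∈ s, m < y → lrbar s p y ≤ lrbar s p ystar) :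
    lsocial s p p ≤
      lsocial (s.filter (fun j => j ≤ ystar))
        (fun j => if j = ystar then ∑ k ∈ s.filter (fun k => ystar ≤ k), p k else p j)
        (fun j => if j = ystar then ∑ k ∈ s.filter (fun k => ystar ≤ k), p k else p j) := by
  obtain ⟨hms, hml, hmr⟩ := hm
  set A := s.filter (fun j => j ≤ ystar) with hAdef
  set B := s.filter (fun j => ystar < j) with hBdef
  set q : ℝ → ℝ :=
    fun j => if j = ystar then ∑ k ∈ s.filter (fun k => ystar ≤ k), p k else p j with hqdef
  set β := ∑ j ∈ B, p j with hβdef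
  set C := ∑ j ∈ B, p j * (j - ystar) with hCdef
  have hmy : m ≠ ystar := ne_of_lt hym
  have hyA : ystar ∈ A := by rw [hAdef]; exact Finset.mem_filter.mpr ⟨hy, le_refl _⟩
  have hmA : m ∈ A := by rw [hAdef]; exact Finset.mem_filter.mpr ⟨hms, hym.le⟩
  have hynB : ystar ∉ B := by rw [hBdef]; simp
  have hAmem : ∀ j ∈ A, j ∈ s ∧ j ≤ ystar := by
    intro j hj; rw [hAdef] at hj; exact Finset.mem_filter.mp hj
  have hBmem : ∀ j ∈ B, j ∈ s ∧ ystar < j := by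
    intro j hj; rw [hBdef] at hj; exact Finset.mem_filter.mp hj
  have hfil : s.filter (fun k => ystar ≤ k) = insert ystar B := by
    rw [hBdef]
    ext k
    simp only [Finset.mem_filter, Finset.mem_insert]
    constructor
    · rintro ⟨hk, hk2⟩
      rcases eq_or_lt_of_le hk2 with h | h
      · exact Or.inl h.symm
      · exact Or.inr ⟨hk, h⟩
    · rintro (rfl | ⟨hk, h⟩)
      · exact ⟨hy, le_refl _⟩
      · exact ⟨hk, h.le⟩
  have hqs : ∀ j : ℝ, q j = p j + (if j = ystar then β else 0) := by
    intro j
    simp only [hqdef]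
    by_cases hjt : j = ystar
    · subst hjt
      rw [if_pos rfl, if_pos rfl, hfil, Finset.sum_insert hynB, ← hβdef]
    · rw [if_neg hjt, if_neg hjt, add_zero]
  have hβnn : 0 ≤ β := by
    rw [hβdef]
    exact Finset.sum_nonneg fun j hj => (hpos j (hBmem j hj).1).le
  have hCnn : 0 ≤ C := by
    rw [hCdef]
    refine Finset.sum_nonneg fun j hj => ?_
    obtain ⟨hjs, hjy⟩ := hBmem j hj
    exact mul_nonneg (hpos j hjs).le (by linarith)
  have hqpos : ∀ x ∈ A, 0 < q x := by
    intro x hx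
    rw [hqs x]
    obtain ⟨hxs, _⟩ := hAmem x hx
    split
    · linarith [hpos x hxs]
    · linarith [hpos x hxs]
  have hsplit : ∀ f : ℝ → ℝ, ∑ j ∈ s, f j = (∑ j ∈ A, f j) + (∑ j ∈ B, f j) := by
    intro f
    rw [← Finset.sum_filter_add_sum_filter_not s (fun j => j ≤ ystar) f]
    congr 1
    apply Finset.sum_congr _ (fun _ _ => rfl)
    rw [hBdef]
    apply Finset.filter_congr
    intro j _
    simp [not_le]
  have hcpos : ∀ x : ℝ, 0 < lcost s p x := mwr_cost_pos s p hpos m ystar hms hy hmy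
  have hcApos : ∀ x : ℝ, 0 < lcost A q x := mwr_cost_pos A q hqpos m ystar hmA hyA hmy
  -- cost shift
  have hcshift : ∀ x : ℝ, x ≤ ystar → lcost A q x = lcost s p x - C := by
    intro x hx
    unfold lcost
    rw [mwr_sum_shift A p q ystar β hyA (fun j _ => hqs j) (fun j => |x - j|),
      hsplit (fun j => p j * |x - j|)]
    have e : ∀ j ∈ B, p j * |x - j| = p j * (j - ystar) + p j * |x - ystar| := by
      intro j hj
      obtain ⟨hjs, hjy⟩ := hBmem j hj
      rw [abs_of_nonpos (by linarith : x - j ≤ 0), abs_of_nonpos (by linarith : x - ystar ≤ 0)]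
      ring
    rw [Finset.sum_congr rfl e, Finset.sum_add_distrib, ← Finset.sum_mul, ← hβdef, ← hCdef]
    ring
  -- votes unchanged
  have hveq : ∀ x y : ℝ, x ≤ ystar → y ≤ ystar → lvotes A q x y = lvotes s p x y := by
    intro x y hx hy'
    rw [mwr_votes_shift A p q ystar β hyA (fun j _ => hqs j) x y]
    have e1 : lvotes s p x y = ∑ j ∈ s, (if |x - j| < |y - j| then p j else 0) := by
      unfold lvotes; exact Finset.sum_filter _ _
    have e2 : lvotes A p x y = ∑ j ∈ A, (if |x - j| < |y - j| then p j else 0) := by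
      unfold lvotes; exact Finset.sum_filter _ _
    rw [e2, e1, hsplit (fun j => if |x - j| < |y - j| then p j else 0)]
    have e : ∀ j ∈ B, (if |x - j| < |y - j| then p j else 0) =
        (if |x - ystar| < |y - ystar| then p j else 0) := by
      intro j hj
      obtain ⟨hjs, hjy⟩ := hBmem j hj
      have hiff : (|x - j| < |y - j|) ↔ (|x - ystar| < |y - ystar|) := by
        rw [abs_of_nonpos (by linarith : x - j ≤ 0), abs_of_nonpos (by linarith : y - j ≤ 0),
          abs_of_nonpos (by linarith : x - ystar ≤ 0),
          abs_of_nonpos (by linarith : y - ystar ≤ 0)]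
        constructor <;> intro <;> linarith
      by_cases hc : |x - ystar| < |y - ystar|
      · rw [if_pos (hiff.mpr hc), if_pos hc]
      · rw [if_neg (fun h => hc (hiff.mp h)), if_neg hc]
    rw [Finset.sum_congr rfl e]
    by_cases hc : |x - ystar| < |y - ystar|
    · simp only [if_pos hc]; rfl
    · simp only [if_neg hc]
      simp
  -- pairwise distortion only increases
  have hrA : ∀ x ∈ A, ∀ y ∈ A, lr s p x y ≤ lr A q x y := by
    intro x hx y hy'
    obtain ⟨hxs, hxy⟩ := hAmem x hx
    obtain ⟨hys, hyy⟩ := hAmem y hy'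
    have hwin : lwin A q x y = lwin s p x y := by
      unfold lwin; rw [hveq x y hxy hyy]
    have hopt : lopt A q x y = lopt s p x y := by
      unfold lopt
      rw [hcshift x hxy, hcshift y hyy]
      simp only [sub_lt_sub_iff_right]
    have hWm : lwin s p x y = x ∨ lwin s p x y = y := mwr_win_mem s p x y
    have hOm : lopt s p x y = x ∨ lopt s p x y = y := by unfold lopt; split <;> simp
    have hWle : lwin s p x y ≤ ystar := by rcases hWm with h | h <;> rw [h] <;> assumption
    have hOle : lopt s p x y ≤ ystar := by rcases hOm with h | h <;> rw [h] <;> assumption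
    unfold lr
    rw [hwin, hopt, hcshift _ hWle, hcshift _ hOle]
    have hb := hcpos (lopt s p x y)
    have hbc : 0 < lcost s p (lopt s p x y) - C := by
      rw [← hcshift _ hOle]; exact hcApos _
    have hba := mwr_opt_le_win s p x y
    rw [div_le_div_iff₀ hb hbc]
    nlinarith
  have hsymm : ∀ x ∈ s, ∀ y ∈ s, lr s p x y = lr s p y x := by
    intro x hxs y hys
    rcases eq_or_ne x y with rfl | h
    · rfl
    · exact mwr_lr_symm s p hsum hties hmaj x y hxs hys h
  have hr1 : ∀ x y : ℝ, 1 ≤ lr s p x y := fun x y => mwr_lr_ge_one s p x y (hcpos _)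
  have hrB : ∀ y ∈ B, lr s p ystar y = 1 := by
    intro y hyB
    exact mwr_r_right s p hpos hsum m hms hmr ystar hy hym y (hBmem y hyB).2
  -- notation: T = A-block, Uy = row of ystar on A, SU/SV = B-row pieces
  have hself : lr s p ystar ystar = 1 := mwr_lr_self s p ystar (hcpos ystar)
  -- Step 1: the merged social cost dominates the same weighted sum of OLD ratios
  have h1 : (∑ x ∈ A, ∑ y ∈ A, q x * q y * lr s p x y) ≤ lsocial A q q := by
    unfold lsocial
    refine Finset.sum_le_sum fun x hx => Finset.sum_le_sum fun y hy' => ?_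
    exact mul_le_mul_of_nonneg_left (hrA x hx y hy')
      (mul_nonneg (hqpos x hx).le (hqpos y hy').le)
  -- Step 2: expand the weighted sum of old ratios
  have h2 : (∑ x ∈ A, ∑ y ∈ A, q x * q y * lr s p x y)
      = (∑ x ∈ A, p x * (∑ y ∈ A, p y * lr s p x y))
        + β * (∑ y ∈ A, p y * lr s p ystar y)
        + β * (∑ y ∈ A, p y * lr s p ystar y) + β * β := by
    have inner : ∀ x ∈ A, ∑ y ∈ A, q x * q y * lr s p x y
        = q x * ((∑ y ∈ A, p y * lr s p x y) + β * lr s p x ystar) := by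
      intro x hx
      calc ∑ y ∈ A, q x * q y * lr s p x y
          = ∑ y ∈ A, q x * (q y * lr s p x y) := by
            apply Finset.sum_congr rfl; intro y _; ring
        _ = q x * ∑ y ∈ A, q y * lr s p x y := (Finset.mul_sum _ _ _).symm
        _ = _ := by
            rw [mwr_sum_shift A p q ystar β hyA (fun j _ => hqs j) (fun y => lr s p x y)]
    rw [Finset.sum_congr rfl inner,
      mwr_sum_shift A p q ystar β hyA (fun j _ => hqs j)
        (fun x => (∑ y ∈ A, p y * lr s p x y) + β * lr s p x ystar)]
    have e : ∀ x ∈ A, p x * ((∑ y ∈ A, p y * lr s p x y) + β * lr s p x ystar)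
        = p x * (∑ y ∈ A, p y * lr s p x y) + β * (p x * lr s p ystar x) := by
      intro x hx
      rw [hsymm x (hAmem x hx).1 ystar hy]
      ring
    rw [Finset.sum_congr rfl e, Finset.sum_add_distrib, ← Finset.mul_sum, hself]
    ring
  -- Step 3: expand the old social cost
  have h3 : lsocial s p p
      = (∑ x ∈ A, p x * (∑ y ∈ A, p y * lr s p x y))
        + (∑ x ∈ A, p x * (∑ y ∈ B, p y * lr s p x y))
        + (∑ x ∈ B, p x * ((∑ y ∈ A, p y * lr s p x y) + (∑ y ∈ B, p y * lr s p x y))) := by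
    unfold lsocial
    have row : ∀ x ∈ s, ∑ y ∈ s, p x * p y * lr s p x y
        = p x * ((∑ y ∈ A, p y * lr s p x y) + (∑ y ∈ B, p y * lr s p x y)) := by
      intro x hx
      calc ∑ y ∈ s, p x * p y * lr s p x y
          = ∑ y ∈ s, p x * (p y * lr s p x y) := by
            apply Finset.sum_congr rfl; intro y _; ring
        _ = p x * ∑ y ∈ s, p y * lr s p x y := (Finset.mul_sum _ _ _).symm
        _ = _ := by rw [hsplit (fun y => p y * lr s p x y)]
    rw [Finset.sum_congr rfl row,
      hsplit (fun x => p x * ((∑ y ∈ A, p y * lr s p x y) + (∑ y ∈ B, p y * lr s p x y)))]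
    have e : ∀ x ∈ A, p x * ((∑ y ∈ A, p y * lr s p x y) + (∑ y ∈ B, p y * lr s p x y))
        = p x * (∑ y ∈ A, p y * lr s p x y) + p x * (∑ y ∈ B, p y * lr s p x y) :=
      fun x _ => mul_add _ _ _
    rw [Finset.sum_congr rfl e, Finset.sum_add_distrib]
  -- Step 4: the A×B cross term equals the B×A cross term (symmetry of lr)
  have h4 : (∑ x ∈ A, p x * (∑ y ∈ B, p y * lr s p x y))
      = ∑ x ∈ B, p x * (∑ y ∈ A, p y * lr s p x y) := by
    calc ∑ x ∈ A, p x * ∑ y ∈ B, p y * lr s p x y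
        = ∑ x ∈ A, ∑ y ∈ B, p x * (p y * lr s p x y) := by
          apply Finset.sum_congr rfl; intro x _; rw [Finset.mul_sum]
      _ = ∑ y ∈ B, ∑ x ∈ A, p x * (p y * lr s p x y) := Finset.sum_comm
      _ = ∑ y ∈ B, p y * (∑ x ∈ A, p x * lr s p y x) := by
          apply Finset.sum_congr rfl; intro y hyB
          rw [Finset.mul_sum]
          apply Finset.sum_congr rfl; intro x hxA
          rw [hsymm x (hAmem x hxA).1 y (hBmem y hyB).1]
          ring
  -- V(ystar) = β since r(ystar, y) = 1 on B
  have hVy : (∑ y ∈ B, p y * lr s p ystar y) = β := by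
    have e : ∀ y ∈ B, p y * lr s p ystar y = p y := by
      intro y hyB; rw [hrB y hyB, mul_one]
    rw [Finset.sum_congr rfl e, hβdef]
  -- Step 5: worst-case bound on the B rows
  have h5 : ∀ x ∈ B, (∑ y ∈ A, p y * lr s p x y) + (∑ y ∈ B, p y * lr s p x y)
      ≤ (∑ y ∈ A, p y * lr s p ystar y) + β := by
    intro x hxB
    obtain ⟨hxs, hxy⟩ := hBmem x hxB
    have hw := hworst x hxs (lt_trans hym hxy)
    have hbar : ∀ z : ℝ, lrbar s p z
        = (∑ y ∈ A, p y * lr s p z y) + (∑ y ∈ B, p y * lr s p z y) := by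
      intro z; unfold lrbar; exact hsplit (fun y => p y * lr s p z y)
    rw [hbar x, hbar ystar, hVy] at hw
    exact hw
  -- Step 6: the B×B block is at least β²
  have h6 : β * β ≤ ∑ x ∈ B, p x * (∑ y ∈ B, p y * lr s p x y) := by
    have hVx : ∀ x ∈ B, β ≤ ∑ y ∈ B, p y * lr s p x y := by
      intro x hxB
      rw [hβdef]
      refine Finset.sum_le_sum fun y hyB => ?_
      calc p y = p y * 1 := (mul_one _).symm
        _ ≤ p y * lr s p x y :=
            mul_le_mul_of_nonneg_left (hr1 x y) (hpos y (hBmem y hyB).1).le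
    have hle : ∑ x ∈ B, p x * β ≤ ∑ x ∈ B, p x * (∑ y ∈ B, p y * lr s p x y) :=
      Finset.sum_le_sum fun x hx =>
        mul_le_mul_of_nonneg_left (hVx x hx) (hpos x (hBmem x hx).1).le
    have heq : ∑ x ∈ B, p x * β = β * β := by
      rw [← Finset.sum_mul, ← hβdef]
    linarith
  -- Step 7: bound the full B rows
  have h7 : (∑ x ∈ B, p x * ((∑ y ∈ A, p y * lr s p x y) + (∑ y ∈ B, p y * lr s p x y)))
      ≤ β * (∑ y ∈ A, p y * lr s p ystar y) + β * β := by
    have hle := Finset.sum_le_sum fun x hx =>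
      mul_le_mul_of_nonneg_left (h5 x hx) (hpos x (hBmem x hx).1).le
    have heq : ∑ x ∈ B, p x * ((∑ y ∈ A, p y * lr s p ystar y) + β)
        = β * (∑ y ∈ A, p y * lr s p ystar y) + β * β := by
      rw [← Finset.sum_mul, ← hβdef]
      ring
    linarith
  -- Step 8: split the full B rows
  have h8 : (∑ x ∈ B, p x * ((∑ y ∈ A, p y * lr s p x y) + (∑ y ∈ B, p y * lr s p x y)))
      = (∑ x ∈ B, p x * (∑ y ∈ A, p y * lr s p x y))
        + (∑ x ∈ B, p x * (∑ y ∈ B, p y * lr s p x y)) := by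
    have e : ∀ x ∈ B, p x * ((∑ y ∈ A, p y * lr s p x y) + (∑ y ∈ B, p y * lr s p x y))
        = p x * (∑ y ∈ A, p y * lr s p x y) + p x * (∑ y ∈ B, p y * lr s p x y) :=
      fun x _ => mul_add _ _ _
    rw [Finset.sum_congr rfl e, Finset.sum_add_distrib]
  linarith [h1, h2, h3, h4, h5, h6, h7, h8]
end

section
/- Let p be a finitely supported probability distribution on ℝ in general position (unique median m) serving as both candidate and voter distribution, with L and R the support points strictly left and right of m. Suppose x* = min supp(p) maximizes r(x) = ∑_j p(j)·r(x,j) over L, y* = max supp(p) maximizes r(y) over R, and |m − x*| < |m − y*|. Let p' be the distribution obtained from p by moving all probability mass of R onto y*. Then Social(p',p') ≥ Social(p,p). -/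
open Finset

lemma lr_self (s : Finset ℝ) (q : ℝ → ℝ) (x : ℝ) (hc : lcost s q x ≠ 0) :
    lr s q x x = 1 := by
  simp [lr, lwin, lopt, div_self hc]

lemma lr_decided (s : Finset ℝ) (q : ℝ → ℝ) (x y : ℝ) (P : ℝ → Prop) [DecidablePred P]
    (hnn : ∀ j ∈ s, 0 ≤ q j) (htot : ∑ j ∈ s, q j = 1)
    (hP : 1/2 < ∑ j ∈ s.filter P, q j)
    (hpref : ∀ j ∈ s, P j → |x - j| < |y - j|)
    (hcx : 0 < lcost s q x) (hcy : 0 < lcost s q y) :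
    lr s q x y = max 1 (lcost s q x / lcost s q y) ∧
    lr s q y x = max 1 (lcost s q x / lcost s q y) := by
  have hvx : 1/2 < lvotes s q x y := by
    refine lt_of_lt_of_le hP ?_
    refine Finset.sum_le_sum_of_subset_of_nonneg ?_
      (fun j hj _ => hnn j (Finset.mem_filter.1 hj).1)
    intro j hj
    rcases Finset.mem_filter.1 hj with ⟨hjs, hPj⟩
    exact Finset.mem_filter.2 ⟨hjs, hpref j hjs hPj⟩
  have hvy : lvotes s q y x < 1/2 := by
    have hle : lvotes s q y x ≤ ∑ j ∈ s.filter (fun j => ¬ P j), q j := by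
      refine Finset.sum_le_sum_of_subset_of_nonneg ?_
        (fun j hj _ => hnn j (Finset.mem_filter.1 hj).1)
      intro j hj
      rcases Finset.mem_filter.1 hj with ⟨hjs, hlt⟩
      exact Finset.mem_filter.2 ⟨hjs, fun hPj => absurd (hpref j hjs hPj) (not_lt.2 hlt.le)⟩
    have hsplit := Finset.sum_filter_add_sum_filter_not s P q
    linarith
  have hwxy : lwin s q x y = x := if_pos hvx
  have hwyx : lwin s q y x = x := if_neg (not_lt.2 hvy.le)
  by_cases hc : lcost s q x < lcost s q y
  · have hopt1 : lopt s q x y = x := if_pos hc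
    have hopt2 : lopt s q y x = x := if_neg (not_lt.2 hc.le)
    have hmax : max 1 (lcost s q x / lcost s q y) = 1 :=
      max_eq_left (le_of_lt ((div_lt_one hcy).2 hc))
    constructor
    · rw [lr, hwxy, hopt1, div_self hcx.ne', hmax]
    · rw [lr, hwyx, hopt2, div_self hcx.ne', hmax]
  · push_neg at hc
    have hmax : max 1 (lcost s q x / lcost s q y) = lcost s q x / lcost s q y :=
      max_eq_right ((one_le_div hcy).2 hc)
    have hopt1 : lopt s q x y = y := if_neg (not_lt.2 hc)
    constructor
    · rw [lr, hwxy, hopt1, hmax]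
    · by_cases h2 : lcost s q y < lcost s q x
      · have hopt2 : lopt s q y x = y := if_pos h2
        rw [lr, hwyx, hopt2, hmax]
      · have heq : lcost s q x = lcost s q y := le_antisymm (not_lt.1 h2) hc
        have hopt2 : lopt s q y x = x := if_neg h2
        rw [lr, hwyx, hopt2, hmax, heq]

lemma lr_symm_s6 (s : Finset ℝ) (q : ℝ → ℝ) (x y : ℝ)
    (htot : ∑ j ∈ s, q j = 1)
    (hties : ∀ j ∈ s, |x - j| ≠ |y - j|)
    (hmaj : lvotes s q x y ≠ 1/2) :
    lr s q x y = lr s q y x := by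
  have hpart : lvotes s q x y + lvotes s q y x = 1 := by
    have hf : s.filter (fun j => |y - j| < |x - j|)
        = s.filter (fun j => ¬ |x - j| < |y - j|) := by
      apply Finset.filter_congr
      intro j hj
      constructor
      · intro h; exact not_lt.2 h.le
      · intro h; exact lt_of_le_of_ne (not_lt.1 h) (hties j hj).symm
    rw [lvotes, lvotes, hf, Finset.sum_filter_add_sum_filter_not s _ q, htot]
  have hwin : lcost s q (lwin s q x y) = lcost s q (lwin s q y x) := by
    rw [lwin, lwin]
    rcases lt_or_gt_of_ne hmaj with h | h
    · rw [if_neg (not_lt.2 h.le), if_pos (by linarith)]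
    · rw [if_pos h, if_neg (not_lt.2 (by linarith))]
  have hopt : lcost s q (lopt s q x y) = lcost s q (lopt s q y x) := by
    rw [lopt, lopt]
    rcases lt_trichotomy (lcost s q x) (lcost s q y) with h | h | h
    · rw [if_pos h, if_neg (not_lt.2 h.le)]
    · rw [if_neg (by rw [h]; exact lt_irrefl _), if_neg (by rw [h]; exact lt_irrefl _)]
      exact h.symm
    · rw [if_neg (not_lt.2 h.le), if_pos h]
  rw [lr, lr, hwin, hopt]

lemma cost_anti (s : Finset ℝ) (q : ℝ → ℝ) (m x y : ℝ)
    (hnn : ∀ j ∈ s, 0 ≤ q j) (htot : ∑ j ∈ s, q j = 1)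
    (hM : 1/2 ≤ ∑ j ∈ s.filter (fun j => m ≤ j), q j)
    (hxy : x ≤ y) (hym : y ≤ m) :
    lcost s q y ≤ lcost s q x := by
  have e : lcost s q x - lcost s q y = ∑ j ∈ s, q j * (|x - j| - |y - j|) := by
    rw [lcost, lcost, ← Finset.sum_sub_distrib]
    exact Finset.sum_congr rfl (fun j _ => by ring)
  rw [← sub_nonneg, e,
    ← Finset.sum_filter_add_sum_filter_not s (fun j => m ≤ j)]
  have e1 : ∑ j ∈ s.filter (fun j => m ≤ j), q j * (|x - j| - |y - j|)
      = (∑ j ∈ s.filter (fun j => m ≤ j), q j) * (y - x) := by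
    rw [Finset.sum_mul]
    refine Finset.sum_congr rfl (fun j hj => ?_)
    rcases Finset.mem_filter.1 hj with ⟨_, hmj⟩
    have hx' : |x - j| = j - x := by rw [abs_sub_comm]; exact abs_of_nonneg (by linarith)
    have hy' : |y - j| = j - y := by rw [abs_sub_comm]; exact abs_of_nonneg (by linarith)
    rw [hx', hy']; ring
  have e2 : (∑ j ∈ s.filter (fun j => ¬ m ≤ j), q j) * (x - y)
      ≤ ∑ j ∈ s.filter (fun j => ¬ m ≤ j), q j * (|x - j| - |y - j|) := by
    rw [Finset.sum_mul]
    refine Finset.sum_le_sum (fun j hj => ?_)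
    have hq := hnn j (Finset.mem_filter.1 hj).1
    have habs : x - y ≤ |x - j| - |y - j| := by
      have h1 : |y - j| - |x - j| ≤ |y - x| := by
        have := abs_sub_abs_le_abs_sub (y - j) (x - j)
        simpa using this
      have h2 : |y - x| = y - x := abs_of_nonneg (by linarith)
      linarith
    exact mul_le_mul_of_nonneg_left habs hq
  have e3 : ∑ j ∈ s.filter (fun j => ¬ m ≤ j), q j
      = 1 - ∑ j ∈ s.filter (fun j => m ≤ j), q j := by
    have := Finset.sum_filter_add_sum_filter_not s (fun j => m ≤ j) q
    linarith
  rw [e1]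
  nlinarith [e2, e3, mul_nonneg (by linarith : (0:ℝ) ≤ 2 * (∑ j ∈ s.filter (fun j => m ≤ j), q j) - 1) (by linarith : (0:ℝ) ≤ y - x)]

lemma cost_mono (s : Finset ℝ) (q : ℝ → ℝ) (m x y : ℝ)
    (hnn : ∀ j ∈ s, 0 ≤ q j) (htot : ∑ j ∈ s, q j = 1)
    (hM : 1/2 ≤ ∑ j ∈ s.filter (fun j => j ≤ m), q j)
    (hmx : m ≤ x) (hxy : x ≤ y) :
    lcost s q x ≤ lcost s q y := by
  have e : lcost s q y - lcost s q x = ∑ j ∈ s, q j * (|y - j| - |x - j|) := by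
    rw [lcost, lcost, ← Finset.sum_sub_distrib]
    exact Finset.sum_congr rfl (fun j _ => by ring)
  rw [← sub_nonneg, e,
    ← Finset.sum_filter_add_sum_filter_not s (fun j => j ≤ m)]
  have e1 : ∑ j ∈ s.filter (fun j => j ≤ m), q j * (|y - j| - |x - j|)
      = (∑ j ∈ s.filter (fun j => j ≤ m), q j) * (y - x) := by
    rw [Finset.sum_mul]
    refine Finset.sum_congr rfl (fun j hj => ?_)
    rcases Finset.mem_filter.1 hj with ⟨_, hjm⟩
    have hx' : |x - j| = x - j := abs_of_nonneg (by linarith)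
    have hy' : |y - j| = y - j := abs_of_nonneg (by linarith)
    rw [hx', hy']; ring
  have e2 : (∑ j ∈ s.filter (fun j => ¬ j ≤ m), q j) * (x - y)
      ≤ ∑ j ∈ s.filter (fun j => ¬ j ≤ m), q j * (|y - j| - |x - j|) := by
    rw [Finset.sum_mul]
    refine Finset.sum_le_sum (fun j hj => ?_)
    have hq := hnn j (Finset.mem_filter.1 hj).1
    have habs : x - y ≤ |y - j| - |x - j| := by
      have h1 : |x - j| - |y - j| ≤ |x - y| := by
        have := abs_sub_abs_le_abs_sub (x - j) (y - j)
        simpa using this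
      have h2 : |x - y| = y - x := by rw [abs_sub_comm]; exact abs_of_nonneg (by linarith)
      linarith
    exact mul_le_mul_of_nonneg_left habs hq
  have e3 : ∑ j ∈ s.filter (fun j => ¬ j ≤ m), q j
      = 1 - ∑ j ∈ s.filter (fun j => j ≤ m), q j := by
    have := Finset.sum_filter_add_sum_filter_not s (fun j => j ≤ m) q
    linarith
  rw [e1]
  nlinarith [e2, e3, mul_nonneg (by linarith : (0:ℝ) ≤ 2 * (∑ j ∈ s.filter (fun j => j ≤ m), q j) - 1) (by linarith : (0:ℝ) ≤ y - x)]

lemma cost_pos (s : Finset ℝ) (q : ℝ → ℝ) (z x0 y0 : ℝ)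
    (hx0 : x0 ∈ s) (hy0 : y0 ∈ s) (hne : x0 ≠ y0)
    (hnn : ∀ j ∈ s, 0 ≤ q j) (hqx : 0 < q x0) (hqy : 0 < q y0) :
    0 < lcost s q z := by
  have hpair : 0 < q x0 * |z - x0| + q y0 * |z - y0| := by
    rcases eq_or_ne z x0 with rfl | h
    · have h1 : 0 < |z - y0| := abs_pos.2 (sub_ne_zero.2 hne)
      nlinarith [mul_pos hqy h1, mul_nonneg hqx.le (abs_nonneg (z - z))]
    · have h1 : 0 < |z - x0| := abs_pos.2 (sub_ne_zero.2 h)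
      nlinarith [mul_pos hqx h1, mul_nonneg hqy.le (abs_nonneg (z - y0))]
  have hsub : ({x0, y0} : Finset ℝ) ⊆ s := by
    intro j hj
    rcases Finset.mem_insert.1 hj with rfl | hj
    · exact hx0
    · rw [Finset.mem_singleton.1 hj]; exact hy0
  calc 0 < q x0 * |z - x0| + q y0 * |z - y0| := hpair
    _ = ∑ j ∈ ({x0, y0} : Finset ℝ), q j * |z - j| :=
        (Finset.sum_pair (f := fun j => q j * |z - j|) hne).symm
    _ ≤ lcost s q z := Finset.sum_le_sum_of_subset_of_nonneg hsub
        (fun j hj _ => mul_nonneg (hnn j hj) (abs_nonneg _))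

lemma social_rbar (t : Finset ℝ) (q : ℝ → ℝ) :
    lsocial t q q = ∑ x ∈ t, q x * lrbar t q x := by
  rw [lsocial]
  refine Finset.sum_congr rfl (fun x _ => ?_)
  rw [lrbar, Finset.mul_sum]
  exact Finset.sum_congr rfl (fun j _ => by ring)

/-- suppose the leftmost point `x*` maximizes
`r(x) = ∑_j p j · r(x,j)` over `L` and the rightmost point `y*` maximizes it over
`R`, and `|m - x*| < |m - y*|`.  Moving all of `R`'s probability mass onto `y*`
does not decrease the expected distortion. -/
theorem merge_right_side (s : Finset ℝ) (p : ℝ → ℝ)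
    (hpos : ∀ x ∈ s, 0 < p x) (hsum : ∑ x ∈ s, p x = 1)
    (m : ℝ) (hm : IsMedian s p m) (hmedian : ∃! m', IsMedian s p m')
    (hties : NoVoterTies s)
    (hmaj : StrictMajority s p)
    (xstar ystar : ℝ) (hxs : xstar ∈ s) (hys : ystar ∈ s)
    (hxmin : ∀ z ∈ s, xstar ≤ z) (hymax : ∀ z ∈ s, z ≤ ystar)
    (hxm : xstar < m) (hmy : m < ystar)
    (hxworst : ∀ x ∈ s, x < m → lrbar s p x ≤ lrbar s p xstar)
    (hyworst : ∀ y ∈ s, m < y → lrbar s p y ≤ lrbar s p ystar)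
    (hcloser : |m - xstar| < |m - ystar|) :
    lsocial s p p ≤
      lsocial (s.filter (fun j => j ≤ m) ∪ {ystar})
        (fun j => if j = ystar then ∑ k ∈ s.filter (fun k => m < k), p k else p j)
        (fun j => if j = ystar then ∑ k ∈ s.filter (fun k => m < k), p k else p j) := by
  obtain ⟨hms, hltm, hgtm⟩ := hm
  set A := s.filter (fun j => j ≤ m) with hA
  set R := s.filter (fun j => m < j) with hRdef
  set b := ∑ j ∈ R, p j with hbdef
  set p' : ℝ → ℝ := fun j => if j = ystar then b else p j with hp'def
  set s' := A ∪ ({ystar} : Finset ℝ) with hs'def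
  -- basic facts
  have hnn : ∀ j ∈ s, 0 ≤ p j := fun j hj => (hpos j hj).le
  have hmemA : ∀ j, j ∈ A ↔ j ∈ s ∧ j ≤ m := fun j => by rw [hA, Finset.mem_filter]
  have hmemR : ∀ j, j ∈ R ↔ j ∈ s ∧ m < j := fun j => by rw [hRdef, Finset.mem_filter]
  have hyA : ystar ∉ A := by
    rw [hmemA]; rintro ⟨-, h⟩; exact absurd h (not_le.2 hmy)
  have hdisj : Disjoint A ({ystar} : Finset ℝ) := Finset.disjoint_singleton_right.2 hyA
  have hAsub : A ⊆ s := by rw [hA]; exact Finset.filter_subset _ _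
  have hRsub : R ⊆ s := by rw [hRdef]; exact Finset.filter_subset _ _
  have hs'sub : s' ⊆ s := by
    rw [hs'def]; exact Finset.union_subset hAsub (Finset.singleton_subset_iff.2 hys)
  have hmA : m ∈ A := (hmemA m).2 ⟨hms, le_refl m⟩
  have hxA : xstar ∈ A := (hmemA xstar).2 ⟨hxs, hxm.le⟩
  have hyR : ystar ∈ R := (hmemR ystar).2 ⟨hys, hmy⟩
  have hp'A : ∀ j ∈ A, p' j = p j := by
    intro j hj
    have hjm : j ≤ m := ((hmemA j).1 hj).2
    rw [hp'def]
    exact if_neg (by rintro rfl; exact absurd hjm (not_le.2 hmy))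
  have hp'y : p' ystar = b := by rw [hp'def]; simp
  have hAc : s.filter (fun j => ¬ j ≤ m) = s.filter (fun j => m < j) :=
    Finset.filter_congr (fun j _ => not_le)
  have hsplit : ∀ f : ℝ → ℝ, ∑ j ∈ s, f j = ∑ j ∈ A, f j + ∑ j ∈ R, f j := by
    intro f
    rw [hA, hRdef, ← hAc, Finset.sum_filter_add_sum_filter_not]
  have hsplit' : ∀ f : ℝ → ℝ, ∑ j ∈ s', f j = ∑ j ∈ A, f j + f ystar := by
    intro f
    rw [hs'def, Finset.sum_union hdisj, Finset.sum_singleton]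
  have hsumA : ∑ j ∈ A, p j = 1 - b := by
    have := hsplit p
    rw [hsum] at this
    linarith [this, hbdef]
  have hbpos : 0 < b := by
    rw [hbdef]
    exact Finset.sum_pos (fun j hj => hpos j (hRsub hj)) ⟨ystar, hyR⟩
  have hblt : b < 1/2 := hgtm
  have htot' : ∑ j ∈ s', p' j = 1 := by
    rw [hsplit' p', hp'y, Finset.sum_congr rfl hp'A, hsumA]; ring
  have hnn' : ∀ j ∈ s', 0 ≤ p' j := by
    intro j hj
    by_cases h : j = ystar
    · rw [h, hp'y]; exact hbpos.le
    · simp only [hp'def]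
      rw [if_neg h]
      exact hnn j (hs'sub hj)
  -- mass facts
  have hMle : 1/2 < ∑ j ∈ s.filter (fun j => m ≤ j), p j := by
    have h1 : s.filter (fun j => ¬ j < m) = s.filter (fun j => m ≤ j) :=
      Finset.filter_congr (fun j _ => not_lt)
    have h2 := Finset.sum_filter_add_sum_filter_not s (fun j => j < m) p
    rw [h1, hsum] at h2
    linarith [hltm]
  have haM : 1/2 < ∑ j ∈ A, p j := by rw [hsumA]; linarith
  have hMleA : 1/2 < ∑ j ∈ s.filter (fun j => j ≤ m), p j := by rw [← hA]; exact haM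
  have haM'vals : ∑ j ∈ A, p' j = 1 - b := by rw [Finset.sum_congr rfl hp'A, hsumA]
  have hfA' : s'.filter (fun j => j ≤ m) = A := by
    rw [hs'def, Finset.filter_union]
    have h1 : A.filter (fun j => j ≤ m) = A :=
      Finset.filter_true_of_mem (fun j hj => ((hmemA j).1 hj).2)
    have h2 : ({ystar} : Finset ℝ).filter (fun j => j ≤ m) = ∅ := by
      rw [Finset.filter_singleton, if_neg (not_le.2 hmy)]
    rw [h1, h2, Finset.union_empty]
  have hMleA' : 1/2 < ∑ j ∈ s'.filter (fun j => j ≤ m), p' j := by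
    rw [hfA', haM'vals]; linarith
  have hMle' : 1/2 < ∑ j ∈ s'.filter (fun j => m ≤ j), p' j := by
    have e1 : s'.filter (fun j => ¬ m ≤ j) = s.filter (fun j => j < m) := by
      ext j
      rw [hs'def, hA]
      simp only [Finset.mem_filter, Finset.mem_union, Finset.mem_singleton]
      constructor
      · rintro ⟨h1 | rfl, h2⟩
        · exact ⟨h1.1, not_le.1 h2⟩
        · exact absurd hmy.le h2
      · rintro ⟨h1, h2⟩
        exact ⟨Or.inl ⟨h1, h2.le⟩, not_le.2 h2⟩
    have e2 : ∑ j ∈ s.filter (fun j => j < m), p' j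
        = ∑ j ∈ s.filter (fun j => j < m), p j := by
      refine Finset.sum_congr rfl (fun j hj => ?_)
      have hjm : j < m := (Finset.mem_filter.1 hj).2
      rw [hp'def]
      exact if_neg (by rintro rfl; exact absurd hjm (not_lt.2 hmy.le))
    have e3 := Finset.sum_filter_add_sum_filter_not s' (fun j => m ≤ j) p'
    rw [e1, e2, htot'] at e3
    linarith [hltm]
  -- cost facts
  have hxy_ne : xstar ≠ ystar := ne_of_lt (lt_trans hxm hmy)
  have hcpos : ∀ z, 0 < lcost s p z := fun z =>
    cost_pos s p z xstar ystar hxs hys hxy_ne hnn (hpos _ hxs) (hpos _ hys)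
  have hxs' : xstar ∈ s' := by rw [hs'def]; exact Finset.mem_union_left _ hxA
  have hys' : ystar ∈ s' := by
    rw [hs'def]; exact Finset.mem_union_right _ (Finset.mem_singleton_self _)
  have hcpos' : ∀ z, 0 < lcost s' p' z := fun z =>
    cost_pos s' p' z xstar ystar hxs' hys' hxy_ne hnn'
      (by rw [hp'A xstar hxA]; exact hpos _ hxs) (by rw [hp'y]; exact hbpos)
  set C := ∑ j ∈ R, p j * (ystar - j) with hCdef
  have hC0 : 0 ≤ C := by
    rw [hCdef]
    exact Finset.sum_nonneg (fun j hj =>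
      mul_nonneg (hnn j (hRsub hj)) (by linarith [hymax j (hRsub hj)]))
  have hshift : ∀ z : ℝ, z ≤ m → lcost s' p' z = lcost s p z + C := by
    intro z hz
    have e1 : lcost s' p' z = (∑ j ∈ A, p j * |z - j|) + b * (ystar - z) := by
      rw [lcost, hsplit' (fun j => p' j * |z - j|), hp'y]
      congr 1
      · exact Finset.sum_congr rfl (fun j hj => by rw [hp'A j hj])
      · rw [abs_of_nonpos (by linarith : z - ystar ≤ 0)]; ring
    have e2 : lcost s p z = (∑ j ∈ A, p j * |z - j|) + ∑ j ∈ R, p j * (j - z) := by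
      rw [lcost, hsplit (fun j => p j * |z - j|)]
      congr 1
      refine Finset.sum_congr rfl (fun j hj => ?_)
      have hmj : m < j := ((hmemR j).1 hj).2
      rw [abs_of_nonpos (by linarith : z - j ≤ 0)]; ring
    have e3 : b * (ystar - z) = ∑ j ∈ R, p j * (ystar - z) := by
      rw [hbdef]; exact Finset.sum_mul _ _ _
    have e4 : ∑ j ∈ R, p j * (ystar - z) = (∑ j ∈ R, p j * (j - z)) + C := by
      rw [hCdef, ← Finset.sum_add_distrib]
      exact Finset.sum_congr rfl (fun j hj => by ring)
    rw [e1, e2, e3, e4]; ring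
  have hcy' : lcost s' p' ystar = lcost s p ystar - C := by
    have e1 : lcost s' p' ystar = ∑ j ∈ A, p j * (ystar - j) := by
      rw [lcost, hsplit' (fun j => p' j * |ystar - j|)]
      simp only [sub_self, abs_zero, mul_zero, add_zero]
      refine Finset.sum_congr rfl (fun j hj => ?_)
      have hjm : j ≤ m := ((hmemA j).1 hj).2
      rw [hp'A j hj, abs_of_nonneg (by linarith : (0:ℝ) ≤ ystar - j)]
    have e2 : lcost s p ystar = (∑ j ∈ A, p j * (ystar - j)) + C := by
      rw [lcost, hsplit (fun j => p j * |ystar - j|), hCdef]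
      congr 1
      · refine Finset.sum_congr rfl (fun j hj => ?_)
        have hjm : j ≤ m := ((hmemA j).1 hj).2
        rw [abs_of_nonneg (by linarith : (0:ℝ) ≤ ystar - j)]
      · refine Finset.sum_congr rfl (fun j hj => ?_)
        rw [abs_of_nonneg (sub_nonneg.2 (hymax j (hRsub hj)))]
    rw [e1, e2]; ring
  -- same-side distortion is 1
  have habs_le : ∀ u v j : ℝ, m ≤ j → u < v → v ≤ m → |v - j| < |u - j| := by
    intro u v j hj huv hvm
    rw [abs_of_nonpos (by linarith : v - j ≤ 0), abs_of_nonpos (by linarith : u - j ≤ 0)]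
    linarith
  have hsameA : ∀ x ∈ A, ∀ y ∈ A, lr s p x y = 1 := by
    have key : ∀ u ∈ A, ∀ v ∈ A, u < v → lr s p u v = 1 ∧ lr s p v u = 1 := by
      intro u hu v hv huv
      have hvm : v ≤ m := ((hmemA v).1 hv).2
      have hd := lr_decided s p v u (fun j => m ≤ j) hnn hsum hMle
        (fun j _ hmj => habs_le u v j hmj huv hvm) (hcpos v) (hcpos u)
      have hcost : lcost s p v ≤ lcost s p u :=
        cost_anti s p m u v hnn hsum hMle.le huv.le hvm
      have hmax : max 1 (lcost s p v / lcost s p u) = 1 :=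
        max_eq_left ((div_le_one (hcpos u)).2 hcost)
      rw [hmax] at hd
      exact ⟨hd.2, hd.1⟩
    intro x hx y hy
    rcases lt_trichotomy x y with h | rfl | h
    · exact (key x hx y hy h).1
    · exact lr_self s p x (hcpos x).ne'
    · exact (key y hy x hx h).2
  have hsameR : ∀ x ∈ R, ∀ y ∈ R, lr s p x y = 1 := by
    have key : ∀ u ∈ R, ∀ v ∈ R, u < v → lr s p u v = 1 ∧ lr s p v u = 1 := by
      intro u hu v hv huv
      have hum : m < u := ((hmemR u).1 hu).2
      have hpref : ∀ j ∈ s, j ≤ m → |u - j| < |v - j| := by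
        intro j _ hjm
        rw [abs_of_nonneg (by linarith : (0:ℝ) ≤ u - j),
          abs_of_nonneg (by linarith : (0:ℝ) ≤ v - j)]
        linarith
      have hd := lr_decided s p u v (fun j => j ≤ m) hnn hsum hMleA hpref (hcpos u) (hcpos v)
      have hcost : lcost s p u ≤ lcost s p v :=
        cost_mono s p m u v hnn hsum hMleA.le hum.le huv.le
      have hmax : max 1 (lcost s p u / lcost s p v) = 1 :=
        max_eq_left ((div_le_one (hcpos v)).2 hcost)
      rw [hmax] at hd
      exact hd
    intro x hx y hy
    rcases lt_trichotomy x y with h | rfl | h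
    · exact (key x hx y hy h).1
    · exact lr_self s p x (hcpos x).ne'
    · exact (key y hy x hx h).2
  have hsameA' : ∀ x ∈ A, ∀ y ∈ A, lr s' p' x y = 1 := by
    have key : ∀ u ∈ A, ∀ v ∈ A, u < v → lr s' p' u v = 1 ∧ lr s' p' v u = 1 := by
      intro u hu v hv huv
      have hum : u ≤ m := ((hmemA u).1 hu).2
      have hvm : v ≤ m := ((hmemA v).1 hv).2
      have hd := lr_decided s' p' v u (fun j => m ≤ j) hnn' htot' hMle'
        (fun j _ hmj => habs_le u v j hmj huv hvm) (hcpos' v) (hcpos' u)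
      have hcost : lcost s' p' v ≤ lcost s' p' u :=
        cost_anti s' p' m u v hnn' htot' hMle'.le huv.le hvm
      have hmax : max 1 (lcost s' p' v / lcost s' p' u) = 1 :=
        max_eq_left ((div_le_one (hcpos' u)).2 hcost)
      rw [hmax] at hd
      exact ⟨hd.2, hd.1⟩
    intro x hx y hy
    rcases lt_trichotomy x y with h | rfl | h
    · exact (key x hx y hy h).1
    · exact lr_self s' p' x (hcpos' x).ne'
    · exact (key y hy x hx h).2
  -- cross elections against ystar
  have habs_bound : ∀ x ∈ A, ∀ j : ℝ, j ∈ s → j ≤ m → |x - j| < |ystar - j| := by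
    have h4 : m - xstar < ystar - m := by
      have e1 : |m - xstar| = m - xstar := abs_of_nonneg (by linarith)
      have e2 : |m - ystar| = ystar - m := by
        rw [abs_sub_comm]; exact abs_of_nonneg (by linarith)
      rw [e1, e2] at hcloser
      exact hcloser
    intro x hx j hjs hjm
    obtain ⟨hxss, hxmm⟩ := (hmemA x).1 hx
    have h1 : xstar ≤ x := hxmin x hxss
    have h2 : xstar ≤ j := hxmin j hjs
    have h3 : |x - j| ≤ m - xstar := abs_le.2 ⟨by linarith, by linarith⟩
    have h5 : |ystar - j| = ystar - j := abs_of_nonneg (by linarith)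
    rw [h5]
    linarith
  have hcrossOld : ∀ x ∈ A,
      lr s p x ystar = max 1 (lcost s p x / lcost s p ystar) ∧
      lr s p ystar x = max 1 (lcost s p x / lcost s p ystar) := by
    intro x hx
    exact lr_decided s p x ystar (fun j => j ≤ m) hnn hsum hMleA
      (fun j hj hjm => habs_bound x hx j hj hjm) (hcpos x) (hcpos ystar)
  have hcrossNew : ∀ x ∈ A,
      lr s' p' x ystar = max 1 (lcost s' p' x / lcost s' p' ystar) ∧
      lr s' p' ystar x = max 1 (lcost s' p' x / lcost s' p' ystar) := by
    intro x hx
    exact lr_decided s' p' x ystar (fun j => j ≤ m) hnn' htot' hMleA'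
      (fun j hj hjm => habs_bound x hx j (hs'sub hj) hjm) (hcpos' x) (hcpos' ystar)
  have hmaxle : ∀ x ∈ A,
      max 1 (lcost s p x / lcost s p ystar) ≤ max 1 (lcost s' p' x / lcost s' p' ystar) := by
    intro x hx
    have hxm' : x ≤ m := ((hmemA x).1 hx).2
    rw [hshift x hxm', hcy']
    refine max_le_max le_rfl ?_
    have h1 : 0 < lcost s p ystar - C := by
      have h := hcpos' ystar
      rw [hcy'] at h
      exact h
    exact div_le_div₀ (by linarith [(hcpos x).le]) (by linarith) h1 (by linarith)
  -- symmetry across the median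
  have hsymmAR : ∀ x ∈ A, ∀ j ∈ R, lr s p x j = lr s p j x := by
    intro x hx j hj
    obtain ⟨hxss, hxmm⟩ := (hmemA x).1 hx
    obtain ⟨hjs, hjm⟩ := (hmemR j).1 hj
    have hne : x ≠ j := by rintro rfl; exact absurd hjm (not_lt.2 hxmm)
    exact lr_symm_s6 s p x j hsum (fun v hv => hties v hv x hxss j hjs hne) (hmaj x hxss j hjs hne)
  -- abbreviations
  set U := ∑ j ∈ A, p j * max 1 (lcost s p j / lcost s p ystar) with hUdef
  set U' := ∑ j ∈ A, p j * max 1 (lcost s' p' j / lcost s' p' ystar) with hU'def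
  have hUU' : U ≤ U' := by
    rw [hUdef, hU'def]
    exact Finset.sum_le_sum (fun x hx =>
      mul_le_mul_of_nonneg_left (hmaxle x hx) (hnn x (hAsub hx)))
  -- lrbar computations
  have hbarA : ∀ x ∈ A, lrbar s p x = (1 - b) + ∑ j ∈ R, p j * lr s p x j := by
    intro x hx
    rw [lrbar, hsplit (fun j => p j * lr s p x j)]
    congr 1
    rw [← hsumA]
    exact Finset.sum_congr rfl (fun j hj => by rw [hsameA x hx j hj, mul_one])
  have hbarY : lrbar s p ystar = U + b := by
    rw [lrbar, hsplit (fun j => p j * lr s p ystar j)]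
    congr 1
    · rw [hUdef]
      exact Finset.sum_congr rfl (fun j hj => by rw [(hcrossOld j hj).2])
    · rw [hbdef]
      exact Finset.sum_congr rfl (fun j hj => by rw [hsameR ystar hyR j hj, mul_one])
  have hbarR : ∀ x ∈ R, lrbar s p x = (∑ j ∈ A, p j * lr s p x j) + b := by
    intro x hx
    rw [lrbar, hsplit (fun j => p j * lr s p x j)]
    congr 1
    rw [hbdef]
    exact Finset.sum_congr rfl (fun j hj => by rw [hsameR x hx j hj, mul_one])
  -- old social bound
  have step1 : ∑ x ∈ R, p x * lrbar s p x ≤ b * U + b * b := by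
    calc ∑ x ∈ R, p x * lrbar s p x
        ≤ ∑ x ∈ R, p x * lrbar s p ystar :=
          Finset.sum_le_sum (fun x hx =>
            mul_le_mul_of_nonneg_left
              (hyworst x (hRsub hx) ((hmemR x).1 hx).2) (hnn x (hRsub hx)))
      _ = b * lrbar s p ystar := by rw [hbdef]; exact (Finset.sum_mul _ _ _).symm
      _ = b * U + b * b := by rw [hbarY]; ring
  have step2 : ∑ x ∈ A, p x * lrbar s p x
      = (1 - b) * (1 - b) + ∑ x ∈ A, p x * ∑ j ∈ R, p j * lr s p x j := by
    calc ∑ x ∈ A, p x * lrbar s p x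
        = ∑ x ∈ A, (p x * (1 - b) + p x * ∑ j ∈ R, p j * lr s p x j) :=
          Finset.sum_congr rfl (fun x hx => by rw [hbarA x hx]; ring)
      _ = (∑ x ∈ A, p x) * (1 - b) + ∑ x ∈ A, p x * ∑ j ∈ R, p j * lr s p x j := by
          rw [Finset.sum_add_distrib, Finset.sum_mul]
      _ = (1 - b) * (1 - b) + ∑ x ∈ A, p x * ∑ j ∈ R, p j * lr s p x j := by
          rw [hsumA]
  have step3 : ∑ x ∈ A, p x * ∑ j ∈ R, p j * lr s p x j
      = ∑ j ∈ R, p j * ∑ x ∈ A, p x * lr s p j x := by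
    calc ∑ x ∈ A, p x * ∑ j ∈ R, p j * lr s p x j
        = ∑ x ∈ A, ∑ j ∈ R, p j * (p x * lr s p j x) :=
          Finset.sum_congr rfl (fun x hx => by
            rw [Finset.mul_sum]
            exact Finset.sum_congr rfl (fun j hj => by rw [hsymmAR x hx j hj]; ring))
      _ = ∑ j ∈ R, ∑ x ∈ A, p j * (p x * lr s p j x) := Finset.sum_comm
      _ = ∑ j ∈ R, p j * ∑ x ∈ A, p x * lr s p j x :=
          Finset.sum_congr rfl (fun j _ => (Finset.mul_sum _ _ _).symm)
  have step4 : ∀ j ∈ R, ∑ x ∈ A, p x * lr s p j x ≤ U := by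
    intro j hj
    have h1 := hbarR j hj
    have h2 := hyworst j (hRsub hj) ((hmemR j).1 hj).2
    linarith [hbarY]
  have step5 : ∑ j ∈ R, p j * ∑ x ∈ A, p x * lr s p j x ≤ b * U := by
    calc ∑ j ∈ R, p j * ∑ x ∈ A, p x * lr s p j x
        ≤ ∑ j ∈ R, p j * U :=
          Finset.sum_le_sum (fun j hj =>
            mul_le_mul_of_nonneg_left (step4 j hj) (hnn j (hRsub hj)))
      _ = b * U := by rw [hbdef]; exact (Finset.sum_mul _ _ _).symm
  have hold : lsocial s p p ≤ (1 - b) * (1 - b) + 2 * (b * U) + b * b := by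
    calc lsocial s p p = ∑ x ∈ s, p x * lrbar s p x := social_rbar s p
      _ = (∑ x ∈ A, p x * lrbar s p x) + ∑ x ∈ R, p x * lrbar s p x :=
          hsplit (fun x => p x * lrbar s p x)
      _ ≤ (1 - b) * (1 - b) + 2 * (b * U) + b * b := by
          linarith [step1, step2, step3, step5]
  -- new social value
  have hbarA' : ∀ x ∈ A, lrbar s' p' x
      = (1 - b) + b * max 1 (lcost s' p' x / lcost s' p' ystar) := by
    intro x hx
    rw [lrbar, hsplit' (fun j => p' j * lr s' p' x j), hp'y, (hcrossNew x hx).1]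
    congr 1
    calc ∑ j ∈ A, p' j * lr s' p' x j = ∑ j ∈ A, p j :=
          Finset.sum_congr rfl (fun j hj => by
            rw [hp'A j hj, hsameA' x hx j hj, mul_one])
      _ = 1 - b := hsumA
  have hbarY' : lrbar s' p' ystar = U' + b := by
    rw [lrbar, hsplit' (fun j => p' j * lr s' p' ystar j), hp'y,
      lr_self s' p' ystar (hcpos' ystar).ne', mul_one]
    congr 1
    rw [hU'def]
    exact Finset.sum_congr rfl (fun j hj => by rw [hp'A j hj, (hcrossNew j hj).2])
  have hnew : lsocial s' p' p' = (1 - b) * (1 - b) + 2 * (b * U') + b * b := by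
    rw [social_rbar s' p', hsplit' (fun x => p' x * lrbar s' p' x), hp'y, hbarY']
    have h1 : ∑ x ∈ A, p' x * lrbar s' p' x = (1 - b) * (1 - b) + b * U' := by
      calc ∑ x ∈ A, p' x * lrbar s' p' x
          = ∑ x ∈ A, (p x * (1 - b)
              + b * (p x * max 1 (lcost s' p' x / lcost s' p' ystar))) :=
            Finset.sum_congr rfl (fun x hx => by
              rw [hp'A x hx, hbarA' x hx]; ring)
        _ = (∑ x ∈ A, p x) * (1 - b)
              + b * ∑ x ∈ A, p x * max 1 (lcost s' p' x / lcost s' p' ystar) := by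
            rw [Finset.sum_add_distrib, Finset.sum_mul, Finset.mul_sum]
        _ = (1 - b) * (1 - b) + b * U' := by rw [hsumA, ← hU'def]
    rw [h1]; ring
  -- conclude
  have hfin : b * U ≤ b * U' := mul_le_mul_of_nonneg_left hUU' hbpos.le
  calc lsocial s p p ≤ (1 - b) * (1 - b) + 2 * (b * U) + b * b := hold
    _ ≤ (1 - b) * (1 - b) + 2 * (b * U') + b * b := by linarith
    _ = lsocial s' p' p' := hnew.symm
end

section
/- Let p be a finitely supported probability distribution on ℝ in general position (unique median m) serving as both candidate and voter distribution, with L and R the support points strictly left and right of m. Suppose the leftmost point x* = min supp(p) and the rightmost point y* = max supp(p) are the worst candidates of L and R respectively (maximizing r(x) = ∑_j p(j)·r(x,j) over their side), |L| > 1, |R| = 1, and |m − y*| > |m − x*|. Then there exists a finitely supported distribution p' on ℝ whose support strictly left of its median has size |L| − 1 and with Social(p',p') ≥ Social(p,p); p' is obtained by moving the second-leftmost support point (together with its mass) to coincide either with the leftmost support point or with the next support point to its right. -/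
open Finset

lemma abs_lt_abs_left_iff {x y j : ℝ} (h : x < y) : |x - j| < |y - j| ↔ 2*j < x + y := by
  rcases abs_cases (x - j) with ⟨hx, hx'⟩ | ⟨hx, hx'⟩ <;>
    rcases abs_cases (y - j) with ⟨hy, hy'⟩ | ⟨hy, hy'⟩ <;>
      rw [hx, hy] <;> constructor <;> intro <;> linarith

lemma abs_lt_abs_right_iff {x y j : ℝ} (h : x < y) : |y - j| < |x - j| ↔ x + y < 2*j := by
  rcases abs_cases (x - j) with ⟨hx, hx'⟩ | ⟨hx, hx'⟩ <;>
    rcases abs_cases (y - j) with ⟨hy, hy'⟩ | ⟨hy, hy'⟩ <;>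
      rw [hx, hy] <;> constructor <;> intro <;> linarith

lemma lcost_pos_s7 {u : Finset ℝ} {q : ℝ → ℝ} (hq : ∀ j ∈ u, 0 < q j) {z j0 : ℝ}
    (hj0 : j0 ∈ u) (hne : j0 ≠ z) : 0 < lcost u q z := by
  have h1 : 0 < q j0 * |z - j0| :=
    mul_pos (hq _ hj0) (abs_pos.2 (sub_ne_zero.2 (Ne.symm hne)))
  have h2 : q j0 * |z - j0| ≤ ∑ j ∈ u, q j * |z - j| :=
    Finset.single_le_sum (f := fun j => q j * |z - j|)
      (fun j hj => mul_nonneg (hq j hj).le (abs_nonneg _)) hj0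
  exact lt_of_lt_of_le h1 h2

lemma lcost_lt_left {u : Finset ℝ} {q : ℝ → ℝ} (hq : ∀ j ∈ u, 0 < q j)
    (hsum : ∑ j ∈ u, q j = 1) {x y : ℝ} (hxy : x < y)
    (hmass : ∑ j ∈ u.filter (fun j => j < y), q j < 1/2) :
    lcost u q y < lcost u q x := by
  have hsplit := Finset.sum_filter_add_sum_filter_not u (fun j => j < y) q
  set S1 := ∑ j ∈ u.filter (fun j => j < y), q j with hS1
  set S2 := ∑ j ∈ u.filter (fun j => ¬ j < y), q j with hS2
  have hx_split : lcost u q x = (∑ j ∈ u.filter (fun j => j < y), q j * |x - j|)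
      + ∑ j ∈ u.filter (fun j => ¬ j < y), q j * |x - j| :=
    (Finset.sum_filter_add_sum_filter_not u _ _).symm
  have hy_split : lcost u q y = (∑ j ∈ u.filter (fun j => j < y), q j * |y - j|)
      + ∑ j ∈ u.filter (fun j => ¬ j < y), q j * |y - j| :=
    (Finset.sum_filter_add_sum_filter_not u _ _).symm
  have b1 : ∑ j ∈ u.filter (fun j => j < y), (q j * |y - j| - q j * (y - x)) ≤
      ∑ j ∈ u.filter (fun j => j < y), q j * |x - j| := by
    refine Finset.sum_le_sum (fun j hj => ?_)
    have hju : j ∈ u := (Finset.mem_filter.mp hj).1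
    have h2 := abs_sub_abs_le_abs_sub (y - j) (x - j)
    have h3 : |(y - j) - (x - j)| = y - x := by
      rw [show (y - j) - (x - j) = y - x by ring, abs_of_pos (by linarith)]
    nlinarith [(hq j hju).le, abs_nonneg (x - j)]
  have b2 : ∑ j ∈ u.filter (fun j => ¬ j < y), (q j * |y - j| + q j * (y - x)) =
      ∑ j ∈ u.filter (fun j => ¬ j < y), q j * |x - j| := by
    refine Finset.sum_congr rfl (fun j hj => ?_)
    have hjy : ¬ j < y := (Finset.mem_filter.mp hj).2
    push_neg at hjy
    rw [abs_of_nonpos (by linarith : y - j ≤ 0), abs_of_nonpos (by linarith : x - j ≤ 0)]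
    ring
  have key : lcost u q y + (y - x) * (S2 - S1) ≤ lcost u q x := by
    have e1 : lcost u q y + (y - x) * (S2 - S1) =
        (∑ j ∈ u.filter (fun j => j < y), (q j * |y - j| - q j * (y - x)))
        + ∑ j ∈ u.filter (fun j => ¬ j < y), (q j * |y - j| + q j * (y - x)) := by
      rw [hy_split, Finset.sum_sub_distrib, Finset.sum_add_distrib, hS1, hS2,
        ← Finset.sum_mul, ← Finset.sum_mul]
      ring
    rw [e1, hx_split]
    exact add_le_add b1 b2.le
  have hpos : 0 < (y - x) * (S2 - S1) := mul_pos (by linarith) (by linarith)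
  linarith

lemma social_formula (u : Finset ℝ) (q : ℝ → ℝ) (m ys : ℝ)
    (hq : ∀ j ∈ u, 0 < q j) (hsum : ∑ j ∈ u, q j = 1)
    (hmu : m ∈ u) (hyu : ys ∈ u) (hmy : m < ys)
    (hleft : ∑ j ∈ u.filter (fun j => j < m), q j < 1/2)
    (hright : ∑ j ∈ u.filter (fun j => m < j), q j < 1/2)
    (honly : ∀ z ∈ u, z ≠ ys → z ≤ m)
    (hmid : ∀ x ∈ u, x ≠ ys → 2*m < x + ys) :
    lsocial u q q = 1 + 2 * q ys *
      ((∑ x ∈ u, q x * max (lcost u q x - lcost u q ys) 0) / lcost u q ys) := by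
  have hmys : m ≠ ys := ne_of_lt hmy
  have hA : 0 < lcost u q ys := lcost_pos_s7 hq hmu hmys
  have hcpos : ∀ z ∈ u, 0 < lcost u q z := by
    intro z hz
    by_cases hzys : z = ys
    · subst hzys; exact hA
    · exact lcost_pos_s7 hq hyu (fun h => hzys h.symm)
  set A := lcost u q ys with hAdef
  set psi : ℝ → ℝ := fun z => max (lcost u q z - A) 0 / A with hpsidef
  have hrdiag : ∀ a ∈ u, lr u q a a = 1 := by
    intro a ha
    have h1 : lwin u q a a = a := ite_self a
    have h2 : lopt u q a a = a := ite_self a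
    rw [lr, h1, h2, div_self (hcpos a ha).ne']
  have votes_lt : ∀ a b : ℝ, a < b → b ≤ m → lvotes u q a b < 1/2 := by
    intro a b hab hbm
    have hsub : u.filter (fun j => |a - j| < |b - j|) ⊆ u.filter (fun j => j < m) := by
      intro j hj
      rw [Finset.mem_filter] at hj ⊢
      refine ⟨hj.1, ?_⟩
      have := (abs_lt_abs_left_iff hab).1 hj.2
      linarith
    have h5 : lvotes u q a b ≤ ∑ j ∈ u.filter (fun j => j < m), q j :=
      Finset.sum_le_sum_of_subset_of_nonneg hsub
        (fun j hj _ => (hq j (Finset.mem_filter.mp hj).1).le)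
    linarith
  have votes_gt : ∀ a b : ℝ, a < b → b ≤ m → 1/2 < lvotes u q b a := by
    intro a b hab hbm
    have hsplit := Finset.sum_filter_add_sum_filter_not u (fun j => j < m) q
    have hsub : u.filter (fun j => ¬ j < m) ⊆ u.filter (fun j => |b - j| < |a - j|) := by
      intro j hj
      rw [Finset.mem_filter] at hj ⊢
      refine ⟨hj.1, ?_⟩
      rw [abs_lt_abs_right_iff hab]
      have := hj.2
      push_neg at this
      linarith
    have h5 : ∑ j ∈ u.filter (fun j => ¬ j < m), q j ≤ lvotes u q b a :=
      Finset.sum_le_sum_of_subset_of_nonneg hsub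
        (fun j hj _ => (hq j (Finset.mem_filter.mp hj).1).le)
    linarith
  have votes_ys_lt : ∀ a ∈ u, a ≠ ys → lvotes u q ys a < 1/2 := by
    intro a ha hays
    have ham : a ≤ m := honly a ha hays
    have hays' : a < ys := lt_of_le_of_lt ham hmy
    have hsub : u.filter (fun j => |ys - j| < |a - j|) ⊆ u.filter (fun j => m < j) := by
      intro j hj
      rw [Finset.mem_filter] at hj ⊢
      refine ⟨hj.1, ?_⟩
      have h6 := (abs_lt_abs_right_iff hays').1 hj.2
      have h7 := hmid a ha hays
      linarith
    have h5 : lvotes u q ys a ≤ ∑ j ∈ u.filter (fun j => m < j), q j :=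
      Finset.sum_le_sum_of_subset_of_nonneg hsub
        (fun j hj _ => (hq j (Finset.mem_filter.mp hj).1).le)
    linarith
  have votes_ys_gt : ∀ a ∈ u, a ≠ ys → 1/2 < lvotes u q a ys := by
    intro a ha hays
    have ham : a ≤ m := honly a ha hays
    have hays' : a < ys := lt_of_le_of_lt ham hmy
    have hsplit := Finset.sum_filter_add_sum_filter_not u (fun j => m < j) q
    have hsub : u.filter (fun j => ¬ m < j) ⊆ u.filter (fun j => |a - j| < |ys - j|) := by
      intro j hj
      rw [Finset.mem_filter] at hj ⊢
      refine ⟨hj.1, ?_⟩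
      rw [abs_lt_abs_left_iff hays']
      have h6 := hj.2
      push_neg at h6
      have h7 := hmid a ha hays
      linarith
    have h5 : ∑ j ∈ u.filter (fun j => ¬ m < j), q j ≤ lvotes u q a ys :=
      Finset.sum_le_sum_of_subset_of_nonneg hsub
        (fun j hj _ => (hq j (Finset.mem_filter.mp hj).1).le)
    linarith
  have key2 : ∀ a ∈ u, ∀ b ∈ u, a < b → b ≠ ys → lr u q a b = 1 ∧ lr u q b a = 1 := by
    intro a ha b hb hab hbys
    have hbm : b ≤ m := honly b hb hbys
    have hblt : lcost u q b < lcost u q a := by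
      apply lcost_lt_left hq hsum hab
      have hsub : u.filter (fun j => j < b) ⊆ u.filter (fun j => j < m) := by
        intro j hj
        rw [Finset.mem_filter] at hj ⊢
        exact ⟨hj.1, lt_of_lt_of_le hj.2 hbm⟩
      have h5 : ∑ j ∈ u.filter (fun j => j < b), q j ≤ ∑ j ∈ u.filter (fun j => j < m), q j :=
        Finset.sum_le_sum_of_subset_of_nonneg hsub
          (fun j hj _ => (hq j (Finset.mem_filter.mp hj).1).le)
      linarith
    have hw1 : lwin u q a b = b := if_neg (not_lt.2 (votes_lt a b hab hbm).le)
    have hw2 : lwin u q b a = b := if_pos (votes_gt a b hab hbm)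
    have ho1 : lopt u q a b = b := if_neg (not_lt.2 hblt.le)
    have ho2 : lopt u q b a = b := if_pos hblt
    have hcb := (hcpos b hb).ne'
    exact ⟨by rw [lr, hw1, ho1, div_self hcb], by rw [lr, hw2, ho2, div_self hcb]⟩
  have key3 : ∀ a ∈ u, a ≠ ys → lr u q a ys = 1 + psi a ∧ lr u q ys a = 1 + psi a := by
    intro a ha hays
    have hw1 : lwin u q a ys = a := if_pos (votes_ys_gt a ha hays)
    have hw2 : lwin u q ys a = a := if_neg (not_lt.2 (votes_ys_lt a ha hays).le)
    have hca := (hcpos a ha).ne'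
    rcases lt_trichotomy (lcost u q a) A with hc | hc | hc
    · have ho1 : lopt u q a ys = a := if_pos hc
      have ho2 : lopt u q ys a = a := if_neg (not_lt.2 hc.le)
      have hpsi0 : psi a = 0 := by
        rw [hpsidef]
        simp only
        rw [max_eq_right (by linarith : lcost u q a - A ≤ 0), zero_div]
      rw [lr, lr, hw1, hw2, ho1, ho2, div_self hca, hpsi0]
      norm_num
    · have ho1 : lopt u q a ys = ys := if_neg (by rw [hc]; exact lt_irrefl A)
      have ho2 : lopt u q ys a = a := if_neg (by rw [hc]; exact lt_irrefl A)
      have hpsi0 : psi a = 0 := by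
        rw [hpsidef]; simp only
        rw [hc, sub_self, max_self, zero_div]
      rw [lr, lr, hw1, hw2, ho1, ho2, ← hAdef, hc, div_self hA.ne', hpsi0]
      norm_num
    · have ho1 : lopt u q a ys = ys := if_neg (not_lt.2 hc.le)
      have ho2 : lopt u q ys a = ys := if_pos hc
      have hpsi1 : psi a = (lcost u q a - A) / A := by
        rw [hpsidef]; simp only
        rw [max_eq_left (by linarith : (0:ℝ) ≤ lcost u q a - A)]
      rw [lr, lr, hw1, hw2, ho1, ho2, ← hAdef, hpsi1]
      constructor <;> field_simp <;> ring
  have hpsiys : psi ys = 0 := by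
    rw [hpsidef]; simp only
    rw [← hAdef, sub_self, max_self, zero_div]
  have hr : ∀ x ∈ u, ∀ y ∈ u,
      lr u q x y = 1 + (if x = ys then psi y else 0) + (if y = ys then psi x else 0) := by
    intro x hx y hy
    by_cases hxy : x = ys <;> by_cases hyy : y = ys
    · rw [hxy, hyy, hrdiag ys hyu]
      simp [hpsiys]
    · rw [hxy, (key3 y hy hyy).2]
      simp [hyy]
    · rw [hyy, (key3 x hx hxy).1]
      simp [hxy]
    · have h1 : lr u q x y = 1 := by
        rcases lt_trichotomy x y with h|h|h
        · exact (key2 x hx y hy h hyy).1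
        · subst h; exact hrdiag x hx
        · exact (key2 y hy x hx h hxy).2
      rw [h1]; simp [hxy, hyy]
  have hexp : lsocial u q q = ∑ x ∈ u, ∑ y ∈ u,
      (q x * q y + (if x = ys then q x * q y * psi y else 0)
        + (if y = ys then q x * q y * psi x else 0)) := by
    rw [lsocial]
    refine Finset.sum_congr rfl fun x hx => Finset.sum_congr rfl fun y hy => ?_
    rw [hr x hx y hy]
    by_cases hxy : x = ys <;> by_cases hyy : y = ys <;> simp [hxy, hyy] <;> ring
  rw [hexp]
  simp only [Finset.sum_add_distrib]
  have h0 : ∑ x ∈ u, ∑ y ∈ u, q x * q y = 1 := by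
    rw [← Finset.sum_mul_sum, hsum, one_mul]
  have h1 : ∑ x ∈ u, ∑ y ∈ u, (if x = ys then q x * q y * psi y else 0)
      = q ys * ∑ y ∈ u, q y * psi y := by
    have e : ∀ x ∈ u, (∑ y ∈ u, if x = ys then q x * q y * psi y else 0)
        = if x = ys then ∑ y ∈ u, q x * q y * psi y else 0 := by
      intro x _; split_ifs with h <;> simp
    rw [Finset.sum_congr rfl e,
      Finset.sum_ite_eq' u ys (fun x => ∑ y ∈ u, q x * q y * psi y), if_pos hyu,
      Finset.mul_sum]
    exact Finset.sum_congr rfl fun y _ => by ring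
  have h2 : ∑ x ∈ u, ∑ y ∈ u, (if y = ys then q x * q y * psi x else 0)
      = q ys * ∑ x ∈ u, q x * psi x := by
    have e : ∀ x ∈ u, (∑ y ∈ u, if y = ys then q x * q y * psi x else 0)
        = q x * q ys * psi x := by
      intro x _
      rw [Finset.sum_ite_eq' u ys (fun y => q x * q y * psi x), if_pos hyu]
    rw [Finset.sum_congr rfl e, Finset.mul_sum]
    exact Finset.sum_congr rfl fun x _ => by ring
  rw [h0, h1, h2]
  have hT : ∑ x ∈ u, q x * psi x = (∑ x ∈ u, q x * max (lcost u q x - A) 0) / A := by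
    simp only [hpsidef]
    rw [Finset.sum_div]
    exact Finset.sum_congr rfl fun x _ => by rw [mul_div_assoc]
  rw [hT]; ring

lemma sum_if_update (v : Finset ℝ) (q : ℝ → ℝ) (t c2 : ℝ) (g : ℝ → ℝ) :
    ∑ j ∈ v, (if j = t then q t + c2 else q j) * g j
      = (∑ j ∈ v, q j * g j) + (if t ∈ v then c2 * g t else 0) := by
  have e : ∀ j ∈ v, (if j = t then q t + c2 else q j) * g j
      = q j * g j + (if j = t then c2 * g j else 0) := by
    intro j _
    by_cases h : j = t
    · subst h; rw [if_pos rfl, if_pos rfl]; ring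
    · rw [if_neg h, if_neg h, add_zero]
  rw [Finset.sum_congr rfl e, Finset.sum_add_distrib,
    Finset.sum_ite_eq' v t (fun j => c2 * g j)]

lemma sum_if_update' (v : Finset ℝ) (q : ℝ → ℝ) (t c2 : ℝ) :
    ∑ j ∈ v, (if j = t then q t + c2 else q j)
      = (∑ j ∈ v, q j) + (if t ∈ v then c2 else 0) := by
  have e : ∀ j ∈ v, (if j = t then q t + c2 else q j)
      = q j + (if j = t then c2 else 0) := by
    intro j _
    by_cases h : j = t
    · subst h; rw [if_pos rfl, if_pos rfl]
    · rw [if_neg h, if_neg h, add_zero]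
  rw [Finset.sum_congr rfl e, Finset.sum_add_distrib,
    Finset.sum_ite_eq' v t (fun _ => c2)]

lemma lcost_erase {s : Finset ℝ} {p : ℝ → ℝ} {x2 : ℝ} (hx2 : x2 ∈ s) (z : ℝ) :
    lcost (s.erase x2) p z = lcost s p z - p x2 * |z - x2| := by
  rw [lcost, lcost, Finset.sum_erase_eq_sub hx2]

lemma lcost_merge {s : Finset ℝ} {p : ℝ → ℝ} {x2 t : ℝ} (hx2 : x2 ∈ s)
    (ht : t ∈ s.erase x2) (x : ℝ) :
    lcost (s.erase x2) (fun j => if j = t then p t + p x2 else p j) x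
      = lcost s p x + p x2 * (|x - t| - |x - x2|) := by
  simp only [lcost]
  rw [sum_if_update (s.erase x2) p t (p x2) (fun j => |x - j|),
    if_pos ht, Finset.sum_erase_eq_sub hx2]
  ring


/-- suppose the leftmost point `x₁` and the rightmost point `y*` are
the worst candidates of `L` and `R` respectively, `|L| > 1`, `|R| = 1`, and
`|m - y*| > |m - x₁|`.  Then moving the second-leftmost support point `x₂`
(together with its probability mass) either onto the leftmost point `x₁` or onto
the next support point `x₃` to its right yields an instance whose set of support
points strictly left of the median `m` has size `|L| - 1`, without decreasing
the expected distortion. -/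
theorem reduce_left_side (s : Finset ℝ) (p : ℝ → ℝ)
    (hpos : ∀ x ∈ s, 0 < p x) (hsum : ∑ x ∈ s, p x = 1)
    (m : ℝ) (hm : IsMedian s p m) (hmedian : ∃! m', IsMedian s p m')
    (hties : NoVoterTies s)
    (hmaj : StrictMajority s p)
    (x1 x2 x3 ystar : ℝ)
    (hx1 : x1 ∈ s) (hx2 : x2 ∈ s) (hx3 : x3 ∈ s) (hys : ystar ∈ s)
    (h12 : x1 < x2) (h23 : x2 < x3)
    (hx1min : ∀ z ∈ s, x1 ≤ z)
    (hx2min : ∀ z ∈ s, z ≠ x1 → x2 ≤ z)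
    (hx3min : ∀ z ∈ s, z ≠ x1 → z ≠ x2 → x3 ≤ z)
    (hymax : ∀ z ∈ s, z ≤ ystar)
    (hL : 1 < (s.filter (fun z => z < m)).card)
    (hR : (s.filter (fun z => m < z)).card = 1)
    (hx1worst : ∀ x ∈ s, x < m → lrbar s p x ≤ lrbar s p x1)
    (hyworst : ∀ y ∈ s, m < y → lrbar s p y ≤ lrbar s p ystar)
    (hfar : |m - x1| < |m - ystar|) :
    ∃ t, (t = x1 ∨ t = x3) ∧
      ((s.erase x2).filter (fun z => z < m)).card = (s.filter (fun z => z < m)).card - 1 ∧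
      lsocial s p p ≤
        lsocial (s.erase x2)
          (fun j => if j = t then p t + p x2 else p j)
          (fun j => if j = t then p t + p x2 else p j) := by
  classical
  obtain ⟨hms, hleft, hright⟩ := hm
  -- basic order facts
  have hx2m : x2 < m := by
    obtain ⟨a, ha, b, hb, hab⟩ := Finset.one_lt_card.mp hL
    rw [Finset.mem_filter] at ha hb
    rcases eq_or_ne a x1 with rfl | hax1
    · exact lt_of_le_of_lt (hx2min b hb.1 (fun h => hab h.symm)) hb.2
    · exact lt_of_le_of_lt (hx2min a ha.1 hax1) ha.2
  have hx1m : x1 < m := lt_trans h12 hx2m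
  have hRmem : ystar ∈ s.filter (fun z => m < z) := by
    obtain ⟨w, hw⟩ := Finset.card_eq_one.mp hR
    have hwmem : w ∈ s.filter (fun z => m < z) := by rw [hw]; exact Finset.mem_singleton_self w
    rw [Finset.mem_filter] at hwmem
    exact Finset.mem_filter.mpr ⟨hys, lt_of_lt_of_le hwmem.2 (hymax w hwmem.1)⟩
  have hmy : m < ystar := (Finset.mem_filter.mp hRmem).2
  have honly : ∀ z ∈ s, z ≠ ystar → z ≤ m := by
    intro z hz hzy
    by_contra h
    push_neg at h
    obtain ⟨w, hw⟩ := Finset.card_eq_one.mp hR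
    have h1 : z ∈ s.filter (fun z => m < z) := Finset.mem_filter.mpr ⟨hz, h⟩
    have h2 := hRmem
    rw [hw, Finset.mem_singleton] at h1 h2
    exact hzy (h1.trans h2.symm)
  have hfar' : 2*m < x1 + ystar := by
    rw [abs_of_pos (by linarith : (0:ℝ) < m - x1),
      abs_of_neg (by linarith : m - ystar < 0)] at hfar
    linarith
  have hmid : ∀ x ∈ s, x ≠ ystar → 2*m < x + ystar := by
    intro x hx _
    have := hx1min x hx
    linarith
  have hx2ys : x2 ≠ ystar := ne_of_lt (lt_trans hx2m hmy)
  have hx3m : x3 ≤ m := hx3min m hms (ne_of_gt hx1m) (ne_of_gt hx2m)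
  have h13 : x1 < x3 := lt_trans h12 h23
  -- card condition
  have hcard : ((s.erase x2).filter (fun z => z < m)).card
      = (s.filter (fun z => z < m)).card - 1 := by
    have hmem : x2 ∈ s.filter (fun z => z < m) := Finset.mem_filter.mpr ⟨hx2, hx2m⟩
    rw [Finset.filter_erase, Finset.card_erase_of_mem hmem]
  -- merged support
  have hp2pos : 0 < p x2 := hpos x2 hx2
  have hx1u : x1 ∈ s.erase x2 := Finset.mem_erase.mpr ⟨ne_of_lt h12, hx1⟩
  have hx3u : x3 ∈ s.erase x2 := Finset.mem_erase.mpr ⟨ne_of_gt h23, hx3⟩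
  have hmu : m ∈ s.erase x2 := Finset.mem_erase.mpr ⟨ne_of_gt hx2m, hms⟩
  have hyu : ystar ∈ s.erase x2 := Finset.mem_erase.mpr ⟨fun h => hx2ys h.symm, hys⟩
  -- merged instance hypotheses, parametric in t
  have hq_t : ∀ t ∈ s.erase x2, ∀ j ∈ s.erase x2,
      0 < (if j = t then p t + p x2 else p j) := by
    intro t ht j hj
    by_cases h : j = t
    · rw [if_pos h]; exact add_pos (hpos t (Finset.mem_of_mem_erase ht)) hp2pos
    · rw [if_neg h]; exact hpos j (Finset.mem_of_mem_erase hj)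
  have hsum_t : ∀ t ∈ s.erase x2,
      ∑ j ∈ s.erase x2, (if j = t then p t + p x2 else p j) = 1 := by
    intro t ht
    rw [sum_if_update', if_pos ht, Finset.sum_erase_eq_sub hx2, hsum]
    ring
  have hleft_t : ∀ t ∈ s.erase x2,
      ∑ j ∈ (s.erase x2).filter (fun j => j < m), (if j = t then p t + p x2 else p j)
        < 1/2 := by
    intro t ht
    rw [sum_if_update']
    have e1 : ∑ j ∈ (s.erase x2).filter (fun j => j < m), p j
        = (∑ j ∈ s.filter (fun j => j < m), p j) - p x2 := by
      have hmem : x2 ∈ s.filter (fun z => z < m) := Finset.mem_filter.mpr ⟨hx2, hx2m⟩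
      rw [Finset.filter_erase, Finset.sum_erase_eq_sub hmem]
    have e2 : (if t ∈ (s.erase x2).filter (fun j => j < m) then p x2 else 0) ≤ p x2 := by
      split_ifs
      · exact le_refl _
      · exact hp2pos.le
    rw [e1]
    linarith
  have hright_t : ∀ t ∈ s.erase x2, t ≤ m →
      ∑ j ∈ (s.erase x2).filter (fun j => m < j), (if j = t then p t + p x2 else p j)
        < 1/2 := by
    intro t ht htm
    rw [sum_if_update']
    have e2 : (if t ∈ (s.erase x2).filter (fun j => m < j) then p x2 else 0) = 0 := by
      apply if_neg
      intro h
      have := (Finset.mem_filter.mp h).2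
      linarith
    have e1 : (s.erase x2).filter (fun j => m < j) = s.filter (fun j => m < j) := by
      rw [Finset.filter_erase, Finset.erase_eq_of_notMem]
      intro h
      have := (Finset.mem_filter.mp h).2
      linarith
    rw [e2, e1]
    linarith
  have honly' : ∀ z ∈ s.erase x2, z ≠ ystar → z ≤ m :=
    fun z hz => honly z (Finset.mem_of_mem_erase hz)
  have hmid' : ∀ x ∈ s.erase x2, x ≠ ystar → 2*m < x + ystar :=
    fun x hx => hmid x (Finset.mem_of_mem_erase hx)
  -- abbreviations
  set A := lcost s p ystar with hAdef
  have hApos : 0 < A := lcost_pos_s7 hpos hms (ne_of_lt hmy)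
  set N := ∑ x ∈ s, p x * max (lcost s p x - A) 0 with hNdef
  have hsoc : lsocial s p p = 1 + 2 * p ystar * (N / A) :=
    social_formula s p m ystar hpos hsum hms hys hmy hleft hright honly hmid
  -- convexity coefficients
  set la := (x3 - x2)/(x3 - x1) with hladef
  set mu := (x2 - x1)/(x3 - x1) with hmudef
  have hden : (0:ℝ) < x3 - x1 := by linarith
  have hla : 0 ≤ la := by
    rw [hladef]; apply div_nonneg <;> linarith
  have hmu0 : 0 ≤ mu := by
    rw [hmudef]; apply div_nonneg <;> linarith
  have hlamu : la + mu = 1 := by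
    rw [hladef, hmudef]; field_simp; ring
  have h9 : la * (x2 - x1) + mu * (x2 - x3) = 0 := by
    rw [hladef, hmudef]; field_simp; ring
  have habs : ∀ w : ℝ, |w - x2| ≤ la * |w - x1| + mu * |w - x3| := by
    intro w
    have h1 : w - x2 = la * (w - x1) + mu * (w - x3) := by
      rw [hladef, hmudef]; field_simp; ring
    calc |w - x2| = |la*(w - x1) + mu*(w - x3)| := by rw [h1]
      _ ≤ |la*(w - x1)| + |mu*(w - x3)| := abs_add_le _ _
      _ = la*|w - x1| + mu*|w - x3| := by
          rw [abs_mul, abs_mul, abs_of_nonneg hla, abs_of_nonneg hmu0]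
  -- merged costs of ystar
  set A1 := A + p x2 * (x2 - x1) with hA1def
  set A3 := A + p x2 * (x2 - x3) with hA3def
  have hAt : ∀ t ∈ s.erase x2, t ≤ m →
      lcost (s.erase x2) (fun j => if j = t then p t + p x2 else p j) ystar
        = A + p x2 * (x2 - t) := by
    intro t ht htm
    rw [lcost_merge hx2 ht, abs_of_pos (by linarith : (0:ℝ) < ystar - t),
      abs_of_pos (by linarith : (0:ℝ) < ystar - x2)]
    ring
  have hA1 : lcost (s.erase x2) (fun j => if j = x1 then p x1 + p x2 else p j) ystar = A1 :=
    hAt x1 hx1u hx1m.le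
  have hA3 : lcost (s.erase x2) (fun j => if j = x3 then p x3 + p x2 else p j) ystar = A3 :=
    hAt x3 hx3u hx3m
  have hA1pos : 0 < A1 := by
    rw [← hA1]
    exact lcost_pos_s7 (hq_t x1 hx1u) hmu (ne_of_lt hmy)
  have hA3pos : 0 < A3 := by
    rw [← hA3]
    exact lcost_pos_s7 (hq_t x3 hx3u) hmu (ne_of_lt hmy)
  -- the reduced numerators
  set N1 := (∑ x ∈ s.erase x2, p x * max (lcost s p x + p x2 * (|x - x1| - |x - x2|) - A1) 0)
      + p x2 * max (lcost (s.erase x2) p x1 - A1) 0 with hN1def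
  set N3 := (∑ x ∈ s.erase x2, p x * max (lcost s p x + p x2 * (|x - x3| - |x - x2|) - A3) 0)
      + p x2 * max (lcost (s.erase x2) p x3 - A3) 0 with hN3def
  -- Step A : the social-formula numerator for merged instance equals N_t
  have hNt_eq : ∀ t ∈ s.erase x2, ∀ At : ℝ,
      lcost (s.erase x2) (fun j => if j = t then p t + p x2 else p j) ystar = At →
      (∑ x ∈ s.erase x2, (if x = t then p t + p x2 else p x) *
        max (lcost (s.erase x2) (fun j => if j = t then p t + p x2 else p j) x - At) 0)
      = (∑ x ∈ s.erase x2, p x * max (lcost s p x + p x2 * (|x - t| - |x - x2|) - At) 0)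
        + p x2 * max (lcost (s.erase x2) p t - At) 0 := by
    intro t ht At _
    have e : ∀ x ∈ s.erase x2, (if x = t then p t + p x2 else p x) *
        max (lcost (s.erase x2) (fun j => if j = t then p t + p x2 else p j) x - At) 0
        = p x * max (lcost s p x + p x2 * (|x - t| - |x - x2|) - At) 0
          + (if x = t then p x2 * max (lcost (s.erase x2) p t - At) 0 else 0) := by
      intro x hx
      rw [lcost_merge hx2 ht x]
      by_cases h : x = t
      · subst h
        rw [if_pos rfl, if_pos rfl]
        have e2 : lcost s p x + p x2 * (|x - x| - |x - x2|) - At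
            = lcost (s.erase x2) p x - At := by
          rw [lcost_erase hx2 x, sub_self, abs_zero]
          ring
        rw [e2]
        ring
      · rw [if_neg h, if_neg h, add_zero]
    rw [Finset.sum_congr rfl e, Finset.sum_add_distrib,
      Finset.sum_ite_eq' (s.erase x2) t (fun _ => p x2 * max (lcost (s.erase x2) p t - At) 0),
      if_pos ht]
  -- Step C : per-term convexity
  have stepC : ∀ x : ℝ, max (lcost s p x - A) 0 ≤
      la * max (lcost s p x + p x2 * (|x - x1| - |x - x2|) - A1) 0
      + mu * max (lcost s p x + p x2 * (|x - x3| - |x - x2|) - A3) 0 := by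
    intro x
    have hv : lcost s p x - A ≤
        la * (lcost s p x + p x2 * (|x - x1| - |x - x2|) - A1)
        + mu * (lcost s p x + p x2 * (|x - x3| - |x - x2|) - A3) := by
      have key : la * (lcost s p x + p x2 * (|x - x1| - |x - x2|) - A1)
          + mu * (lcost s p x + p x2 * (|x - x3| - |x - x2|) - A3)
          = (lcost s p x - A) + p x2 * ((la * |x - x1| + mu * |x - x3|) - |x - x2|) := by
        rw [hA1def, hA3def]
        linear_combination (lcost s p x - A - p x2 * |x - x2|) * hlamu - p x2 * h9
      rw [key]
      have h8' : 0 ≤ p x2 * ((la * |x - x1| + mu * |x - x3|) - |x - x2|) :=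
        mul_nonneg hp2pos.le (by linarith [habs x])
      linarith
    calc max (lcost s p x - A) 0
        ≤ max (la * (lcost s p x + p x2 * (|x - x1| - |x - x2|) - A1)
          + mu * (lcost s p x + p x2 * (|x - x3| - |x - x2|) - A3)) 0 :=
          max_le_max hv le_rfl
      _ ≤ la * max (lcost s p x + p x2 * (|x - x1| - |x - x2|) - A1) 0
          + mu * max (lcost s p x + p x2 * (|x - x3| - |x - x2|) - A3) 0 := by
          apply max_le
          · exact add_le_add (mul_le_mul_of_nonneg_left (le_max_left _ _) hla)
              (mul_le_mul_of_nonneg_left (le_max_left _ _) hmu0)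
          · positivity
  -- Step D : special-term convexity
  have stepD : max (lcost s p x2 - A) 0 ≤
      la * max (lcost (s.erase x2) p x1 - A1) 0
      + mu * max (lcost (s.erase x2) p x3 - A3) 0 := by
    have habs' : ∀ j : ℝ, |x2 - j| ≤ la * |x1 - j| + mu * |x3 - j| := by
      intro j
      rw [abs_sub_comm x2 j, abs_sub_comm x1 j, abs_sub_comm x3 j]
      exact habs j
    have hsum_le : lcost (s.erase x2) p x2 ≤
        la * lcost (s.erase x2) p x1 + mu * lcost (s.erase x2) p x3 := by
      simp only [lcost]
      rw [Finset.mul_sum, Finset.mul_sum, ← Finset.sum_add_distrib]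
      refine Finset.sum_le_sum fun j hj => ?_
      have hpj : 0 ≤ p j := (hpos j (Finset.mem_of_mem_erase hj)).le
      have h7 := mul_le_mul_of_nonneg_left (habs' j) hpj
      exact h7.trans (le_of_eq (by ring))
    have he2 : lcost (s.erase x2) p x2 = lcost s p x2 := by
      rw [lcost_erase hx2 x2, sub_self, abs_zero]
      ring
    have hv : lcost s p x2 - A ≤
        la * (lcost (s.erase x2) p x1 - A1) + mu * (lcost (s.erase x2) p x3 - A3) := by
      have key : la * (lcost (s.erase x2) p x1 - A1) + mu * (lcost (s.erase x2) p x3 - A3)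
          = la * lcost (s.erase x2) p x1 + mu * lcost (s.erase x2) p x3 - A := by
        rw [hA1def, hA3def]
        linear_combination (-A) * hlamu - p x2 * h9
      rw [key, ← he2]
      linarith [hsum_le]
    calc max (lcost s p x2 - A) 0
        ≤ max (la * (lcost (s.erase x2) p x1 - A1)
            + mu * (lcost (s.erase x2) p x3 - A3)) 0 := max_le_max hv le_rfl
      _ ≤ la * max (lcost (s.erase x2) p x1 - A1) 0
            + mu * max (lcost (s.erase x2) p x3 - A3) 0 := by
          apply max_le
          · exact add_le_add (mul_le_mul_of_nonneg_left (le_max_left _ _) hla)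
              (mul_le_mul_of_nonneg_left (le_max_left _ _) hmu0)
          · positivity
  -- combine: N ≤ la * N1 + mu * N3
  have hNsplit : N = (∑ x ∈ s.erase x2, p x * max (lcost s p x - A) 0)
      + p x2 * max (lcost s p x2 - A) 0 := by
    rw [hNdef, ← Finset.sum_erase_add s _ hx2]
  have hN_le : N ≤ la * N1 + mu * N3 := by
    rw [hNsplit, hN1def, hN3def]
    have hsum_le2 : ∑ x ∈ s.erase x2, p x * max (lcost s p x - A) 0 ≤
        ∑ x ∈ s.erase x2, p x *
          (la * max (lcost s p x + p x2 * (|x - x1| - |x - x2|) - A1) 0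
           + mu * max (lcost s p x + p x2 * (|x - x3| - |x - x2|) - A3) 0) :=
      Finset.sum_le_sum fun x hx =>
        mul_le_mul_of_nonneg_left (stepC x) (hpos x (Finset.mem_of_mem_erase hx)).le
    have hsum_le3 : p x2 * max (lcost s p x2 - A) 0 ≤
        p x2 * (la * max (lcost (s.erase x2) p x1 - A1) 0
          + mu * max (lcost (s.erase x2) p x3 - A3) 0) :=
      mul_le_mul_of_nonneg_left stepD hp2pos.le
    have e3 : ∑ x ∈ s.erase x2, p x *
          (la * max (lcost s p x + p x2 * (|x - x1| - |x - x2|) - A1) 0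
           + mu * max (lcost s p x + p x2 * (|x - x3| - |x - x2|) - A3) 0)
        = la * ∑ x ∈ s.erase x2, p x * max (lcost s p x + p x2 * (|x - x1| - |x - x2|) - A1) 0
          + mu * ∑ x ∈ s.erase x2, p x * max (lcost s p x + p x2 * (|x - x3| - |x - x2|) - A3) 0 := by
      rw [Finset.mul_sum, Finset.mul_sum, ← Finset.sum_add_distrib]
      exact Finset.sum_congr rfl fun x _ => by ring
    calc (∑ x ∈ s.erase x2, p x * max (lcost s p x - A) 0)
          + p x2 * max (lcost s p x2 - A) 0
        ≤ (∑ x ∈ s.erase x2, p x *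
            (la * max (lcost s p x + p x2 * (|x - x1| - |x - x2|) - A1) 0
             + mu * max (lcost s p x + p x2 * (|x - x3| - |x - x2|) - A3) 0))
          + p x2 * (la * max (lcost (s.erase x2) p x1 - A1) 0
            + mu * max (lcost (s.erase x2) p x3 - A3) 0) := add_le_add hsum_le2 hsum_le3
      _ = _ := by rw [e3]; ring
  -- final: N / A ≤ max (N1/A1) (N3/A3)
  have hfinal : N / A ≤ max (N1/A1) (N3/A3) := by
    have hM1 : N1 ≤ max (N1/A1) (N3/A3) * A1 :=
      (div_le_iff₀ hA1pos).mp (le_max_left _ _)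
    have hM3 : N3 ≤ max (N1/A1) (N3/A3) * A3 :=
      (div_le_iff₀ hA3pos).mp (le_max_right _ _)
    have hMA : la * (max (N1/A1) (N3/A3) * A1) + mu * (max (N1/A1) (N3/A3) * A3)
        = max (N1/A1) (N3/A3) * A := by
      rw [hA1def, hA3def]
      linear_combination (max (N1/A1) (N3/A3) * A) * hlamu
        - (max (N1/A1) (N3/A3) * p x2) * h9
    have hNM : N ≤ max (N1/A1) (N3/A3) * A := by
      calc N ≤ la * N1 + mu * N3 := hN_le
        _ ≤ la * (max (N1/A1) (N3/A3) * A1) + mu * (max (N1/A1) (N3/A3) * A3) :=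
            add_le_add (mul_le_mul_of_nonneg_left hM1 hla)
              (mul_le_mul_of_nonneg_left hM3 hmu0)
        _ = max (N1/A1) (N3/A3) * A := hMA
    exact (div_le_iff₀ hApos).mpr hNM
  -- social value of merged instance
  have hsoct : ∀ t ∈ s.erase x2, t ≤ m → ∀ At Nt : ℝ,
      lcost (s.erase x2) (fun j => if j = t then p t + p x2 else p j) ystar = At →
      ((∑ x ∈ s.erase x2, p x * max (lcost s p x + p x2 * (|x - t| - |x - x2|) - At) 0)
        + p x2 * max (lcost (s.erase x2) p t - At) 0) = Nt →
      lsocial (s.erase x2) (fun j => if j = t then p t + p x2 else p j)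
        (fun j => if j = t then p t + p x2 else p j)
        = 1 + 2 * p ystar * (Nt / At) := by
    intro t ht htm At Nt hAt' hNt'
    have hys_ne : ystar ≠ t := by
      intro h
      rw [h] at hmy
      linarith
    have h0 := social_formula (s.erase x2) (fun j => if j = t then p t + p x2 else p j)
      m ystar (hq_t t ht) (hsum_t t ht) hmu hyu hmy (hleft_t t ht) (hright_t t ht htm)
      honly' hmid'
    rw [h0, if_neg hys_ne, hAt',
      hNt_eq t ht At hAt', hNt']
  rcases le_total (N3/A3) (N1/A1) with hc | hc
  · refine ⟨x1, Or.inl rfl, hcard, ?_⟩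
    rw [hsoc, hsoct x1 hx1u hx1m.le A1 N1 hA1 rfl]
    have h10 : N / A ≤ N1 / A1 := by
      rw [max_eq_left hc] at hfinal
      exact hfinal
    have h11 : 0 ≤ 2 * p ystar := by
      have := hpos ystar hys
      linarith
    linarith [mul_le_mul_of_nonneg_left h10 h11]
  · refine ⟨x3, Or.inr rfl, hcard, ?_⟩
    rw [hsoc, hsoct x3 hx3u hx3m A3 N3 hA3 rfl]
    have h10 : N / A ≤ N3 / A3 := by
      rw [max_eq_right hc] at hfinal
      exact hfinal
    have h11 : 0 ≤ 2 * p ystar := by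
      have := hpos ystar hys
      linarith
    linarith [mul_le_mul_of_nonneg_left h10 h11]
end
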